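/- arXiv:2504.01927 — 7 statements merged into one kernel-verified Lean document; each statement's English description precedes it below -/
import Mathlib

section
/- Fix c > 0 and δ > 0. A continuous cdf F with supp(F) = [0,∞) solves problem P_{c,δ} if and only if y = 1 − F is a positive solution of the delay initial value problem y'(t) + c·y(t−δ) = 0 for t ≥ δ, y(t) = φ(t) on [0,δ], whose initial function φ = (1−F)|_{[0,δ]} belongs to Φ. In particular, there exists a continuous F ∈ P_{c,δ} with supp(F) = [0,∞) if and only if cδ ≤ 1/e. -/
open MeasureTheory Set Filter Topology
open scoped ENNReal

/-- The class `Φ` of initial functions: continuous, strictly decreasing on `[0, δ]`,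
with `φ(0) = 1` and `φ(δ) > 0`. -/
def MemPhi (δ : ℝ) (φ : ℝ → ℝ) : Prop :=
  ContinuousOn φ (Set.Icc 0 δ) ∧ StrictAntiOn φ (Set.Icc 0 δ) ∧ φ 0 = 1 ∧ 0 < φ δ

/-- `y` is a solution on `[0, ∞)` of the delay initial value problem
`y'(t) + c y(t - δ) = 0` for `t ≥ δ`, with `y = φ` on `[0, δ]`. -/
def IsSolDDE (c δ : ℝ) (φ y : ℝ → ℝ) : Prop :=
  ContinuousOn y (Set.Ici 0) ∧ (∀ t ∈ Set.Icc 0 δ, y t = φ t) ∧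
  ∀ t ∈ Set.Ici δ, HasDerivWithinAt y (-(c * y (t - δ))) (Set.Ici δ) t

/-- Survival function `G(x) = 1 - F(x) = μ(x, ∞)` of the distribution `μ`. -/
noncomputable def survG (μ : Measure ℝ) (x : ℝ) : ℝ := (μ (Set.Ioi x)).toReal

/-- The support of the distribution: points every neighbourhood of which has positive mass. -/
def suppF (μ : Measure ℝ) : Set ℝ :=
  {x | ∀ ε > 0, 0 < μ (Set.Ioo (x - ε) (x + ε))}

variable {μ : Measure ℝ}

lemma survG_nonneg (x : ℝ) : 0 ≤ survG μ x := ENNReal.toReal_nonneg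

lemma meas_ne_top [IsProbabilityMeasure μ] (s : Set ℝ) : μ s ≠ ⊤ :=
  (measure_lt_top μ s).ne

lemma survG_anti [IsProbabilityMeasure μ] : Antitone (survG μ) := fun a b hab => by
  apply ENNReal.toReal_mono (meas_ne_top _)
  exact measure_mono (Ioi_subset_Ioi hab)

lemma survG_measurable [IsProbabilityMeasure μ] : Measurable (survG μ) :=
  (survG_anti (μ := μ)).measurable

lemma survG_sub [IsProbabilityMeasure μ] {a b : ℝ} (hab : a ≤ b) :
    survG μ a = (μ (Ioc a b)).toReal + survG μ b := by
  have h : Ioc a b ∪ Ioi b = Ioi a := Ioc_union_Ioi_eq_Ioi hab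
  have hd : Disjoint (Ioc a b) (Ioi b) := by
    simp only [Set.disjoint_left, mem_Ioc, mem_Ioi]
    rintro x ⟨_, h2⟩ h3
    linarith
  rw [survG, ← h, measure_union hd measurableSet_Ioi,
    ENNReal.toReal_add (meas_ne_top _) (meas_ne_top _)]
  rfl

lemma survG_continuous [IsProbabilityMeasure μ] (h0 : ∀ x : ℝ, μ {x} = 0) :
    Continuous (survG μ) := by
  rw [continuous_iff_continuousAt]
  intro x
  rw [Metric.continuousAt_iff]
  intro ε hε
  set s : ℕ → Set ℝ := fun n => Ioc (x - 1/(n+1)) (x + 1/(n+1)) with hs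
  have hmono : Antitone s := by
    intro m n hmn
    have h1 : (1:ℝ)/(n+1) ≤ 1/(m+1) := by
      apply one_div_le_one_div_of_le (by positivity)
      exact_mod_cast by omega
    exact Ioc_subset_Ioc (by linarith) (by linarith)
  have hInter : ⋂ n, s n = {x} := by
    ext t
    simp only [hs, mem_iInter, mem_Ioc, mem_singleton_iff]
    constructor
    · intro h
      have h1 : x ≤ t := by
        by_contra hlt
        push_neg at hlt
        obtain ⟨n, hn⟩ := exists_nat_one_div_lt (show (0:ℝ) < x - t by linarith)
        have := (h n).1
        linarith
      have h2 : t ≤ x := by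
        by_contra hlt
        push_neg at hlt
        obtain ⟨n, hn⟩ := exists_nat_one_div_lt (show (0:ℝ) < t - x by linarith)
        have := (h n).2
        linarith
      linarith
    · rintro rfl n
      have : (0:ℝ) < 1/(n+1) := by positivity
      exact ⟨by linarith, by linarith⟩
  have htend : Tendsto (μ ∘ s) atTop (𝓝 0) := by
    have := tendsto_measure_iInter_atTop (μ := μ) (s := s)
      (fun n => measurableSet_Ioc.nullMeasurableSet) hmono ⟨0, meas_ne_top _⟩
    rwa [hInter, h0 x] at this
  have hev : ∀ᶠ n in atTop, μ (s n) < ENNReal.ofReal ε :=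
    htend.eventually_lt_const (show (0:ℝ≥0∞) < ENNReal.ofReal ε by simpa using hε)
  obtain ⟨n, hn⟩ := hev.exists
  have hpos : (0:ℝ) < 1/(n+1) := by positivity
  refine ⟨1/(n+1), by positivity, fun {y} hy => ?_⟩
  have key : ∀ a b : ℝ, a ≤ b → x - 1/(n+1) ≤ a → b ≤ x + 1/(n+1) →
      |survG μ b - survG μ a| < ε := by
    intro a b hab ha hb
    have h1 : survG μ a = (μ (Ioc a b)).toReal + survG μ b := survG_sub hab
    have h2 : μ (Ioc a b) ≤ μ (s n) := measure_mono (Ioc_subset_Ioc ha hb)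
    have h3 : (μ (Ioc a b)).toReal < ε :=
      ENNReal.toReal_lt_of_lt_ofReal (lt_of_le_of_lt h2 hn)
    rw [abs_sub_comm, abs_of_nonneg (by linarith [ENNReal.toReal_nonneg (a := μ (Ioc a b))])]
    linarith
  rw [Real.dist_eq] at hy ⊢
  rcases le_total y x with h | h
  · have := key y x h (by cases abs_lt.1 hy; linarith) (by linarith)
    rwa [abs_sub_comm]
  · exact key x y h (by linarith) (by cases abs_lt.1 hy; linarith)

lemma survG_tendsto [IsProbabilityMeasure μ] :
    Tendsto (survG μ) atTop (𝓝 0) := by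
  have h : Tendsto (fun x : ℝ => μ (Ioi x)) atTop (𝓝 (μ (⋂ x : ℝ, Ioi x))) :=
    tendsto_measure_iInter_atTop (fun x => measurableSet_Ioi.nullMeasurableSet)
      (fun a b hab => Ioi_subset_Ioi hab) ⟨0, meas_ne_top _⟩
  have hI : ⋂ x : ℝ, Ioi x = (∅ : Set ℝ) := by
    ext t
    simp only [mem_iInter, mem_Ioi, mem_empty_iff_false, iff_false, not_forall, not_lt]
    exact ⟨t, le_refl t⟩
  rw [hI, measure_empty] at h
  have := (ENNReal.tendsto_toReal (by simp : (0:ℝ≥0∞) ≠ ⊤)).comp h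
  exact (by simpa using this : Tendsto (ENNReal.toReal ∘ fun x => μ (Ioi x)) atTop (𝓝 0))

lemma survG_pos [IsProbabilityMeasure μ] (hsupp : suppF μ = Ici 0) (x : ℝ) :
    0 < survG μ x := by
  have hp : (max x 0 + 1) ∈ suppF μ := by
    rw [hsupp]
    simp only [mem_Ici]
    positivity
  have h1 := hp 1 one_pos
  have hsub : Ioo (max x 0 + 1 - 1) (max x 0 + 1 + 1) ⊆ Ioi x := by
    intro t ht
    have := ht.1
    have hx : x ≤ max x 0 := le_max_left _ _
    simp only [mem_Ioi]
    linarith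
  have h2 : 0 < μ (Ioi x) := lt_of_lt_of_le h1 (measure_mono hsub)
  exact ENNReal.toReal_pos h2.ne' (meas_ne_top _)

lemma survG_strictAntiOn [IsProbabilityMeasure μ] (hsupp : suppF μ = Ici 0) :
    StrictAntiOn (survG μ) (Ici 0) := by
  intro a ha b hb hab
  have hm : (a + b)/2 ∈ suppF μ := by
    rw [hsupp]; simp only [mem_Ici] at ha ⊢; linarith
  have hε : (0:ℝ) < (b - a)/2 := by linarith
  have h1 := hm _ hε
  have heq : Ioo ((a+b)/2 - (b-a)/2) ((a+b)/2 + (b-a)/2) = Ioo a b := by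
    congr 1 <;> ring
  rw [heq] at h1
  have h2 : 0 < μ (Ioc a b) := lt_of_lt_of_le h1 (measure_mono Ioo_subset_Ioc_self)
  have h3 := survG_sub (μ := μ) hab.le
  have h4 : 0 < (μ (Ioc a b)).toReal := ENNReal.toReal_pos h2.ne' (meas_ne_top _)
  linarith

lemma survG_zero [IsProbabilityMeasure μ] (h0 : ∀ x : ℝ, μ {x} = 0)
    (hsupp : suppF μ = Ici 0) : survG μ 0 = 1 := by
  have hIio : μ (Iio 0) = 0 := by
    apply measure_null_of_locally_null
    intro x hx
    have hxs : x ∉ suppF μ := by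
      rw [hsupp]
      simp only [mem_Ici, not_le]
      exact hx
    simp only [suppF, mem_setOf_eq, not_forall, not_lt] at hxs
    obtain ⟨ε, hε, hμ⟩ := hxs
    refine ⟨Ioo (x - ε) (x + ε), ?_, le_antisymm hμ zero_le⟩
    exact mem_nhdsWithin_of_mem_nhds (Ioo_mem_nhds (by linarith) (by linarith))
  have hIic : μ (Iic 0) = 0 := by
    have : Iic (0:ℝ) = Iio 0 ∪ {0} := by
      ext t; simp only [mem_Iic, mem_union, mem_Iio, mem_singleton_iff]
      constructor
      · intro h; rcases lt_or_eq_of_le h with h | h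
        · exact Or.inl h
        · exact Or.inr h
      · rintro (h | rfl); exact h.le; rfl
    rw [this]
    exact le_antisymm (le_trans (measure_union_le _ _) (by rw [hIio, h0 0]; simp)) zero_le
  have : μ (Ioi (0:ℝ)) = 1 := by
    have hu : Iic (0:ℝ) ∪ Ioi 0 = univ := Iic_union_Ioi
    have := measure_union (μ := μ) (Iic_disjoint_Ioi (le_refl (0:ℝ))) measurableSet_Ioi
    rw [hu, hIic, measure_univ, zero_add] at this
    exact this.symm
  rw [survG, this, ENNReal.toReal_one]

lemma survG_integrableOn [IsProbabilityMeasure μ]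
    (hint : Integrable (fun x : ℝ => x) μ) (a : ℝ) :
    IntegrableOn (survG μ) (Ioi a) := by
  constructor
  · exact (survG_measurable (μ := μ)).aestronglyMeasurable.restrict
  · rw [hasFiniteIntegral_iff_norm]
    have heq : ∀ t : ℝ, ENNReal.ofReal ‖survG μ t‖ = μ (Ioi t) := by
      intro t
      rw [Real.norm_of_nonneg (survG_nonneg t), survG, ENNReal.ofReal_toReal (meas_ne_top _)]
    calc ∫⁻ t in Ioi a, ENNReal.ofReal ‖survG μ t‖ ∂volume
        = ∫⁻ t in Ioi a, μ (Ioi t) ∂volume := by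
          apply lintegral_congr
          intro t; rw [heq]
      _ = ∫⁻ t in Ioi a, ∫⁻ s, (Ioi t).indicator (1 : ℝ → ℝ≥0∞) s ∂μ ∂volume := by
          apply lintegral_congr
          intro t
          rw [lintegral_indicator_one measurableSet_Ioi]
      _ = ∫⁻ s, ∫⁻ t in Ioi a, (Ioi t).indicator (1 : ℝ → ℝ≥0∞) s ∂volume ∂μ := by
          apply lintegral_lintegral_swap
          have : (Function.uncurry fun t s => (Ioi t).indicator (1 : ℝ → ℝ≥0∞) s)
              = {q : ℝ × ℝ | q.1 < q.2}.indicator (1 : ℝ × ℝ → ℝ≥0∞) := by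
            funext p
            simp only [Function.uncurry, Set.indicator_apply, mem_Ioi, mem_setOf_eq, Pi.one_apply]
          rw [this]
          exact ((measurable_const.indicator
            (measurableSet_lt measurable_fst measurable_snd))).aemeasurable
      _ = ∫⁻ s, volume (Ioi a ∩ Iio s) ∂μ := by
          apply lintegral_congr
          intro s
          have : ∀ t : ℝ, (Ioi t).indicator (1 : ℝ → ℝ≥0∞) s
              = (Iio s).indicator (1 : ℝ → ℝ≥0∞) t := by
            intro t
            simp only [Set.indicator_apply, mem_Ioi, mem_Iio, Pi.one_apply]
          rw [lintegral_congr this, lintegral_indicator_one measurableSet_Iio,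
            Measure.restrict_apply measurableSet_Iio, inter_comm]
      _ ≤ ∫⁻ s, ENNReal.ofReal ‖s‖ + ENNReal.ofReal ‖a‖ ∂μ := by
          apply lintegral_mono
          intro s
          have : Ioi a ∩ Iio s ⊆ Ioo a s := fun t ht => ⟨ht.1, ht.2⟩
          calc volume (Ioi a ∩ Iio s) ≤ volume (Ioo a s) := measure_mono this
            _ = ENNReal.ofReal (s - a) := by rw [Real.volume_Ioo]
            _ ≤ ENNReal.ofReal (‖s‖ + ‖a‖) := by
                apply ENNReal.ofReal_le_ofReal
                have h1 := le_abs_self s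
                have h2 := neg_abs_le a
                rw [Real.norm_eq_abs, Real.norm_eq_abs]
                linarith
            _ = ENNReal.ofReal ‖s‖ + ENNReal.ofReal ‖a‖ :=
                ENNReal.ofReal_add (norm_nonneg _) (norm_nonneg _)
      _ < ⊤ := by
          rw [lintegral_add_right _ measurable_const, lintegral_const, measure_univ, mul_one]
          have h1 := hint.hasFiniteIntegral
          rw [hasFiniteIntegral_iff_norm] at h1
          exact ENNReal.add_lt_top.2 ⟨h1, ENNReal.ofReal_lt_top⟩

lemma intI [IsProbabilityMeasure μ] (hint : Integrable (fun x : ℝ => x) μ) (x : ℝ) :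
    ∫ t in Ioi x, survG μ t
      = (∫ t in Ioi 0, survG μ t) - ∫ t in (0:ℝ)..x, survG μ t := by
  rcases le_total 0 x with h | h
  · rw [intervalIntegral.integral_of_le h]
    have hu : Ioc 0 x ∪ Ioi x = Ioi 0 := Ioc_union_Ioi_eq_Ioi h
    have hd : Disjoint (Ioc 0 x) (Ioi x) := by
      simp only [Set.disjoint_left, mem_Ioc, mem_Ioi]
      rintro t ⟨_, h2⟩ h3
      linarith
    have := setIntegral_union (f := survG μ) (μ := volume) hd measurableSet_Ioi
      ((survG_integrableOn hint 0).mono_set (fun t ht => ht.1))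
      (survG_integrableOn hint x)
    rw [hu] at this
    rw [this]
    ring
  · rw [intervalIntegral.integral_symm, intervalIntegral.integral_of_le h]
    have hu : Ioc x 0 ∪ Ioi 0 = Ioi x := Ioc_union_Ioi_eq_Ioi h
    have hd : Disjoint (Ioc x 0) (Ioi (0:ℝ)) := by
      simp only [Set.disjoint_left, mem_Ioc, mem_Ioi]
      rintro t ⟨_, h2⟩ h3
      linarith
    have := setIntegral_union (f := survG μ) (μ := volume) hd measurableSet_Ioi
      ((survG_integrableOn hint (x-1)).mono_set
        (fun t ht => by simp only [mem_Ioi] at *; linarith [ht.1]))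
      (survG_integrableOn hint 0)
    rw [hu] at this
    rw [this]
    ring

lemma hasDerivI [IsProbabilityMeasure μ] (hint : Integrable (fun x : ℝ => x) μ)
    (h0 : ∀ x : ℝ, μ {x} = 0) (x : ℝ) :
    HasDerivAt (fun y => ∫ t in Ioi y, survG μ t) (-(survG μ x)) x := by
  have hfun : (fun y => ∫ t in Ioi y, survG μ t)
      = fun y => (∫ t in Ioi 0, survG μ t) - ∫ t in (0:ℝ)..y, survG μ t := by
    funext y; exact intI hint y
  rw [hfun]
  have h1 : HasDerivAt (fun y => ∫ t in (0:ℝ)..y, survG μ t) (survG μ x) x :=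
    ((survG_continuous h0).integral_hasStrictDerivAt 0 x).hasDerivAt
  simpa using (h1.const_sub (∫ t in Ioi 0, survG μ t))

section eqn
variable {c δ : ℝ}

lemma survG_eq_on [IsProbabilityMeasure μ]
    (heq : ∀ x : ℝ, 0 ≤ x → survG μ (x + δ) = c * ∫ t in Ioi x, survG μ t) :
    ∀ y : ℝ, δ ≤ y → survG μ y = c * ∫ t in Ioi (y - δ), survG μ t := by
  intro y hy
  have := heq (y - δ) (by linarith)
  rwa [sub_add_cancel] at this

lemma survG_hasDerivWithinAt [IsProbabilityMeasure μ]
    (hint : Integrable (fun x : ℝ => x) μ) (h0 : ∀ x : ℝ, μ {x} = 0)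
    (heq : ∀ x : ℝ, 0 ≤ x → survG μ (x + δ) = c * ∫ t in Ioi x, survG μ t) :
    ∀ t ∈ Ici δ, HasDerivWithinAt (survG μ) (-(c * survG μ (t - δ))) (Ici δ) t := by
  intro t ht
  have hg : HasDerivAt (fun y => c * ∫ s in Ioi (y - δ), survG μ s)
      (-(c * survG μ (t - δ))) t := by
    have h1 : HasDerivAt (fun y : ℝ => y - δ) 1 t := (hasDerivAt_id t).sub_const δ
    have h2 := (hasDerivI hint h0 (t - δ)).comp t h1
    have h3 := h2.const_mul c
    simpa [mul_comm] using h3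
  exact (hg.hasDerivWithinAt).congr (fun y hy => survG_eq_on heq y hy)
    (survG_eq_on heq t ht)

lemma survG_hasDerivAt [IsProbabilityMeasure μ]
    (hint : Integrable (fun x : ℝ => x) μ) (h0 : ∀ x : ℝ, μ {x} = 0)
    (heq : ∀ x : ℝ, 0 ≤ x → survG μ (x + δ) = c * ∫ t in Ioi x, survG μ t) :
    ∀ t : ℝ, δ < t → HasDerivAt (survG μ) (-(c * survG μ (t - δ))) t :=
  fun t ht => (survG_hasDerivWithinAt hint h0 heq t (le_of_lt ht)).hasDerivAt
    (Ici_mem_nhds ht)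

lemma dde_to_eqn [IsProbabilityMeasure μ] (hδ : 0 < δ)
    (hint : Integrable (fun x : ℝ => x) μ)
    (hcont : Continuous (survG μ))
    (hsol : ∀ t ∈ Ici δ, HasDerivWithinAt (survG μ) (-(c * survG μ (t - δ))) (Ici δ) t) :
    ∀ x : ℝ, 0 ≤ x → survG μ (x + δ) = c * ∫ t in Ioi x, survG μ t := by
  intro x hx
  -- FTC on [x+δ, T]
  have key : ∀ T : ℝ, x + δ ≤ T →
      survG μ T = survG μ (x + δ) - c * ∫ t in x..(T - δ), survG μ t := by
    intro T hT
    have hftc : ∫ s in (x+δ)..T, -(c * survG μ (s - δ))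
        = survG μ T - survG μ (x + δ) := by
      apply intervalIntegral.integral_eq_sub_of_hasDeriv_right_of_le hT
      · exact hcont.continuousOn
      · intro s hs
        have hs1 : δ < s := by
          have := hs.1
          linarith
        exact ((hsol s hs1.le).hasDerivAt (Ici_mem_nhds hs1)).hasDerivWithinAt
      · exact (Continuous.intervalIntegrable (by continuity) _ _)
    have hcs : ∫ s in (x+δ)..T, survG μ (s - δ) = ∫ t in x..(T-δ), survG μ t := by
      have := intervalIntegral.integral_comp_sub_right (a := x + δ) (b := T)
        (fun t => survG μ t) δ
      rw [this, add_sub_cancel_right]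
    have : ∫ s in (x+δ)..T, -(c * survG μ (s - δ))
        = -(c * ∫ t in x..(T-δ), survG μ t) := by
      rw [intervalIntegral.integral_neg, intervalIntegral.integral_const_mul, hcs]
    rw [this] at hftc
    linarith
  have h1 : Tendsto (fun T => survG μ (x + δ) - c * ∫ t in x..(T - δ), survG μ t)
      atTop (𝓝 (survG μ (x + δ) - c * ∫ t in Ioi x, survG μ t)) := by
    apply Tendsto.const_sub
    apply Tendsto.const_mul
    have h2 := intervalIntegral_tendsto_integral_Ioi x (survG_integrableOn hint x)
      (tendsto_id (α := ℝ))
    exact h2.comp (tendsto_atTop_add_const_right atTop (-δ) tendsto_id)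
  have h3 : Tendsto (survG μ) atTop (𝓝 0) := survG_tendsto
  have h4 : (fun T => survG μ (x + δ) - c * ∫ t in x..(T - δ), survG μ t)
      =ᶠ[atTop] (survG μ) := by
    filter_upwards [eventually_ge_atTop (x + δ)] with T hT
    exact (key T hT).symm
  have h5 := (Tendsto.congr' h4 h1)
  have := tendsto_nhds_unique h5 h3
  linarith
end eqn

section hard
variable {c δ : ℝ}

lemma halfstep [IsProbabilityMeasure μ] (hc : 0 < c) (hδ : 0 < δ)
    (hint : Integrable (fun x : ℝ => x) μ)
    (heq : ∀ x : ℝ, 0 ≤ x → survG μ (x + δ) = c * ∫ t in Ioi x, survG μ t) :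
    ∀ s : ℝ, 0 ≤ s → c * (δ/2) * survG μ (s + δ/2) ≤ survG μ (s + δ) := by
  intro s hs
  rw [heq s hs]
  have h1 : ∫ t in Ioc s (s + δ/2), survG μ t ≤ ∫ t in Ioi s, survG μ t := by
    apply setIntegral_mono_set (survG_integrableOn hint s)
    · exact Filter.Eventually.of_forall (fun t => survG_nonneg t)
    · exact HasSubset.Subset.eventuallyLE (fun t ht => ht.1)
  have h2 : (δ/2) * survG μ (s + δ/2) ≤ ∫ t in Ioc s (s + δ/2), survG μ t := by
    have hconst : ∫ _ in Ioc s (s + δ/2), survG μ (s + δ/2) ∂volume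
        = (δ/2) * survG μ (s + δ/2) := by
      rw [setIntegral_const, Real.volume_real_Ioc, smul_eq_mul]
      congr 1
      rw [max_eq_left (by linarith)]
      ring
    rw [← hconst]
    apply setIntegral_mono_on
    · exact integrableOn_const (by rw [Real.volume_Ioc]; exact ENNReal.ofReal_ne_top)
    · exact (survG_integrableOn hint s).mono_set (fun t ht => ht.1)
    · exact measurableSet_Ioc
    · intro t ht
      exact survG_anti ht.2
  have := le_trans h2 h1
  nlinarith [this]

lemma ratio_bound [IsProbabilityMeasure μ] (hc : 0 < c) (hδ : 0 < δ)
    (hint : Integrable (fun x : ℝ => x) μ)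
    (heq : ∀ x : ℝ, 0 ≤ x → survG μ (x + δ) = c * ∫ t in Ioi x, survG μ t) :
    ∀ t : ℝ, 2*δ ≤ t → c * survG μ (t - δ) ≤ (4/(c*δ^2)) * survG μ t := by
  intro t ht
  have h1 := halfstep hc hδ hint heq (t - δ) (by linarith)
  have e1 : t - δ + δ/2 = t - δ/2 := by ring
  have e2 : t - δ + δ = t := by ring
  rw [e1, e2] at h1
  have h2 := halfstep hc hδ hint heq (t - 3*δ/2) (by linarith)
  have e3 : t - 3*δ/2 + δ/2 = t - δ := by ring
  have e4 : t - 3*δ/2 + δ = t - δ/2 := by ring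
  rw [e3, e4] at h2
  have hZ : 0 < c * δ^2 := by positivity
  rw [div_mul_eq_mul_div, le_div_iff₀ hZ]
  nlinarith [survG_nonneg (μ := μ) (t - δ), survG_nonneg (μ := μ) (t - δ/2)]

lemma decay_step [IsProbabilityMeasure μ] (hc : 0 < c) (hδ : 0 < δ)
    (hint : Integrable (fun x : ℝ => x) μ) (h0 : ∀ x : ℝ, μ {x} = 0)
    (heq : ∀ x : ℝ, 0 ≤ x → survG μ (x + δ) = c * ∫ t in Ioi x, survG μ t)
    {m t : ℝ} (hm : 0 ≤ m) (ht : 2*δ ≤ t)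
    (hpt : ∀ s ∈ Icc (t-δ) t, m * survG μ s ≤ c * survG μ (s - δ)) :
    Real.exp (m*δ) * survG μ t ≤ survG μ (t - δ) := by
  set h : ℝ → ℝ := fun s => survG μ s * Real.exp (m * s) with hh
  have hder : ∀ s ∈ Ioo (t - δ) t, HasDerivAt h
      (-(c * survG μ (s - δ)) * Real.exp (m*s) + survG μ s * (m * Real.exp (m*s))) s := by
    intro s hs
    have hs1 : δ < s := by linarith [hs.1]
    have hG := survG_hasDerivAt hint h0 heq s hs1
    have hE : HasDerivAt (fun s => Real.exp (m * s)) (m * Real.exp (m * s)) s := by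
      have := (Real.hasDerivAt_exp (m * s)).comp s ((hasDerivAt_id s).const_mul m)
      simpa [mul_comm, Function.comp_def] using this
    exact hG.mul hE
  have hanti : AntitoneOn h (Icc (t - δ) t) := by
    apply antitoneOn_of_deriv_nonpos (convex_Icc _ _)
    · exact ((survG_continuous h0).mul (by continuity)).continuousOn
    · rw [interior_Icc]
      intro s hs
      exact ((hder s hs).differentiableAt).differentiableWithinAt
    · rw [interior_Icc]
      intro s hs
      rw [(hder s hs).deriv]
      have hps := hpt s ⟨hs.1.le, hs.2.le⟩
      have hE : 0 < Real.exp (m * s) := Real.exp_pos _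
      nlinarith
  have hle : h t ≤ h (t - δ) := hanti ⟨le_refl _, by linarith⟩ ⟨by linarith, le_refl t⟩ (by linarith)
  have hE1 : Real.exp (m * t) = Real.exp (m * (t - δ)) * Real.exp (m * δ) := by
    rw [← Real.exp_add]
    ring_nf
  simp only [hh] at hle
  rw [hE1] at hle
  have hEpos : 0 < Real.exp (m * (t - δ)) := Real.exp_pos _
  calc Real.exp (m*δ) * survG μ t
      = (survG μ t * (Real.exp (m * (t - δ)) * Real.exp (m * δ))) / Real.exp (m * (t - δ)) := by
        field_simp
    _ ≤ (survG μ (t - δ) * Real.exp (m * (t - δ))) / Real.exp (m * (t - δ)) := by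
        gcongr
    _ = survG μ (t - δ) := by field_simp
end hard

lemma exp_ge_e_mul (x : ℝ) : Real.exp 1 * x ≤ Real.exp x := by
  have h := Real.add_one_le_exp (x - 1)
  have h2 : Real.exp (x - 1) = Real.exp x / Real.exp 1 := by
    rw [Real.exp_sub]
  rw [h2] at h
  have hE : (0:ℝ) < Real.exp 1 := Real.exp_pos 1
  have : (x - 1 + 1) * Real.exp 1 ≤ Real.exp x := by
    rw [← le_div_iff₀ hE]
    linarith
  nlinarith

section nosol
variable {c δ : ℝ}

lemma no_sol [IsProbabilityMeasure μ] (hc : 0 < c) (hδ : 0 < δ)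
    (hint : Integrable (fun x : ℝ => x) μ) (h0 : ∀ x : ℝ, μ {x} = 0)
    (hsupp : suppF μ = Ici 0)
    (heq : ∀ x : ℝ, 0 ≤ x → survG μ (x + δ) = c * ∫ t in Ioi x, survG μ t) :
    c * δ ≤ 1 / Real.exp 1 := by
  by_contra hgt
  push_neg at hgt
  have hE : (0:ℝ) < Real.exp 1 := Real.exp_pos 1
  have hq : 1 < c * δ * Real.exp 1 := by
    rw [div_lt_iff₀ hE] at hgt
    linarith [mul_comm (c*δ) (Real.exp 1)]
  -- iteration
  set m : ℕ → ℝ := fun n => Nat.rec 0 (fun _ mn => c * Real.exp (mn * δ)) n with hm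
  have hm0 : m 0 = 0 := rfl
  have hmS : ∀ n, m (n + 1) = c * Real.exp (m n * δ) := fun n => rfl
  have hmnn : ∀ n, 0 ≤ m n := by
    intro n
    cases n with
    | zero => exact le_refl 0
    | succ k => rw [hmS]; positivity
  have claim2 : ∀ n : ℕ, ∀ t : ℝ, (n + 2) * δ ≤ t →
      m n * survG μ t ≤ c * survG μ (t - δ) := by
    intro n
    induction n with
    | zero =>
      intro t _
      rw [hm0, zero_mul]
      exact mul_nonneg hc.le (survG_nonneg _)
    | succ k ih =>
      intro t ht
      have hk2 : ((k:ℝ) + 2) * δ ≤ t - δ := by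
        push_cast at ht ⊢
        nlinarith
      have hdecay := decay_step hc hδ hint h0 heq (hmnn k)
        (show 2*δ ≤ t by push_cast at ht; nlinarith) ?_
      · rw [hmS]
        calc c * Real.exp (m k * δ) * survG μ t
            = c * (Real.exp (m k * δ) * survG μ t) := by ring
          _ ≤ c * survG μ (t - δ) := by
              apply mul_le_mul_of_nonneg_left hdecay hc.le
      · intro s hs
        apply ih
        push_cast
        have := hs.1
        push_cast at ht
        nlinarith
  have claim3 : ∀ n : ℕ, c * (c * δ * Real.exp 1)^n ≤ m (n+1) := by
    intro n
    induction n with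
    | zero =>
      rw [pow_zero, mul_one, hmS 0, hm0, zero_mul, Real.exp_zero, mul_one]
    | succ k ih =>
      rw [hmS (k+1)]
      have h1 : Real.exp 1 * (m (k+1) * δ) ≤ Real.exp (m (k+1) * δ) := exp_ge_e_mul _
      have h2 : 0 ≤ m (k+1) := hmnn (k+1)
      calc c * (c * δ * Real.exp 1)^(k+1)
          = (c * δ * Real.exp 1) * (c * (c * δ * Real.exp 1)^k) := by ring
        _ ≤ (c * δ * Real.exp 1) * m (k+1) := by
            apply mul_le_mul_of_nonneg_left ih (by positivity)
        _ = c * (Real.exp 1 * (m (k+1) * δ)) := by ring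
        _ ≤ c * Real.exp (m (k+1) * δ) := by
            apply mul_le_mul_of_nonneg_left h1 hc.le
  have claim4 : ∀ n : ℕ, m n ≤ 4/(c*δ^2) := by
    intro n
    set t : ℝ := (n + 2) * δ with htdef
    have ht2 : 2*δ ≤ t := by
      rw [htdef]
      nlinarith [Nat.cast_nonneg (α := ℝ) n]
    have h1 := claim2 n t (le_refl _)
    have h2 := ratio_bound hc hδ hint heq t ht2
    have h3 : 0 < survG μ t := survG_pos hsupp t
    have := le_trans h1 h2
    exact le_of_mul_le_mul_right (by linarith) h3
  obtain ⟨n, hn⟩ := pow_unbounded_of_one_lt (4/(c*δ^2) / c) hq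
  have h5 := claim3 n
  have h6 := claim4 (n+1)
  have : 4/(c*δ^2) / c < (c * δ * Real.exp 1)^n := hn
  rw [div_lt_iff₀ hc] at this
  nlinarith
end nosol

section construction
variable {l : ℝ}

noncomputable def expDens (l : ℝ) : ℝ → ℝ≥0∞ :=
  (Ici 0).indicator (fun t => ENNReal.ofReal (l * Real.exp (-(l * t))))

noncomputable def expM (l : ℝ) : Measure ℝ := volume.withDensity (expDens l)

lemma expDens_meas : Measurable (expDens l) := by
  apply Measurable.indicator ?_ measurableSet_Ici
  exact (by continuity : Continuous fun t : ℝ => l * Real.exp (-(l * t))).measurable.ennreal_ofReal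

lemma expM_apply {s : Set ℝ} (hs : MeasurableSet s) :
    expM l s = ∫⁻ t in s, expDens l t := withDensity_apply _ hs

lemma exp_integral_Ioi (hl : 0 < l) (x : ℝ) :
    ∫ t in Ioi x, l * Real.exp (-(l * t)) = Real.exp (-(l * x)) := by
  have hderiv : ∀ t ∈ Ici x, HasDerivAt (fun t => -Real.exp (-(l * t)))
      (l * Real.exp (-(l * t))) t := by
    intro t _
    have h1 : HasDerivAt (fun t : ℝ => -(l * t)) (-l) t := by
      simpa [Pi.neg_def] using ((hasDerivAt_id t).const_mul l).neg
    have h2 := (Real.hasDerivAt_exp (-(l * t))).comp t h1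
    have h3 := h2.neg
    convert h3 using 1
    · rfl
    · rfl
    · funext y; simp [Function.comp_def]
    · ring
  have hint : IntegrableOn (fun t => l * Real.exp (-(l * t))) (Ici x) := by
    have h := (exp_neg_integrableOn_Ioi x hl).const_mul l
    rw [integrableOn_Ici_iff_integrableOn_Ioi]
    have he : (fun t : ℝ => l * Real.exp (-(l * t))) = fun t : ℝ => l * Real.exp (-l * t) := by
      funext t; ring_nf
    rw [he]
    exact h
  have htend : Tendsto (fun t => -Real.exp (-(l * t))) atTop (𝓝 0) := by
    rw [show (0:ℝ) = -0 by ring]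
    apply Tendsto.neg
    apply Real.tendsto_exp_atBot.comp
    have : Tendsto (fun t : ℝ => -(l * t)) atTop atBot := by
      apply tendsto_neg_atBot_iff.2
      exact (tendsto_id.const_mul_atTop hl)
    exact this
  have := integral_Ioi_of_hasDerivAt_of_tendsto' hderiv (hint.mono_set Ioi_subset_Ici_self) htend
  rw [this]
  simp

end construction

section construction2
variable {l : ℝ}

lemma expM_Ioi (hl : 0 < l) {x : ℝ} (hx : 0 ≤ x) :
    expM l (Ioi x) = ENNReal.ofReal (Real.exp (-(l * x))) := by
  rw [expM_apply measurableSet_Ioi]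
  have h1 : ∫⁻ t in Ioi x, expDens l t
      = ∫⁻ t in Ioi x, ENNReal.ofReal (l * Real.exp (-(l * t))) := by
    apply setLIntegral_congr_fun measurableSet_Ioi
    intro t ht
    simp only [expDens, Set.indicator_apply, mem_Ici]
    rw [if_pos (by linarith [mem_Ioi.1 ht])]
  rw [h1]
  have hint : IntegrableOn (fun t => l * Real.exp (-(l * t))) (Ioi x) := by
    have h := (exp_neg_integrableOn_Ioi x hl).const_mul l
    have he : (fun t : ℝ => l * Real.exp (-(l * t))) = fun t : ℝ => l * Real.exp (-l * t) := by
      funext t; ring_nf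
    rw [he]; exact h
  rw [← ofReal_integral_eq_lintegral_ofReal hint
    (Filter.Eventually.of_forall (fun t => by positivity))]
  rw [exp_integral_Ioi hl x]

lemma expM_null_Iio (hl : 0 < l) : expM l (Iio 0) = 0 := by
  rw [expM_apply measurableSet_Iio]
  have : ∫⁻ t in Iio (0:ℝ), expDens l t = ∫⁻ _ in Iio (0:ℝ), (0:ℝ≥0∞) := by
    apply setLIntegral_congr_fun measurableSet_Iio
    intro t ht
    simp only [expDens, Set.indicator_apply, mem_Ici]
    rw [if_neg (by simp only [mem_Iio] at ht; linarith)]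
  rw [this]
  simp

lemma expM_singleton (x : ℝ) : expM l {x} = 0 := by
  rw [expM_apply (measurableSet_singleton x)]
  exact setLIntegral_measure_zero _ _ Real.volume_singleton

theorem expM_prob (hl : 0 < l) : IsProbabilityMeasure (expM l) := by
  constructor
  have hu : (univ : Set ℝ) = Iio 0 ∪ Ici 0 := (Iio_union_Ici).symm
  have h1 : expM l (Ici 0) = expM l (Ioi 0) := by
    have : (Ici (0:ℝ)) = Ioi 0 ∪ {0} := by
      ext t; simp only [mem_Ici, mem_union, mem_Ioi, mem_singleton_iff]
      constructor
      · intro h; rcases eq_or_lt_of_le h with h | h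
        · exact Or.inr h.symm
        · exact Or.inl h
      · rintro (h | rfl); exact h.le; rfl
    rw [this]
    refine le_antisymm (le_trans (measure_union_le _ _) ?_) (measure_mono subset_union_left)
    rw [expM_singleton]
    simp
  rw [hu]
  have h2 := measure_union (μ := expM l) (Iio_disjoint_Ici (le_refl (0:ℝ))) measurableSet_Ici
  rw [h2, expM_null_Iio hl, zero_add, h1, expM_Ioi hl (le_refl 0)]
  simp

lemma expM_survG (hl : 0 < l) {x : ℝ} (hx : 0 ≤ x) :
    survG (expM l) x = Real.exp (-(l * x)) := by
  rw [survG, expM_Ioi hl hx, ENNReal.toReal_ofReal (Real.exp_pos _).le]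

lemma expM_suppF (hl : 0 < l) : suppF (expM l) = Ici 0 := by
  ext x
  simp only [suppF, mem_setOf_eq, mem_Ici]
  constructor
  · intro h
    by_contra hx
    push_neg at hx
    have h1 := h (-x) (by linarith)
    have h2 : Ioo (x - -x) (x + -x) ⊆ Iio 0 := by
      intro t ht
      simp only [mem_Ioo] at ht
      simp only [mem_Iio]
      linarith [ht.2]
    have := lt_of_lt_of_le h1 (measure_mono h2)
    rw [expM_null_Iio hl] at this
    exact lt_irrefl 0 this
  · intro hx ε hε
    set a : ℝ := max (x - ε) 0 with ha
    have hab : a < x + ε := by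
      rw [ha]
      exact max_lt (by linarith) (by linarith)
    have hsub : Ioo a (x + ε) ⊆ Ioo (x - ε) (x + ε) := by
      apply Ioo_subset_Ioo ?_ (le_refl _)
      exact le_max_left _ _
    apply lt_of_lt_of_le ?_ (measure_mono hsub)
    rw [expM_apply measurableSet_Ioo]
    have hlow : ∀ t ∈ Ioo a (x + ε), ENNReal.ofReal (l * Real.exp (-(l * (x + ε))))
        ≤ expDens l t := by
      intro t ht
      simp only [expDens, Set.indicator_apply, mem_Ici]
      rw [if_pos (by linarith [ht.1, le_max_right (x - ε) (0:ℝ)])]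
      apply ENNReal.ofReal_le_ofReal
      have := Real.exp_le_exp.2 (show -(l * (x + ε)) ≤ -(l * t) by nlinarith [ht.2])
      nlinarith [Real.exp_pos (-(l * (x+ε)))]
    calc (0:ℝ≥0∞) < ENNReal.ofReal (l * Real.exp (-(l * (x + ε)))) * volume (Ioo a (x + ε)) := by
          apply ENNReal.mul_pos
          · simp only [ne_eq, ENNReal.ofReal_eq_zero, not_le]
            positivity
          · rw [Real.volume_Ioo]
            simp only [ne_eq, ENNReal.ofReal_eq_zero, not_le]
            linarith
      _ = ∫⁻ _ in Ioo a (x + ε), ENNReal.ofReal (l * Real.exp (-(l * (x + ε)))) := by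
          rw [setLIntegral_const]
      _ ≤ ∫⁻ t in Ioo a (x + ε), expDens l t := setLIntegral_mono' measurableSet_Ioo hlow

lemma expM_integrable (hl : 0 < l) : Integrable (fun x : ℝ => x) (expM l) := by
  rw [expM, integrable_withDensity_iff expDens_meas
    (Filter.Eventually.of_forall (fun x => by
      simp only [expDens, Set.indicator_apply]
      split <;> simp [ENNReal.ofReal_lt_top]))]
  have he : (fun x : ℝ => x * (expDens l x).toReal)
      = (Ici 0).indicator (fun x : ℝ => x * (l * Real.exp (-(l * x)))) := by
    funext x
    simp only [expDens, Set.indicator_apply]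
    split
    · rw [ENNReal.toReal_ofReal (by positivity)]
    · simp
  rw [he, integrable_indicator_iff measurableSet_Ici]
  have hbound : IntegrableOn (fun x : ℝ => 2 * Real.exp (-(l/2) * x)) (Ici 0) := by
    rw [integrableOn_Ici_iff_integrableOn_Ioi]
    exact (exp_neg_integrableOn_Ioi 0 (by linarith)).const_mul 2
  apply Integrable.mono' hbound
  · apply Continuous.aestronglyMeasurable
    continuity
  · rw [ae_restrict_iff' measurableSet_Ici]
    apply Filter.Eventually.of_forall
    intro x hx
    simp only [mem_Ici] at hx
    rw [Real.norm_eq_abs, abs_of_nonneg (by positivity)]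
    have hkey : x ≤ (2/l) * Real.exp ((l/2) * x) := by
      have h1 := Real.add_one_le_exp ((l/2) * x)
      have h2 : (l/2) * x ≤ Real.exp ((l/2) * x) := by linarith
      rw [div_mul_eq_mul_div, le_div_iff₀ hl]
      linarith
    calc x * (l * Real.exp (-(l * x)))
        ≤ ((2/l) * Real.exp ((l/2) * x)) * (l * Real.exp (-(l * x))) := by
          apply mul_le_mul_of_nonneg_right hkey (by positivity)
      _ = 2 * Real.exp (-(l/2) * x) := by
          have hE : Real.exp ((l/2)*x) * Real.exp (-(l*x)) = Real.exp (-(l/2)*x) := by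
            rw [← Real.exp_add]; ring_nf
          have h2l : 2/l*l = 2 := div_mul_cancel₀ 2 hl.ne'
          rw [show (2/l) * Real.exp ((l/2)*x) * (l * Real.exp (-(l*x)))
            = (2/l*l) * (Real.exp ((l/2)*x) * Real.exp (-(l*x))) from by ring, h2l, hE]

end construction2

lemma expM_eqn {l c δ : ℝ} (hδ : 0 < δ) (hl : 0 < l)
    (hc' : l * Real.exp (-(l * δ)) = c) :
    ∀ x : ℝ, 0 ≤ x → survG (expM l) (x + δ) = c * ∫ t in Ioi x, survG (expM l) t := by
  intro x hx
  rw [expM_survG hl (by linarith)]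
  have h1 : ∫ t in Ioi x, survG (expM l) t = ∫ t in Ioi x, Real.exp (-(l * t)) := by
    apply setIntegral_congr_fun measurableSet_Ioi
    intro t ht
    exact expM_survG hl (by linarith [mem_Ioi.1 ht])
  rw [h1]
  have h2 : ∫ t in Ioi x, Real.exp (-(l * t)) = Real.exp (-(l * x)) / l := by
    have h3 := exp_integral_Ioi hl x
    have h4 : ∫ t in Ioi x, l * Real.exp (-(l * t))
        = l * ∫ t in Ioi x, Real.exp (-(l * t)) := by
      rw [MeasureTheory.integral_const_mul]
    rw [h4] at h3
    field_simp
    linarith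
  rw [h2, ← hc']
  have hE : Real.exp (-(l * δ)) * Real.exp (-(l * x)) = Real.exp (-(l * (x + δ))) := by
    rw [← Real.exp_add]; ring_nf
  field_simp
  rw [hE]

/-- A continuous cdf `F` with support `[0, ∞)` solves `P_{c,δ}` iff `y = 1 - F` is a positive
solution of the delay IVP whose initial function (the restriction of `1 - F` to `[0, δ]`)
belongs to `Φ`; in particular such an `F` exists iff `cδ ≤ 1/e`. -/
theorem stmt9 (c δ : ℝ) (hc : 0 < c) (hδ : 0 < δ) :
    (∀ μ : Measure ℝ, IsProbabilityMeasure μ → Integrable (fun x : ℝ => x) μ →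
      (∀ x : ℝ, μ {x} = 0) → suppF μ = Set.Ici 0 →
      ((∀ x : ℝ, 0 ≤ x → survG μ (x + δ) = c * ∫ t in Set.Ioi x, survG μ t) ↔
        (IsSolDDE c δ (survG μ) (survG μ) ∧ MemPhi δ (survG μ) ∧
          ∀ t : ℝ, 0 ≤ t → 0 < survG μ t))) ∧
    ((∃ μ : Measure ℝ, IsProbabilityMeasure μ ∧ Integrable (fun x : ℝ => x) μ ∧
        (∀ x : ℝ, μ {x} = 0) ∧ suppF μ = Set.Ici 0 ∧
        ∀ x : ℝ, 0 ≤ x → survG μ (x + δ) = c * ∫ t in Set.Ioi x, survG μ t) ↔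
      c * δ ≤ 1 / Real.exp 1) := by
  constructor
  · intro μ hprob hint h0 hsupp
    haveI := hprob
    constructor
    · intro heq
      refine ⟨⟨(survG_continuous h0).continuousOn, fun t _ => rfl,
        survG_hasDerivWithinAt hint h0 heq⟩,
        ⟨(survG_continuous h0).continuousOn,
         (survG_strictAntiOn hsupp).mono (fun t ht => ht.1),
         survG_zero h0 hsupp, survG_pos hsupp δ⟩,
        fun t _ => survG_pos hsupp t⟩
    · rintro ⟨⟨_, _, hsol⟩, _, _⟩
      exact dde_to_eqn hδ hint (survG_continuous h0) hsol
  · constructor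
    · rintro ⟨μ, hprob, hint, h0, hsupp, heq⟩
      haveI := hprob
      exact no_sol hc hδ hint h0 hsupp heq
    · intro hle
      have hcont : ContinuousOn (fun l : ℝ => l * Real.exp (-(l * δ))) (Icc 0 (1/δ)) :=
        (by continuity : Continuous fun l : ℝ => l * Real.exp (-(l * δ))).continuousOn
      have hmem : c ∈ Icc ((fun l : ℝ => l * Real.exp (-(l * δ))) 0)
          ((fun l : ℝ => l * Real.exp (-(l * δ))) (1/δ)) := by
        constructor
        · simp only [zero_mul]
          linarith
        · simp only
          rw [show -(1/δ * δ) = -1 by field_simp]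
          rw [Real.exp_neg]
          rw [div_mul_eq_mul_div, le_div_iff₀ hδ] at *
          have h1 : 1/Real.exp 1 = (Real.exp 1)⁻¹ := by
            rw [one_div]
          rw [one_mul]
          calc c * δ ≤ 1 / Real.exp 1 := hle
            _ = (Real.exp 1)⁻¹ := by rw [one_div]
      obtain ⟨l, hlmem, hl⟩ := intermediate_value_Icc (by positivity : (0:ℝ) ≤ 1/δ) hcont hmem
      have hlpos : 0 < l := by
        rcases eq_or_lt_of_le hlmem.1 with h | h
        · exfalso
          rw [← h] at hl
          simp only [zero_mul] at hl
          linarith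
        · exact h
      exact ⟨expM l, expM_prob hlpos, expM_integrable hlpos, expM_singleton,
        expM_suppF hlpos, expM_eqn hδ hlpos hl⟩
end

section
/- Fix c > 0 and δ > 0 with cδ ≤ 1/e and set a = cδ/2. If y is a positive solution of the delay initial value problem y'(t) + c·y(t−δ) = 0 for t ≥ δ, y = φ on [0,δ], with initial function φ ∈ Φ, then φ(δ) > 2a(I₁ − 2a·I₂)/(1 − 2a), where I₁ = (1/δ)∫₀^δ φ(t) dt and I₂ = (1/δ²)∫₀^δ ∫₀^t φ(s) ds dt. -/
/-!
Integrating the equation by steps of length `δ` expresses `y(3δ)` through the data on `[0, δ]`: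
`y(3δ) = (1 - cδ) φ(δ) - cδ I₁ + (cδ)² I₂`. Positivity of `y(3δ)`, together with `cδ < 1`, is the
claimed inequality.
-/

open MeasureTheory Set

namespace IsSolDDE

variable {c δ : ℝ} {φ y : ℝ → ℝ}

theorem sub_eq_neg_mul_integral (hy : IsSolDDE c δ φ y) (hδ : 0 ≤ δ) {u v : ℝ}
    (hu : δ ≤ u) (huv : u ≤ v) :
    y v - y u = -(c * ∫ t in (u - δ)..(v - δ), y t) := by
  obtain ⟨hcont, -, hder⟩ := hy
  have hcont_delay : ContinuousOn (fun t => -(c * y (t - δ))) (Icc u v) :=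
    (continuousOn_const.mul (hcont.comp (continuousOn_id.sub continuousOn_const)
      fun t ht => show 0 ≤ t - δ by linarith [ht.1])).neg
  rw [← intervalIntegral.integral_comp_sub_right, ← intervalIntegral.integral_const_mul,
    ← intervalIntegral.integral_neg]
  refine (intervalIntegral.integral_eq_sub_of_hasDeriv_right_of_le huv
    (hcont.mono fun t ht => show 0 ≤ t by linarith [ht.1]) (fun t ht => ?_)
    (hcont_delay.intervalIntegrable_of_Icc huv)).symm
  have hδt : δ < t := hu.trans_lt ht.1
  exact ((hder t hδt.le).hasDerivAt (Ici_mem_nhds hδt)).hasDerivWithinAt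

theorem integral_delta_two_mul_delta (hy : IsSolDDE c δ φ y) (hδ : 0 ≤ δ) :
    ∫ t in δ..(2 * δ), y t = δ * y δ - c * ∫ t in (0 : ℝ)..δ, ∫ s in (0 : ℝ)..t, y s := by
  have hprim : ContinuousOn (fun t => ∫ s in (0 : ℝ)..t, y s) (Icc 0 δ) := by
    simpa only [uIcc_of_le hδ] using intervalIntegral.continuousOn_primitive_interval
      (μ := volume) (a := 0) (b := δ)
      (by rw [uIcc_of_le hδ]; exact (hy.1.mono Icc_subset_Ici_self).integrableOn_Icc)
  have hstep : EqOn y (fun t => y δ - c * ∫ s in (0 : ℝ)..(t - δ), y s) (uIcc δ (2 * δ)) := by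
    intro t ht
    rw [uIcc_of_le (by linarith)] at ht
    linarith [sub_self δ ▸ hy.sub_eq_neg_mul_integral hδ le_rfl ht.1]
  have hdelay : IntervalIntegrable (fun t => c * ∫ s in (0 : ℝ)..(t - δ), y s) volume δ (2 * δ) :=
    (continuousOn_const.mul (hprim.comp (continuousOn_id.sub continuousOn_const)
      fun t ht => show t - δ ∈ Icc 0 δ from ⟨by linarith [ht.1], by linarith [ht.2]⟩)
      ).intervalIntegrable_of_Icc (by linarith)
  rw [intervalIntegral.integral_congr hstep, intervalIntegral.integral_sub
    intervalIntegrable_const hdelay, intervalIntegral.integral_const,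
    intervalIntegral.integral_const_mul,
    intervalIntegral.integral_comp_sub_right (fun x => ∫ s in (0 : ℝ)..x, y s)]
  simp only [sub_self, show 2 * δ - δ = δ by ring, smul_eq_mul]

theorem apply_three_mul (hy : IsSolDDE c δ φ y) (hδ : 0 ≤ δ) :
    y (3 * δ) = (1 - c * δ) * y δ - c * (∫ t in (0 : ℝ)..δ, y t)
      + c ^ 2 * ∫ t in (0 : ℝ)..δ, ∫ s in (0 : ℝ)..t, y s := by
  have h₁ := hy.sub_eq_neg_mul_integral hδ le_rfl (by linarith : δ ≤ 2 * δ)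
  have h₂ := hy.sub_eq_neg_mul_integral hδ (by linarith : δ ≤ 2 * δ)
    (by linarith : 2 * δ ≤ 3 * δ)
  rw [sub_self, show 2 * δ - δ = δ by ring] at h₁
  rw [show 2 * δ - δ = δ by ring, show 3 * δ - δ = 2 * δ by ring,
    hy.integral_delta_two_mul_delta hδ] at h₂
  linear_combination h₁ + h₂

theorem apply_three_mul_eq_initial (hy : IsSolDDE c δ φ y) (hδ : 0 ≤ δ) :
    y (3 * δ) = (1 - c * δ) * φ δ - c * (∫ t in (0 : ℝ)..δ, φ t)
      + c ^ 2 * ∫ t in (0 : ℝ)..δ, ∫ s in (0 : ℝ)..t, φ s := by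
  have hyφ : EqOn y φ (uIcc 0 δ) := by
    rw [uIcc_of_le hδ]
    exact hy.2.1
  have hprim : EqOn (fun t => ∫ s in (0 : ℝ)..t, y s) (fun t => ∫ s in (0 : ℝ)..t, φ s)
      (uIcc 0 δ) := fun t ht =>
    intervalIntegral.integral_congr (hyφ.mono (uIcc_subset_uIcc left_mem_uIcc ht))
  rw [hy.apply_three_mul hδ, intervalIntegral.integral_congr hyφ,
    intervalIntegral.integral_congr hprim, hyφ right_mem_uIcc]

end IsSolDDE

theorem stmt10_general (c δ : ℝ) (hδ : 0 < δ) (hcδ : c * δ ≤ 1 / Real.exp 1)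
    (a : ℝ) (ha : a = c * δ / 2)
    (φ y : ℝ → ℝ) (hy : IsSolDDE c δ φ y)
    (hpos : ∀ t : ℝ, 0 ≤ t → 0 < y t)
    (I₁ I₂ : ℝ)
    (hI₁ : I₁ = (1 / δ) * ∫ t in (0:ℝ)..δ, φ t)
    (hI₂ : I₂ = (1 / δ ^ 2) * ∫ t in (0:ℝ)..δ, (∫ s in (0:ℝ)..t, φ s)) :
    2 * a * (I₁ - 2 * a * I₂) / (1 - 2 * a) < φ δ := by
  have hy₃ := hpos (3 * δ) (by positivity)
  rw [hy.apply_three_mul_eq_initial hδ.le] at hy₃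
  have hcδ₁ : c * δ < 1 :=
    hcδ.trans_lt ((div_lt_one (Real.exp_pos 1)).2 (Real.one_lt_exp_iff.2 one_pos))
  have hnum : 2 * a * (I₁ - 2 * a * I₂)
      = c * (∫ t in (0:ℝ)..δ, φ t) - c ^ 2 * ∫ t in (0:ℝ)..δ, (∫ s in (0:ℝ)..t, φ s) := by
    rw [ha, hI₁, hI₂]
    field_simp
  rw [hnum, ha, div_lt_iff₀ (by linarith)]
  linarith

/-- Necessary condition: if `y` is a positive solution of the delay IVP with initial
function `φ ∈ Φ`, then `φ(δ) > 2a(I₁ - 2a I₂)/(1 - 2a)` where `a = cδ/2`. -/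
theorem stmt10 (c δ : ℝ) (hc : 0 < c) (hδ : 0 < δ) (hcδ : c * δ ≤ 1 / Real.exp 1)
    (a : ℝ) (ha : a = c * δ / 2)
    (φ y : ℝ → ℝ) (hφ : MemPhi δ φ) (hy : IsSolDDE c δ φ y)
    (hpos : ∀ t : ℝ, 0 ≤ t → 0 < y t)
    (I₁ I₂ : ℝ)
    (hI₁ : I₁ = (1 / δ) * ∫ t in (0:ℝ)..δ, φ t)
    (hI₂ : I₂ = (1 / δ ^ 2) * ∫ t in (0:ℝ)..δ, (∫ s in (0:ℝ)..t, φ s)) :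
    2 * a * (I₁ - 2 * a * I₂) / (1 - 2 * a) < φ δ :=
  stmt10_general c δ hδ hcδ a ha φ y hy hpos I₁ I₂ hI₁ hI₂
end

section
/- Fix c > 0 and δ > 0 with cδ ≤ 1/e, set a = cδ/2 and suppose a < 3 − 2√2. Let D = (1−a)² − 4a and λ₂ = (1 − a − √D)/2, and let y be the solution of the delay initial value problem with initial function φ ∈ Φ. If φ(δ) > 2a((1−λ₂)I₁ − 2a·I₂)/(1 − λ₂ − 2a), then y(t) > 0 for all t ≥ 0. -/
open MeasureTheory Set

private lemma trapezoid {f : ℝ → ℝ} {p q : ℝ} (hpq : p ≤ q)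
    (hcont : ContinuousOn f (Icc p q)) (hconv : ConvexOn ℝ (Icc p q) f) :
    ∫ s in p..q, f s ≤ (q - p) * (f p + f q) / 2 := by
  rcases eq_or_lt_of_le hpq with rfl | hlt
  · simp
  have hq : q - p ≠ 0 := by linarith
  set k : ℝ := (f q - f p) / (q - p) with hk
  have hle : ∀ s ∈ Icc p q, f s ≤ f p + (s - p) * k := by
    intro s hs
    have h1 : (0:ℝ) ≤ (q - s) / (q - p) := by
      apply div_nonneg <;> linarith [hs.2]
    have h2 : (0:ℝ) ≤ (s - p) / (q - p) := by
      apply div_nonneg <;> linarith [hs.1]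
    have h3 : (q - s) / (q - p) + (s - p) / (q - p) = 1 := by field_simp; ring
    have h4 := hconv.2 (left_mem_Icc.2 hpq) (right_mem_Icc.2 hpq) h1 h2 h3
    have hxs : ((q - s) / (q - p)) • p + ((s - p) / (q - p)) • q = s := by
      rw [smul_eq_mul, smul_eq_mul, div_mul_eq_mul_div, div_mul_eq_mul_div, ← add_div, div_eq_iff hq]
      ring
    rw [hxs] at h4
    calc f s ≤ (q - s)/(q-p) * f p + (s-p)/(q-p) * f q := h4
      _ = f p + (s - p) * k := by rw [hk]; field_simp; ring
  have hint1 : IntervalIntegrable f volume p q := by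
    apply ContinuousOn.intervalIntegrable
    rwa [uIcc_of_le hpq]
  have hint2 : IntervalIntegrable (fun s => f p + (s - p) * k) volume p q := by
    apply ContinuousOn.intervalIntegrable
    exact (continuous_const.add ((continuous_id.sub continuous_const).mul continuous_const)).continuousOn
  have hmono := intervalIntegral.integral_mono_on hpq hint1 hint2 hle
  have hcomp : (∫ s in p..q, (f p + (s - p) * k)) = ∫ x in (0:ℝ)..(q - p), (f p + x * k) := by
    have := intervalIntegral.integral_comp_sub_right (fun x => f p + x * k) p (a := p) (b := q)
    rwa [sub_self] at this
  have hval : (∫ x in (0:ℝ)..(q - p), (f p + x * k)) = (q - p) * f p + k * (q - p)^2 / 2 := by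
    rw [intervalIntegral.integral_add intervalIntegrable_const ((intervalIntegral.intervalIntegrable_id.mul_const k))]
    rw [intervalIntegral.integral_const, intervalIntegral.integral_mul_const, integral_id]
    simp [smul_eq_mul]
    ring
  have hfin : (q - p) * f p + k * (q - p)^2 / 2 = (q - p) * (f p + f q) / 2 := by
    rw [hk]; field_simp; ring
  calc ∫ s in p..q, f s ≤ ∫ s in p..q, (f p + (s - p) * k) := hmono
    _ = (q - p) * (f p + f q) / 2 := by rw [hcomp, hval, hfin]

private lemma dde_ftc {c δ : ℝ} {φ y : ℝ → ℝ} (hδ : 0 < δ) (hy : IsSolDDE c δ φ y)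
    {p q : ℝ} (hp : δ ≤ p) (hpq : p ≤ q) :
    y q = y p - c * ∫ s in p..q, y (s - δ) := by
  obtain ⟨ycont, -, yderiv⟩ := hy
  have h0p : (0:ℝ) ≤ p := le_trans hδ.le hp
  have hsub : Icc p q ⊆ Ici (0:ℝ) := fun x hx => le_trans h0p hx.1
  have hcont2 : ContinuousOn (fun s => y (s - δ)) (Icc p q) := by
    apply ycont.comp (continuous_sub_right δ).continuousOn
    intro x hx
    exact sub_nonneg.2 (le_trans hp hx.1)
  have hint : IntervalIntegrable (fun s => -(c * y (s - δ))) volume p q := by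
    apply ContinuousOn.intervalIntegrable
    rw [uIcc_of_le hpq]
    exact (continuousOn_const.mul hcont2).neg
  have key := intervalIntegral.integral_eq_sub_of_hasDeriv_right_of_le hpq
    (ycont.mono hsub)
    (fun x hx => (yderiv x (le_trans hp hx.1.le)).mono (fun z hz => le_trans (le_trans hp hx.1.le) hz.le))
    hint
  rw [intervalIntegral.integral_neg, intervalIntegral.integral_const_mul] at key
  linarith

private lemma dde_anti {c δ : ℝ} {φ y : ℝ → ℝ} (hc : 0 ≤ c) (hδ : 0 < δ)
    (hy : IsSolDDE c δ φ y) {T : ℝ} (hT : δ ≤ T)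
    (hpos : ∀ t ∈ Icc (0:ℝ) (T - δ), 0 ≤ y t) : AntitoneOn y (Icc δ T) := by
  obtain ⟨ycont, -, yderiv⟩ := hy
  have hD : ∀ x ∈ Ioo δ T, HasDerivAt y (-(c * y (x - δ))) x := by
    intro x hx
    exact (yderiv x hx.1.le).hasDerivAt (Ici_mem_nhds hx.1)
  apply antitoneOn_of_deriv_nonpos (convex_Icc δ T)
  · exact ycont.mono (fun x hx => le_trans hδ.le hx.1)
  · rw [interior_Icc]
    exact fun x hx => (hD x hx).differentiableAt.differentiableWithinAt
  · rw [interior_Icc]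
    intro x hx
    rw [(hD x hx).deriv]
    have h1 : 0 ≤ y (x - δ) := hpos _ ⟨by linarith [hx.1], by linarith [hx.2]⟩
    have := mul_nonneg hc h1
    linarith

private lemma dde_convex {c δ : ℝ} {φ y : ℝ → ℝ} (hc : 0 ≤ c) (hδ : 0 < δ)
    (hy : IsSolDDE c δ φ y) {T : ℝ} (hT : 2*δ ≤ T)
    (hanti : AntitoneOn y (Icc δ (T - δ))) : ConvexOn ℝ (Icc (2*δ) T) y := by
  obtain ⟨ycont, -, yderiv⟩ := hy
  have hD : ∀ x ∈ Ioo (2*δ) T, HasDerivAt y (-(c * y (x - δ))) x := by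
    intro x hx
    exact (yderiv x (show δ ≤ x by linarith [hx.1])).hasDerivAt (Ici_mem_nhds (show δ < x by linarith [hx.1]))
  apply MonotoneOn.convexOn_of_deriv (convex_Icc _ _)
  · exact ycont.mono (fun x hx => le_trans (by linarith) hx.1)
  · rw [interior_Icc]
    exact fun x hx => (hD x hx).differentiableAt.differentiableWithinAt
  · rw [interior_Icc]
    intro u hu v hv huv
    rw [(hD u hu).deriv, (hD v hv).deriv]
    have h1 : y (v - δ) ≤ y (u - δ) :=
      hanti ⟨by linarith [hu.1], by linarith [hu.2]⟩ ⟨by linarith [hv.1], by linarith [hv.2]⟩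
        (by linarith)
    nlinarith

private lemma extend_pos {c δ : ℝ} {φ y : ℝ → ℝ} (hc : 0 < c) (hδ : 0 < δ)
    (hy : IsSolDDE c δ φ y) {T : ℝ} (hT : δ ≤ T)
    (hpos : ∀ t ∈ Icc (0:ℝ) T, 0 < y t) (hend : 0 < y (T + δ)) :
    ∀ t ∈ Icc (0:ℝ) (T + δ), 0 < y t := by
  intro t ht
  by_cases h : t ≤ T
  · exact hpos t ⟨ht.1, h⟩
  · push_neg at h
    have hanti : AntitoneOn y (Icc δ (T + δ)) := by
      apply dde_anti hc.le hδ hy (by linarith)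
      intro u hu
      exact (hpos u ⟨hu.1, by linarith [hu.2]⟩).le
    have h2 : y (T + δ) ≤ y t :=
      hanti ⟨le_trans hT h.le, ht.2⟩ ⟨by linarith, le_rfl⟩ ht.2
    linarith

/-- Sufficient condition: if `a = cδ/2 < 3 - 2√2` and
`φ(δ) > 2a((1-λ₂)I₁ - 2a I₂)/(1 - λ₂ - 2a)`, then the solution `y` of the delay IVP with
initial function `φ ∈ Φ` is positive. -/
theorem stmt12 (c δ : ℝ) (hc : 0 < c) (hδ : 0 < δ) (hcδ : c * δ ≤ 1 / Real.exp 1)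
    (a : ℝ) (ha : a = c * δ / 2) (ha2 : a < 3 - 2 * Real.sqrt 2)
    (D lam2 : ℝ) (hD : D = (1 - a) ^ 2 - 4 * a) (hlam2 : lam2 = (1 - a - Real.sqrt D) / 2)
    (φ y : ℝ → ℝ) (hφ : MemPhi δ φ) (hy : IsSolDDE c δ φ y)
    (I₁ I₂ : ℝ)
    (hI₁ : I₁ = (1 / δ) * ∫ t in (0:ℝ)..δ, φ t)
    (hI₂ : I₂ = (1 / δ ^ 2) * ∫ t in (0:ℝ)..δ, (∫ s in (0:ℝ)..t, φ s))
    (hcond : 2 * a * ((1 - lam2) * I₁ - 2 * a * I₂) / (1 - lam2 - 2 * a) < φ δ) :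
    ∀ t : ℝ, 0 ≤ t → 0 < y t := by
  obtain ⟨φcont, φanti, φ0, φδpos⟩ := hφ
  obtain ⟨ycont, yeq, yderiv⟩ := id hy
  -- numeric facts
  have s2 : Real.sqrt 2 ^ 2 = 2 := Real.sq_sqrt (by norm_num)
  have s2nn : (0:ℝ) ≤ Real.sqrt 2 := Real.sqrt_nonneg 2
  have ha0 : 0 < a := by rw [ha]; positivity
  have ha13 : a < 1/3 := by nlinarith
  have hDpos : 0 < D := by rw [hD]; nlinarith
  have sD : Real.sqrt D ^ 2 = D := Real.sq_sqrt hDpos.le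
  have sDpos : 0 < Real.sqrt D := Real.sqrt_pos.2 hDpos
  have sDlt : Real.sqrt D < 1 - a := by
    have h1 : D < (1-a)^2 := by rw [hD]; nlinarith
    calc Real.sqrt D < Real.sqrt ((1-a)^2) := Real.sqrt_lt_sqrt hDpos.le h1
      _ = 1 - a := Real.sqrt_sq (by linarith : (0:ℝ) ≤ 1 - a)
  have hl2pos : 0 < lam2 := by rw [hlam2]; linarith
  have hquad : lam2 ^ 2 - (1 - a) * lam2 + a = 0 := by
    have hs : Real.sqrt D ^ 2 = (1-a)^2 - 4*a := by rw [sD, hD]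
    rw [hlam2]; linear_combination hs / 4
  have h1al : 0 < 1 - a - lam2 := by rw [hlam2]; linarith
  have hden : 0 < 1 - lam2 - 2*a := by rw [hlam2]; linarith
  -- basic facts about φ and y on [0, δ]
  have yeqδ : y δ = φ δ := yeq δ (right_mem_Icc.2 hδ.le)
  have hφpos : ∀ t ∈ Icc (0:ℝ) δ, 0 < φ t := by
    intro t ht
    rcases eq_or_lt_of_le ht.2 with h | h
    · rw [h]; exact φδpos
    · exact lt_trans φδpos (φanti ht (right_mem_Icc.2 hδ.le) h)
  have hposφ : ∀ t ∈ Icc (0:ℝ) δ, 0 < y t := by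
    intro t ht
    rw [yeq t ht]
    exact hφpos t ht
  -- integral identities
  have φint : IntervalIntegrable φ volume 0 δ := by
    apply ContinuousOn.intervalIntegrable
    rwa [uIcc_of_le hδ.le]
  have hJ1 : (∫ t in (0:ℝ)..δ, φ t) = δ * I₁ := by rw [hI₁]; field_simp
  have hJ2 : (∫ t in (0:ℝ)..δ, (∫ s in (0:ℝ)..t, φ s)) = δ^2 * I₂ := by rw [hI₂]; field_simp
  have e21 : (2:ℝ)*δ - δ = δ := by ring
  have ftc12 : y (2*δ) = y δ - c * ∫ s in δ..(2*δ), y (s - δ) :=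
    dde_ftc hδ hy le_rfl (by linarith)
  have shift1 : (∫ s in δ..(2*δ), y (s - δ)) = ∫ s in (0:ℝ)..δ, y s := by
    rw [intervalIntegral.integral_comp_sub_right y δ, sub_self, e21]
  have yEqφI : (∫ s in (0:ℝ)..δ, y s) = ∫ s in (0:ℝ)..δ, φ s := by
    apply intervalIntegral.integral_congr
    intro x hx
    rw [uIcc_of_le hδ.le] at hx
    exact yeq x hx
  have hy2 : y (2*δ) = φ δ - 2*a*I₁ := by
    rw [ftc12, shift1, yEqφI, hJ1, yeqδ, ha]; ring
  -- pointwise formula on [δ, 2δ]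
  have hpt : ∀ s ∈ Icc δ (2*δ), y s = φ δ - c * (∫ u in (0:ℝ)..(s-δ), φ u) := by
    intro s hs
    have hftc := dde_ftc hδ hy le_rfl hs.1
    have hsh : (∫ u in δ..s, y (u - δ)) = ∫ u in (0:ℝ)..(s - δ), y u := by
      rw [intervalIntegral.integral_comp_sub_right y δ, sub_self]
    have hcg : (∫ u in (0:ℝ)..(s - δ), y u) = ∫ u in (0:ℝ)..(s - δ), φ u := by
      apply intervalIntegral.integral_congr
      intro x hx
      rw [uIcc_of_le (by linarith [hs.1] : (0:ℝ) ≤ s - δ)] at hx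
      exact yeq x ⟨hx.1, by linarith [hx.2, hs.2]⟩
    rw [hftc, hsh, hcg, yeqδ]
  -- continuity of the primitive of φ
  have Fcont : ContinuousOn (fun t => ∫ u in (0:ℝ)..t, φ u) (Icc 0 δ) := by
    have h1 : IntegrableOn φ (uIcc 0 δ) volume := by
      rw [uIcc_of_le hδ.le]
      exact φcont.integrableOn_Icc
    have := intervalIntegral.continuousOn_primitive_interval h1
    rwa [uIcc_of_le hδ.le] at this
  have hIδ2 : (∫ s in δ..(2*δ), y s) = δ * φ δ - c * (δ^2 * I₂) := by
    have e1 : (∫ s in δ..(2*δ), y s)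
        = ∫ s in δ..(2*δ), (φ δ - c * (∫ u in (0:ℝ)..(s-δ), φ u)) := by
      apply intervalIntegral.integral_congr
      intro x hx
      rw [uIcc_of_le (by linarith : δ ≤ 2*δ)] at hx
      exact hpt x hx
    have hFc : ContinuousOn (fun s => c * ∫ u in (0:ℝ)..(s-δ), φ u) (Icc δ (2*δ)) := by
      apply continuousOn_const.mul
      apply Fcont.comp (continuous_sub_right δ).continuousOn
      intro x hx
      constructor
      · show (0:ℝ) ≤ x - δ
        linarith [hx.1]
      · show x - δ ≤ δ
        linarith [hx.2]
    have hFint : IntervalIntegrable (fun s => c * ∫ u in (0:ℝ)..(s-δ), φ u) volume δ (2*δ) := by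
      apply ContinuousOn.intervalIntegrable
      rwa [uIcc_of_le (by linarith : δ ≤ 2*δ)]
    rw [e1, intervalIntegral.integral_sub intervalIntegrable_const hFint,
      intervalIntegral.integral_const, intervalIntegral.integral_const_mul,
      intervalIntegral.integral_comp_sub_right (fun t => ∫ u in (0:ℝ)..t, φ u) δ, sub_self, e21,
      hJ2]
    simp only [smul_eq_mul]
  have ftc23 : y (3*δ) = y (2*δ) - c * ∫ s in (2*δ)..(3*δ), y (s - δ) :=
    dde_ftc hδ hy (by linarith) (by linarith)
  have shift2 : (∫ s in (2*δ)..(3*δ), y (s - δ)) = ∫ s in δ..(2*δ), y s := by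
    rw [intervalIntegral.integral_comp_sub_right y δ, e21, show (3:ℝ)*δ - δ = 2*δ by ring]
  have hy3 : y (3*δ) = (1 - 2*a) * φ δ - 2*a*I₁ + 4*a^2*I₂ := by
    rw [ftc23, hy2, shift2, hIδ2, ha]; ring
  -- the main condition, cleared of denominators
  have hcond' : 2*a*((1 - lam2) * I₁ - 2*a*I₂) < φ δ * (1 - lam2 - 2*a) :=
    (div_lt_iff₀ hden).1 hcond
  -- I₂ ≤ I₁
  have hFle : ∀ t ∈ Icc (0:ℝ) δ, (∫ u in (0:ℝ)..t, φ u) ≤ δ * I₁ := by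
    intro t ht
    rw [← hJ1]
    have hmt : IntervalIntegrable φ volume 0 t := by
      apply φint.mono_set
      rw [uIcc_of_le ht.1, uIcc_of_le hδ.le]
      exact Icc_subset_Icc le_rfl ht.2
    have hsplit := intervalIntegral.integral_interval_sub_left φint hmt
    have hnn : 0 ≤ ∫ u in t..δ, φ u := by
      apply intervalIntegral.integral_nonneg ht.2
      intro u hu
      exact (hφpos u ⟨le_trans ht.1 hu.1, hu.2⟩).le
    linarith [hsplit, hnn]
  have hFint0 : IntervalIntegrable (fun t => ∫ u in (0:ℝ)..t, φ u) volume 0 δ := by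
    apply ContinuousOn.intervalIntegrable
    rwa [uIcc_of_le hδ.le]
  have hI12 : I₂ ≤ I₁ := by
    have h1 : (∫ t in (0:ℝ)..δ, (∫ s in (0:ℝ)..t, φ s)) ≤ ∫ t in (0:ℝ)..δ, δ * I₁ :=
      intervalIntegral.integral_mono_on hδ.le hFint0 intervalIntegrable_const hFle
    rw [hJ2, intervalIntegral.integral_const] at h1
    have hδ2 : 0 < δ^2 := by positivity
    simp only [smul_eq_mul, sub_zero] at h1
    have h2 : δ^2 * I₂ ≤ δ^2 * I₁ := by linarith only [h1]
    exact le_of_mul_le_mul_left h2 hδ2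
  have hy2pos : 0 < y (2*δ) := by
    have k1 : 4*a^2*I₂ ≤ 4*a^2*I₁ := by linarith only [mul_nonneg (sq_nonneg a) (sub_nonneg.2 hI12)]
    have k2 : (2*a*I₁) * (1 - lam2 - 2*a) < φ δ * (1 - lam2 - 2*a) := by linarith only [hcond', k1]
    have k3 : 2*a*I₁ < φ δ := lt_of_mul_lt_mul_right k2 hden.le
    rw [hy2]; linarith only [k3]
  have hbase : lam2 * y (2*δ) < y (3*δ) := by
    rw [hy2, hy3]
    linarith only [hcond']
  -- the main induction
  have key : ∀ n : ℕ, (∀ t ∈ Icc (0:ℝ) (((n:ℝ)+3)*δ), 0 < y t) ∧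
      lam2 * y (((n:ℝ)+2)*δ) < y (((n:ℝ)+3)*δ) := by
    intro n
    induction n with
    | zero =>
      simp only [Nat.cast_zero, zero_add]
      have p2 : ∀ t ∈ Icc (0:ℝ) (2*δ), 0 < y t := by
        have h := extend_pos hc hδ hy le_rfl hposφ
          (by rw [show δ + δ = 2*δ by ring]; exact hy2pos)
        intro t ht
        exact h t ⟨ht.1, by linarith [ht.2]⟩
      have hy3pos : 0 < y (3*δ) := lt_trans (mul_pos hl2pos hy2pos) hbase
      have p3 := extend_pos hc hδ hy (by linarith : δ ≤ 2*δ) p2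
        (by rw [show 2*δ + δ = 3*δ by ring]; exact hy3pos)
      refine ⟨fun t ht => p3 t ⟨ht.1, by linarith [ht.2]⟩, hbase⟩
    | succ n ih =>
      obtain ⟨pos_n, rec_n⟩ := ih
      have hP : (0:ℝ) ≤ (n:ℝ) := Nat.cast_nonneg n
      have hPδ : (0:ℝ) ≤ (n:ℝ)*δ := mul_nonneg hP hδ.le
      have hcast : ((n + 1 : ℕ) : ℝ) = (n : ℝ) + 1 := by push_cast; ring
      rw [hcast, show ((n:ℝ)+1+3)*δ = ((n:ℝ)+4)*δ by ring,
        show ((n:ℝ)+1+2)*δ = ((n:ℝ)+3)*δ by ring]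
      have hant : AntitoneOn y (Icc δ (((n:ℝ)+3)*δ)) := by
        apply dde_anti hc.le hδ hy (by linarith)
        intro u hu
        exact (pos_n u ⟨hu.1, by linarith [hu.2]⟩).le
      have hconv : ConvexOn ℝ (Icc (2*δ) (((n:ℝ)+4)*δ)) y := by
        apply dde_convex hc.le hδ hy (by linarith)
        rw [show ((n:ℝ)+4)*δ - δ = ((n:ℝ)+3)*δ by ring]
        exact hant
      have hconv2 : ConvexOn ℝ (Icc (((n:ℝ)+2)*δ) (((n:ℝ)+3)*δ)) y :=
        hconv.subset (Icc_subset_Icc (by linarith) (by linarith)) (convex_Icc _ _)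
      have htrap := trapezoid (show ((n:ℝ)+2)*δ ≤ ((n:ℝ)+3)*δ by linarith)
        (ycont.mono (fun x hx => le_trans (by linarith) hx.1)) hconv2
      have hftc4 : y (((n:ℝ)+4)*δ)
          = y (((n:ℝ)+3)*δ) - c * ∫ s in (((n:ℝ)+3)*δ)..(((n:ℝ)+4)*δ), y (s - δ) :=
        dde_ftc hδ hy (by linarith) (by linarith)
      have hshift : (∫ s in (((n:ℝ)+3)*δ)..(((n:ℝ)+4)*δ), y (s - δ))
          = ∫ s in (((n:ℝ)+2)*δ)..(((n:ℝ)+3)*δ), y s := by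
        rw [intervalIntegral.integral_comp_sub_right y δ,
          show ((n:ℝ)+3)*δ - δ = ((n:ℝ)+2)*δ by ring,
          show ((n:ℝ)+4)*δ - δ = ((n:ℝ)+3)*δ by ring]
      have hrec : lam2 * y (((n:ℝ)+3)*δ) < y (((n:ℝ)+4)*δ) := by
        have hup : c * (∫ s in (((n:ℝ)+2)*δ)..(((n:ℝ)+3)*δ), y s)
            ≤ a * (y (((n:ℝ)+2)*δ) + y (((n:ℝ)+3)*δ)) := by
          have h2 : (((n:ℝ)+3)*δ - ((n:ℝ)+2)*δ) * (y (((n:ℝ)+2)*δ) + y (((n:ℝ)+3)*δ)) / 2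
              = δ * (y (((n:ℝ)+2)*δ) + y (((n:ℝ)+3)*δ)) / 2 := by ring
          calc c * (∫ s in (((n:ℝ)+2)*δ)..(((n:ℝ)+3)*δ), y s)
              ≤ c * (δ * (y (((n:ℝ)+2)*δ) + y (((n:ℝ)+3)*δ)) / 2) := by
                apply mul_le_mul_of_nonneg_left _ hc.le
                rw [← h2]; exact htrap
            _ = a * (y (((n:ℝ)+2)*δ) + y (((n:ℝ)+3)*δ)) := by rw [ha]; ring
        have h6 : (lam2^2 - (1-a)*lam2 + a) * y (((n:ℝ)+2)*δ) = 0 := by rw [hquad]; ring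
        have h5 : (1 - a - lam2) * (lam2 * y (((n:ℝ)+2)*δ)) < (1 - a - lam2) * y (((n:ℝ)+3)*δ) :=
          mul_lt_mul_of_pos_left rec_n h1al
        have h7 : y (((n:ℝ)+4)*δ)
            = y (((n:ℝ)+3)*δ) - c * ∫ s in (((n:ℝ)+2)*δ)..(((n:ℝ)+3)*δ), y s := by
          rw [hftc4, hshift]
        linarith only [hup, h5, h6, h7]
      have hy3pos' : 0 < y (((n:ℝ)+3)*δ) := pos_n _ ⟨by linarith, le_rfl⟩
      have hy4pos : 0 < y (((n:ℝ)+4)*δ) := lt_trans (mul_pos hl2pos hy3pos') hrec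
      have pos4 : ∀ t ∈ Icc (0:ℝ) (((n:ℝ)+4)*δ), 0 < y t := by
        have h := extend_pos hc hδ hy (show δ ≤ ((n:ℝ)+3)*δ by linarith) pos_n
          (by rw [show ((n:ℝ)+3)*δ + δ = ((n:ℝ)+4)*δ by ring]; exact hy4pos)
        intro t ht
        exact h t ⟨ht.1, by linarith [ht.2]⟩
      exact ⟨pos4, hrec⟩
  intro t ht
  obtain ⟨n, hn⟩ := exists_nat_ge (t / δ)
  have htn : t ≤ ((n:ℝ)+3)*δ := by
    rw [div_le_iff₀ hδ] at hn
    linarith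
  exact (key n).1 t ⟨ht, htn⟩
end

section
/- Fix c > 0 and δ > 0 with cδ ≤ 1/e, set a = cδ/2 and suppose a < 3 − 2√2. Let D = (1−a)² − 4a and λ₂ = (1 − a − √D)/2, and let y be the solution of the delay initial value problem with initial function φ ∈ Φ. If φ(δ) > 2a/(1 − λ₂), then y(t) > 0 for all t ≥ 0. -/
open MeasureTheory Set Filter Topology

/-- Fundamental integral identity for solutions of the DDE. -/
lemma dde_integral (c δ : ℝ) (hδ : 0 < δ) (φ y : ℝ → ℝ) (hy : IsSolDDE c δ φ y)
    {u v : ℝ} (hu : δ ≤ u) (huv : u ≤ v) :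
    y v = y u - c * ∫ s in (u - δ)..(v - δ), y s := by
  obtain ⟨hcont, -, hderiv⟩ := hy
  have hyshift : ContinuousOn (fun s => y (s - δ)) (Set.Icc u v) := by
    apply hcont.comp (continuous_id.sub continuous_const).continuousOn
    intro s hs
    simp only [id_eq, Set.mem_Ici, sub_nonneg]
    show (0:ℝ) ≤ s - δ; linarith [hu, hs.1]
  have hint : IntervalIntegrable (fun s => -(c * y (s - δ))) volume u v := by
    apply ContinuousOn.intervalIntegrable
    rw [Set.uIcc_of_le huv]
    exact (hyshift.const_smul c).neg
  have key : ∫ s in u..v, (-(c * y (s - δ))) = y v - y u := by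
    apply intervalIntegral.integral_eq_sub_of_hasDeriv_right_of_le huv
    · apply hcont.mono
      intro s hs
      simp only [Set.mem_Icc] at hs
      simp only [Set.mem_Ici]; linarith
    · intro x hx
      exact (hderiv x (by simp only [Set.mem_Ici]; linarith [hx.1])).mono
        (fun s hs => by simp only [Set.mem_Ici] at *; linarith [Set.mem_Ioi.mp hs, hx.1])
    · exact hint
  have h2 : ∫ s in u..v, (-(c * y (s - δ))) = -(c * ∫ s in u..v, y (s - δ)) := by
    rw [intervalIntegral.integral_neg, intervalIntegral.integral_const_mul]
  have h3 : (∫ s in u..v, y (s - δ)) = ∫ s in (u - δ)..(v - δ), y s :=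
    intervalIntegral.integral_comp_sub_right (fun s => y s) δ
  rw [h2, h3] at key
  linarith

set_option maxHeartbeats 2000000 in
/-- Sufficient condition (uniform version): if `a = cδ/2 < 3 - 2√2` and
`φ(δ) > 2a/(1 - λ₂)`, then the solution `y` of the delay IVP with initial function
`φ ∈ Φ` is positive. -/
theorem stmt13 (c δ : ℝ) (hc : 0 < c) (hδ : 0 < δ) (hcδ : c * δ ≤ 1 / Real.exp 1)
    (a : ℝ) (ha : a = c * δ / 2) (ha2 : a < 3 - 2 * Real.sqrt 2)
    (D lam2 : ℝ) (hD : D = (1 - a) ^ 2 - 4 * a) (hlam2 : lam2 = (1 - a - Real.sqrt D) / 2)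
    (φ y : ℝ → ℝ) (hφ : MemPhi δ φ) (hy : IsSolDDE c δ φ y)
    (hcond : 2 * a / (1 - lam2) < φ δ) :
    ∀ t : ℝ, 0 ≤ t → 0 < y t := by
  obtain ⟨hφc, hφanti, hφ0, hφδ⟩ := hφ
  obtain ⟨hyc, hyφ, hyderiv⟩ := hy
  -- Numerical facts about a, D, lam2
  have hs2 : Real.sqrt 2 ^ 2 = 2 := Real.sq_sqrt (by norm_num)
  have hs2n : 0 ≤ Real.sqrt 2 := Real.sqrt_nonneg 2
  have ha0 : 0 < a := by rw [ha]; positivity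
  have hcδa : c * δ = 2 * a := by rw [ha]; ring
  have ha1 : a < 1 := by nlinarith
  have hD0 : 0 < D := by rw [hD]; nlinarith
  have hsD : Real.sqrt D ^ 2 = D := Real.sq_sqrt hD0.le
  have hsDpos : 0 < Real.sqrt D := Real.sqrt_pos.mpr hD0
  have hsDlt : Real.sqrt D < 1 - a := by
    rw [show (1 : ℝ) - a = Real.sqrt ((1 - a) ^ 2) by
      rw [Real.sqrt_sq (by linarith)]]
    apply Real.sqrt_lt_sqrt hD0.le
    rw [hD]; nlinarith
  have hlam2pos : 0 < lam2 := by rw [hlam2]; linarith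
  have hlam2lt1 : lam2 < 1 := by rw [hlam2]; linarith
  have hquad : lam2 ^ 2 - (1 - a) * lam2 + a = 0 := by
    have h1 : Real.sqrt D = 1 - a - 2 * lam2 := by rw [hlam2]; ring
    have h2 : (1 - a - 2 * lam2) ^ 2 = D := by rw [← h1]; exact hsD
    rw [hD] at h2; linear_combination h2 / 4
  have hfact : (1 - a - lam2) * lam2 = a := by linear_combination -hquad
  have h1al : 0 < 1 - a - lam2 := by
    have heq : 1 - a - lam2 = a / lam2 := by
      field_simp
      linear_combination hfact
    rw [heq]
    positivity
  -- condition restated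
  have hcond' : 2 * a < (1 - lam2) * φ δ := by
    rw [div_lt_iff₀ (by linarith)] at hcond
    linarith [hcond]
  -- positivity of φ on [0, δ]
  have hφpos : ∀ s ∈ Set.Icc (0:ℝ) δ, 0 < φ s := by
    intro s hs
    rcases eq_or_lt_of_le hs.2 with h | h
    · rw [h]; exact hφδ
    · exact lt_trans hφδ (hφanti hs (Set.mem_Icc.mpr ⟨hδ.le, le_refl δ⟩) h)
  -- main contradiction setup
  intro t ht
  by_contra hyt
  push_neg at hyt
  have htδ : δ < t := by
    by_contra h
    push_neg at h
    have := hφpos t ⟨ht, h⟩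
    rw [hyφ t ⟨ht, h⟩] at hyt
    linarith
  set S : Set ℝ := {s | δ ≤ s ∧ y s ≤ 0} with hS
  have hSne : S.Nonempty := ⟨t, htδ.le, hyt⟩
  have hSbdd : BddBelow S := ⟨δ, fun s hs => hs.1⟩
  have hSclosed : IsClosed S := by
    have h1 : IsClosed (Set.Ici (0:ℝ) ∩ y ⁻¹' Set.Iic 0) :=
      hyc.preimage_isClosed_of_isClosed isClosed_Ici isClosed_Iic
    have h2 : S = Set.Ici δ ∩ (Set.Ici (0:ℝ) ∩ y ⁻¹' Set.Iic 0) := by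
      ext s
      simp only [hS, Set.mem_setOf_eq, Set.mem_inter_iff, Set.mem_Ici, Set.mem_preimage,
        Set.mem_Iic]
      constructor
      · intro ⟨h1, h2⟩; exact ⟨h1, by linarith, h2⟩
      · intro ⟨h1, _, h3⟩; exact ⟨h1, h3⟩
    rw [h2]
    exact IsClosed.inter isClosed_Ici h1
  set t₀ : ℝ := sInf S with ht₀def
  have ht₀mem : t₀ ∈ S := hSclosed.csInf_mem hSne hSbdd
  have ht₀δ : δ ≤ t₀ := ht₀mem.1
  have ht₀0 : (0:ℝ) ≤ t₀ := by linarith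
  have hyt₀ : y t₀ ≤ 0 := ht₀mem.2
  have hpos : ∀ s, 0 ≤ s → s < t₀ → 0 < y s := by
    intro s hs0 hst₀
    by_cases h : s ≤ δ
    · rw [hyφ s ⟨hs0, h⟩]; exact hφpos s ⟨hs0, h⟩
    · push_neg at h
      by_contra hys
      push_neg at hys
      have : s ∈ S := ⟨h.le, hys⟩
      have := csInf_le hSbdd this
      linarith
  have ht₀δ' : δ < t₀ := by
    rcases eq_or_lt_of_le ht₀δ with h | h
    · exfalso
      have := hφpos δ ⟨hδ.le, le_refl δ⟩
      rw [← hyφ δ ⟨hδ.le, le_refl δ⟩] at this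
      rw [h] at this; linarith
    · exact h
  -- y t₀ = 0
  have hyt₀0 : y t₀ = 0 := by
    refine le_antisymm hyt₀ ?_
    have hcw : ContinuousWithinAt y (Set.Ico 0 t₀) t₀ :=
      (hyc t₀ ht₀0).mono (fun s hs => hs.1)
    have hne : (𝓝[Set.Ico 0 t₀] t₀).NeBot := by
      rw [nhdsWithin_Ico_eq_nhdsLT (by linarith : (0:ℝ) < t₀)]
      infer_instance
    refine ge_of_tendsto hcw ?_
    filter_upwards [self_mem_nhdsWithin] with s hs
    exact (hpos s hs.1 hs.2).le
  have hnn0 : ∀ s, 0 ≤ s → s ≤ t₀ → 0 ≤ y s := by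
    intro s h1 h2
    rcases eq_or_lt_of_le h2 with h | h
    · rw [h, hyt₀0]
    · exact (hpos s h1 h).le
  -- y is antitone on [0, t₀]
  have hanti1 : AntitoneOn y (Set.Icc 0 δ) := by
    intro s hs u hu hsu
    rw [hyφ s hs, hyφ u hu]
    rcases eq_or_lt_of_le hsu with h | h
    · rw [h]
    · exact (hφanti hs hu h).le
  have hanti2 : AntitoneOn y (Set.Icc δ t₀) := by
    apply antitoneOn_of_deriv_nonpos (convex_Icc δ t₀)
    · exact hyc.mono (fun s hs => by simp only [Set.mem_Ici]; linarith [hs.1])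
    · rw [interior_Icc]
      intro x hx
      exact ((hyderiv x (le_of_lt hx.1)).hasDerivAt (Ici_mem_nhds hx.1)).differentiableAt.differentiableWithinAt
    · rw [interior_Icc]
      intro x hx
      rw [((hyderiv x (le_of_lt hx.1)).hasDerivAt (Ici_mem_nhds hx.1)).deriv]
      have : 0 < y (x - δ) := hpos (x - δ) (by linarith [hx.1]) (by linarith [hx.2])
      exact neg_nonpos.mpr (mul_nonneg hc.le this.le)
  have hanti : AntitoneOn y (Set.Icc 0 t₀) := by
    intro s hs u hu hsu
    by_cases h1 : u ≤ δ
    · exact hanti1 ⟨hs.1, by linarith⟩ ⟨hu.1, h1⟩ hsu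
    · push_neg at h1
      by_cases h2 : δ ≤ s
      · exact hanti2 ⟨h2, hs.2⟩ ⟨h1.le, hu.2⟩ hsu
      · push_neg at h2
        calc y u ≤ y δ := hanti2 ⟨le_refl δ, ht₀δ⟩ ⟨h1.le, hu.2⟩ h1.le
          _ ≤ y s := hanti1 ⟨hs.1, h2.le⟩ ⟨hδ.le, le_refl δ⟩ h2.le
  -- y ≤ 1 on [0, t₀]
  have hub1 : ∀ s ∈ Set.Icc (0:ℝ) t₀, y s ≤ 1 := by
    intro s hs
    have := hanti (Set.mem_Icc.mpr ⟨le_refl 0, ht₀0⟩) hs hs.1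
    rw [hyφ 0 ⟨le_refl 0, hδ.le⟩, hφ0] at this
    exact this
  -- interval integrability of y
  have hyint : ∀ u v : ℝ, 0 ≤ u → 0 ≤ v → IntervalIntegrable y volume u v := by
    intro u v hu hv
    apply ContinuousOn.intervalIntegrable
    apply hyc.mono
    intro s hs
    rcases le_total u v with h | h
    · rw [Set.uIcc_of_le h] at hs; simp only [Set.mem_Ici]; linarith [hs.1]
    · rw [Set.uIcc_of_ge h] at hs; simp only [Set.mem_Ici]; linarith [hs.1]
  have hInt : ∀ u v : ℝ, δ ≤ u → u ≤ v →
      y v = y u - c * ∫ s in (u - δ)..(v - δ), y s :=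
    fun u v h1 h2 => dde_integral c δ hδ φ y ⟨hyc, hyφ, hyderiv⟩ h1 h2
  -- trapezoid bound from convexity
  have htrap : ∀ p : ℝ, δ ≤ p → p + δ ≤ t₀ →
      (∫ s in p..(p + δ), y s) ≤ δ * (y p + y (p + δ)) / 2 := by
    intro p hp hpδ
    set q := p + δ with hq
    have hpq : p < q := by rw [hq]; linarith
    have hconv : ConvexOn ℝ (Set.Icc p q) y := by
      apply MonotoneOn.convexOn_of_deriv (convex_Icc p q)
      · exact hyc.mono (fun s hs => by simp only [Set.mem_Ici]; linarith [hs.1])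
      · rw [interior_Icc]
        intro x hx
        have hxδ : δ < x := by linarith [hx.1]
        exact ((hyderiv x hxδ.le).hasDerivAt (Ici_mem_nhds hxδ)).differentiableAt.differentiableWithinAt
      · rw [interior_Icc]
        intro x hx z hz hxz
        have hxδ : δ < x := by linarith [hx.1]
        have hzδ : δ < z := by linarith [hz.1]
        rw [((hyderiv x hxδ.le).hasDerivAt (Ici_mem_nhds hxδ)).deriv,
          ((hyderiv z hzδ.le).hasDerivAt (Ici_mem_nhds hzδ)).deriv]
        have h1 : y (z - δ) ≤ y (x - δ) := by
          apply hanti ⟨by linarith, by linarith [hx.2]⟩ ⟨by linarith, by linarith [hz.2]⟩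
          linarith
        exact neg_le_neg (mul_le_mul_of_nonneg_left h1 hc.le)
    -- chord bound
    have hchord : ∀ s ∈ Set.Icc p q, y s ≤ ((q - s) * y p + (s - p) * y q) / δ := by
      intro s hs
      have hα : (0:ℝ) ≤ (q - s) / δ := by
        apply div_nonneg _ hδ.le; linarith [hs.2]
      have hβ : (0:ℝ) ≤ (s - p) / δ := by
        apply div_nonneg _ hδ.le; linarith [hs.1]
      have hsum : (q - s) / δ + (s - p) / δ = 1 := by
        field_simp; rw [hq]; ring
      have := hconv.2 (Set.left_mem_Icc.mpr hpq.le) (Set.right_mem_Icc.mpr hpq.le) hα hβ hsum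
      have hpt : (q - s) / δ * p + (s - p) / δ * q = s := by
        field_simp; rw [hq]; ring
      simp only [smul_eq_mul] at this
      rw [hpt] at this
      calc y s ≤ (q - s) / δ * y p + (s - p) / δ * y q := this
        _ = ((q - s) * y p + (s - p) * y q) / δ := by ring
    have hlin : (∫ s in p..q, ((q - s) * y p + (s - p) * y q) / δ) = δ * (y p + y q) / 2 := by
      have heq : ∀ s : ℝ, ((q - s) * y p + (s - p) * y q) / δ
          = (q * y p - p * y q) / δ + ((y q - y p) / δ) * s := by
        intro s; field_simp; ring
      rw [intervalIntegral.integral_congr (g := fun s => (q * y p - p * y q) / δ + ((y q - y p) / δ) * s) (fun s _ => heq s)]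
      rw [intervalIntegral.integral_add (intervalIntegrable_const)
        (intervalIntegral.intervalIntegrable_id.const_mul _)]
      rw [intervalIntegral.integral_const_mul, integral_id, intervalIntegral.integral_const]
      rw [hq]; simp only [smul_eq_mul]; field_simp
      ring
    calc (∫ s in p..q, y s) ≤ ∫ s in p..q, ((q - s) * y p + (s - p) * y q) / δ := by
          apply intervalIntegral.integral_mono_on hpq.le
          · exact hyint p q (by linarith) (by linarith)
          · apply ContinuousOn.intervalIntegrable
            apply Continuous.continuousOn
            exact (((continuous_const.sub continuous_id).mul continuous_const).add
              ((continuous_id.sub continuous_const).mul continuous_const)).div_const _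
          · exact hchord
      _ = δ * (y p + y q) / 2 := hlin
  -- grid recursion
  have hyδ : y δ = φ δ := hyφ δ ⟨hδ.le, le_refl δ⟩
  have hbase_bound : ∀ v : ℝ, δ ≤ v → v ≤ 2 * δ → φ δ - c * (v - δ) ≤ y v := by
    intro v h1 h2
    have h0 : (0:ℝ) ≤ v - δ := by linarith
    have hint_le : (∫ s in (0:ℝ)..(v - δ), y s) ≤ v - δ := by
      calc (∫ s in (0:ℝ)..(v - δ), y s) ≤ ∫ s in (0:ℝ)..(v - δ), (1:ℝ) := by
            apply intervalIntegral.integral_mono_on h0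
            · exact hyint 0 (v - δ) (le_refl 0) h0
            · exact intervalIntegrable_const
            · intro s hs
              rw [hyφ s ⟨hs.1, by linarith [hs.2]⟩, ← hφ0]
              rcases eq_or_lt_of_le hs.1 with h | h
              · rw [← h]
              · exact (hφanti ⟨le_refl 0, hδ.le⟩ ⟨hs.1, by linarith [hs.2]⟩ h).le
        _ = v - δ := by simp
    have hid := hInt δ v (le_refl δ) h1
    rw [sub_self] at hid
    rw [hid, hyδ]
    nlinarith
  -- the key one-step estimate: for δ ≤ p, p + δ ≤ t₀ < p + 2δ impossible... we derive
  -- the recursion on the grid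
  have hrec : ∀ p : ℝ, δ ≤ p → p + δ ≤ t₀ → ∀ v : ℝ, p + δ ≤ v → v ≤ p + 2 * δ → v ≤ t₀ →
      y (p + δ) - a * (y p + y (p + δ)) ≤ y v := by
    intro p hp hpt v hv1 hv2 hv3
    have hid := hInt (p + δ) v (by linarith) hv1
    have hsimp : p + δ - δ = p := by ring
    rw [hsimp] at hid
    have hsplit : (∫ s in p..(v - δ), y s) ≤ ∫ s in p..(p + δ), y s := by
      have hadj : (∫ s in p..(v - δ), y s) + (∫ s in (v - δ)..(p + δ), y s)
          = ∫ s in p..(p + δ), y s :=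
        intervalIntegral.integral_add_adjacent_intervals
          (hyint p (v - δ) (by linarith) (by linarith))
          (hyint (v - δ) (p + δ) (by linarith) (by linarith))
      have hnn : (0:ℝ) ≤ ∫ s in (v - δ)..(p + δ), y s := by
        apply intervalIntegral.integral_nonneg (by linarith)
        intro s hs
        exact hnn0 s (by linarith [hs.1]) (by linarith [hs.2])
      linarith
    have htr := htrap p hp hpt
    rw [hid]
    have hmul : c * (∫ s in p..(v - δ), y s) ≤ c * (δ * (y p + y (p + δ)) / 2) := by
      apply mul_le_mul_of_nonneg_left _ hc.le
      exact le_trans hsplit htr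
    have he : c * (δ * (y p + y (p + δ)) / 2) = a * (y p + y (p + δ)) := by
      linear_combination (y p + y (p + δ)) / 2 * hcδa
    linarith
  -- induction along the grid
  have hstep : ∀ x z : ℝ, 0 < z → lam2 * z ≤ x → x - a * (z + x) ≥ lam2 * x := by
    intro x z hz hx
    have h1 : (1 - a - lam2) * (lam2 * z) ≤ (1 - a - lam2) * x :=
      mul_le_mul_of_nonneg_left hx h1al.le
    have h2 : (1 - a - lam2) * (lam2 * z) = a * z := by linear_combination z * hfact
    have h3 : (1 - a - lam2) * x = x - a * x - lam2 * x := by ring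
    have h4 : a * (z + x) = a * z + a * x := by ring
    linarith
  have hA : ∀ n : ℕ, ((n:ℝ) + 2) * δ ≤ t₀ →
      lam2 * y (((n:ℝ) + 1) * δ) ≤ y (((n:ℝ) + 2) * δ) := by
    intro n
    induction n with
    | zero =>
      intro h
      simp only [Nat.cast_zero, zero_add, one_mul] at h ⊢
      have hb := hbase_bound (2 * δ) (by linarith) (le_refl _)
      have he : c * (2 * δ - δ) = 2 * a := by linear_combination hcδa
      rw [hyδ]
      have hx : (1 - lam2) * φ δ = φ δ - lam2 * φ δ := by ring
      linarith [hb, he, hcond', hx]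
    | succ m ih =>
      intro h
      push_cast at h ⊢
      have hδle : ((m:ℝ) + 2) * δ ≤ t₀ := by linarith
      have hih := ih hδle
      set p : ℝ := ((m:ℝ) + 1) * δ with hpdef
      have hp1 : δ ≤ p := by rw [hpdef]; nlinarith [mul_nonneg (Nat.cast_nonneg m : (0:ℝ) ≤ (m:ℝ)) hδ.le]
      have hppδ : p + δ = ((m:ℝ) + 2) * δ := by rw [hpdef]; ring
      have hzpos : 0 < y p := hpos p (by linarith) (by rw [hpdef]; linarith)
      have hr := hrec p hp1 (by rw [hppδ]; exact hδle) (((m:ℝ) + 1 + 2) * δ)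
        (by rw [hppδ]; linarith) (by rw [hpdef]; linarith) (by linarith)
      have hst := hstep (y (p + δ)) (y p) hzpos (by rw [hppδ]; exact hih)
      have he1 : ((m:ℝ) + 1 + 1) * δ = p + δ := by rw [hpdef]; ring
      have he2 : ((m:ℝ) + 1 + 2) * δ = ((m:ℝ) + 1 + 2) * δ := rfl
      rw [he1]
      calc lam2 * y (p + δ) ≤ y (p + δ) - a * (y p + y (p + δ)) := hst
        _ ≤ y (((m:ℝ) + 1 + 2) * δ) := hr
  -- final contradiction
  obtain ⟨n, hnge1, hn1, hn2⟩ : ∃ n : ℕ, 1 ≤ n ∧ (n:ℝ) * δ ≤ t₀ ∧ t₀ < ((n:ℝ) + 1) * δ := by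
    refine ⟨⌊t₀ / δ⌋₊, ?_, ?_, ?_⟩
    · apply Nat.le_floor
      rw [Nat.cast_one, le_div_iff₀ hδ]
      linarith
    · calc (⌊t₀ / δ⌋₊:ℝ) * δ ≤ (t₀ / δ) * δ := by
            apply mul_le_mul_of_nonneg_right _ hδ.le
            exact Nat.floor_le (by positivity)
        _ = t₀ := by field_simp
    · calc t₀ = (t₀ / δ) * δ := by field_simp
        _ < ((⌊t₀ / δ⌋₊:ℝ) + 1) * δ := by
            apply mul_lt_mul_of_pos_right _ hδ
            exact Nat.lt_floor_add_one (t₀ / δ)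
  rcases eq_or_lt_of_le hnge1 with h | h
  · -- n = 1 : δ < t₀ ≤ 2δ
    have ht₀2δ : t₀ < 2 * δ := by
      rw [← h] at hn2; push_cast at hn2; linarith
    have hb := hbase_bound t₀ ht₀δ (by linarith)
    rw [hyt₀0] at hb
    have hcle : c * (t₀ - δ) ≤ 2 * a := by
      rw [← hcδa]
      exact mul_le_mul_of_nonneg_left (by linarith) hc.le
    have hx : (1 - lam2) * φ δ = φ δ - lam2 * φ δ := by ring
    linarith [hb, hcle, hcond', hx, mul_pos hlam2pos hφδ]
  · -- n ≥ 2
    have hn2' : 2 ≤ n := h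
    obtain ⟨m, rfl⟩ : ∃ m : ℕ, n = m + 2 := ⟨n - 2, by omega⟩
    have hcast : ((m + 2 : ℕ) : ℝ) = (m:ℝ) + 2 := by push_cast; ring
    rw [hcast] at hn1 hn2
    have hAm := hA m hn1
    have hm1pos : 0 < y (((m:ℝ) + 1) * δ) := by
      apply hpos _ (by positivity)
      linarith
    rcases eq_or_lt_of_le hn1 with heq | hlt
    · -- t₀ = (m+2)δ
      rw [heq, hyt₀0] at hAm
      linarith [mul_pos hlam2pos hm1pos]
    · -- (m+2)δ < t₀
      set p : ℝ := ((m:ℝ) + 1) * δ with hpdef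
      have hppδ : p + δ = ((m:ℝ) + 2) * δ := by rw [hpdef]; ring
      have hxpos : 0 < y (p + δ) := by
        rw [hppδ]; exact hpos _ (by positivity) hlt
      have hmδ : 0 ≤ (m:ℝ) * δ := mul_nonneg (Nat.cast_nonneg m) hδ.le
      have harg1 : δ ≤ p := by rw [hpdef]; linarith
      have harg2 : t₀ ≤ p + 2 * δ := by rw [hpdef]; linarith
      have hr := hrec p harg1 (by rw [hppδ]; exact hn1) t₀ (by rw [hppδ]; exact hlt.le) harg2 (le_refl _)
      have hst := hstep (y (p + δ)) (y p) hm1pos (by rw [hppδ]; exact hAm)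
      rw [hyt₀0] at hr
      linarith [hst, mul_pos hlam2pos hxpos]
end

section
/- Fix c > 0 and δ > 0 with cδ ≤ 1/e. Let ψ be a positive integrable function on [0,δ] with ∫₀^δ ψ(t) dt = 1, and define φ(t) = 1 − c·∫₀^t ∫₀^s ψ(u) du ds for t ∈ [0,δ]. Then φ ∈ Φ, and the solution y of the delay initial value problem with initial function φ satisfies y(t) > 0 for all t ≥ 0. -/
open MeasureTheory Set

/-- If `ψ` is positive and integrable on `[0, δ]` with `∫₀^δ ψ = 1`, then
`φ(t) = 1 - c ∫₀^t ∫₀^s ψ(u) du ds` belongs to `Φ` and the solution of the delay IVP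
with initial function `φ` is positive. -/
theorem stmt14 (c δ : ℝ) (hc : 0 < c) (hδ : 0 < δ) (hcδ : c * δ ≤ 1 / Real.exp 1)
    (ψ : ℝ → ℝ) (hψpos : ∀ t ∈ Set.Icc (0:ℝ) δ, 0 < ψ t)
    (hψint : IntervalIntegrable ψ MeasureTheory.volume 0 δ)
    (hψ1 : (∫ t in (0:ℝ)..δ, ψ t) = 1)
    (φ : ℝ → ℝ)
    (hφdef : ∀ t ∈ Set.Icc (0:ℝ) δ, φ t = 1 - c * ∫ s in (0:ℝ)..t, (∫ u in (0:ℝ)..s, ψ u)) :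
    MemPhi δ φ ∧ ∀ y : ℝ → ℝ, IsSolDDE c δ φ y → ∀ t : ℝ, 0 ≤ t → 0 < y t := by
  have hδ' : δ ≠ 0 := ne_of_gt hδ
  have hepos : (0:ℝ) < Real.exp 1 := Real.exp_pos 1
  have h2e : (2:ℝ) < Real.exp 1 := by
    have := Real.exp_one_gt_d9; nlinarith
  have hcδ1 : c * δ * Real.exp 1 ≤ 1 := by
    rw [div_eq_inv_mul, mul_one] at hcδ
    calc c * δ * Real.exp 1 ≤ (Real.exp 1)⁻¹ * Real.exp 1 := by nlinarith
    _ = 1 := by field_simp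
  have h2cδ : 2 * (c * δ) < 1 := by nlinarith
  have hce : c * Real.exp 1 ≤ 1 / δ := by
    rw [le_div_iff₀ hδ]; nlinarith
  -- the inner primitive
  set Ψ : ℝ → ℝ := fun t => ∫ u in (0:ℝ)..t, ψ u with hΨdef
  have hmem : ∀ a : ℝ, 0 ≤ a → a ≤ δ → a ∈ uIcc (0:ℝ) δ := by
    intro a h1 h2; rw [uIcc_of_le hδ.le]; exact ⟨h1, h2⟩
  have hψsub : ∀ a b : ℝ, 0 ≤ a → a ≤ δ → 0 ≤ b → b ≤ δ →
      IntervalIntegrable ψ volume a b := by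
    intro a b h1 h2 h3 h4
    exact hψint.mono_set (uIcc_subset_uIcc (hmem a h1 h2) (hmem b h3 h4))
  have hψIcc : IntegrableOn ψ (Icc 0 δ) volume :=
    (intervalIntegrable_iff_integrableOn_Icc_of_le hδ.le).mp hψint
  have hΨcont : ContinuousOn Ψ (Icc 0 δ) := by
    have := intervalIntegral.continuousOn_primitive_interval
      (f := ψ) (a := (0:ℝ)) (b := δ) (μ := volume) (by rwa [uIcc_of_le hδ.le])
    rwa [uIcc_of_le hδ.le] at this
  have hΨnonneg : ∀ t ∈ Icc (0:ℝ) δ, 0 ≤ Ψ t := by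
    intro t ht
    exact intervalIntegral.integral_nonneg ht.1
      (fun u hu => (hψpos u ⟨hu.1, hu.2.trans ht.2⟩).le)
  have hΨpos : ∀ t : ℝ, 0 < t → t ≤ δ → 0 < Ψ t := by
    intro t h1 h2
    exact intervalIntegral.intervalIntegral_pos_of_pos_on (hψsub 0 t le_rfl hδ.le h1.le h2)
      (fun x hx => hψpos x ⟨hx.1.le, hx.2.le.trans h2⟩) h1
  have hΨle1 : ∀ t ∈ Icc (0:ℝ) δ, Ψ t ≤ 1 := by
    intro t ht
    have hsplit : Ψ t + (∫ u in t..δ, ψ u) = 1 := by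
      rw [intervalIntegral.integral_add_adjacent_intervals
        (hψsub 0 t le_rfl hδ.le ht.1 ht.2) (hψsub t δ ht.1 ht.2 hδ.le le_rfl)]
      exact hψ1
    have hnn : 0 ≤ ∫ u in t..δ, ψ u :=
      intervalIntegral.integral_nonneg ht.2
        (fun u hu => (hψpos u ⟨ht.1.trans hu.1, hu.2⟩).le)
    linarith
  have hΨsub : ∀ a b : ℝ, 0 ≤ a → a ≤ δ → 0 ≤ b → b ≤ δ →
      IntervalIntegrable Ψ volume a b := by
    intro a b h1 h2 h3 h4
    apply ContinuousOn.intervalIntegrable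
    apply hΨcont.mono
    rw [← uIcc_of_le hδ.le]
    exact uIcc_subset_uIcc (hmem a h1 h2) (hmem b h3 h4)
  -- bound on the double primitive
  have hIntΨ_le : ∀ t : ℝ, 0 ≤ t → t ≤ δ → (∫ s in (0:ℝ)..t, Ψ s) ≤ t := by
    intro t h1 h2
    have := intervalIntegral.integral_mono_on (μ := volume) (f := Ψ) (g := fun _ => (1:ℝ))
      h1 (hΨsub 0 t le_rfl hδ.le h1 h2) intervalIntegrable_const
      (fun x hx => hΨle1 x ⟨hx.1, hx.2.trans h2⟩)
    simpa using this
  have hIntΨ_nonneg : ∀ t : ℝ, 0 ≤ t → t ≤ δ → 0 ≤ ∫ s in (0:ℝ)..t, Ψ s := by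
    intro t h1 h2
    exact intervalIntegral.integral_nonneg h1 (fun x hx => hΨnonneg x ⟨hx.1, hx.2.trans h2⟩)
  -- MemPhi
  have hφ0 : φ 0 = 1 := by
    rw [hφdef 0 ⟨le_rfl, hδ.le⟩]; simp
  have hφcont : ContinuousOn φ (Icc 0 δ) := by
    have hF : ContinuousOn (fun t : ℝ => 1 - c * ∫ s in (0:ℝ)..t, Ψ s) (Icc 0 δ) := by
      apply continuousOn_const.sub
      apply continuousOn_const.mul
      have hΨInt : IntegrableOn Ψ (uIcc (0:ℝ) δ) volume := by
        rw [uIcc_of_le hδ.le]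
        exact hΨcont.integrableOn_Icc
      have := intervalIntegral.continuousOn_primitive_interval (f := Ψ) (a := (0:ℝ)) (b := δ)
        (μ := volume) hΨInt
      rwa [uIcc_of_le hδ.le] at this
    exact hF.congr (fun t ht => hφdef t ht)
  have hφanti : StrictAntiOn φ (Icc 0 δ) := by
    intro a ha b hb hab
    have hsplit : (∫ s in (0:ℝ)..b, Ψ s) = (∫ s in (0:ℝ)..a, Ψ s) + ∫ s in a..b, Ψ s :=
      (intervalIntegral.integral_add_adjacent_intervals
        (hΨsub 0 a le_rfl hδ.le ha.1 ha.2) (hΨsub a b ha.1 ha.2 hb.1 hb.2)).symm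
    have hpos : 0 < ∫ s in a..b, Ψ s :=
      intervalIntegral.intervalIntegral_pos_of_pos_on (hΨsub a b ha.1 ha.2 hb.1 hb.2)
        (fun x hx => hΨpos x (lt_of_le_of_lt ha.1 hx.1) (hx.2.le.trans hb.2)) hab
    rw [hφdef a ha, hφdef b hb]
    have : 0 < c * ∫ s in a..b, Ψ s := mul_pos hc hpos
    simp only [hΨdef] at hsplit ⊢
    rw [hsplit]
    nlinarith
  have hφδ : 0 < φ δ := by
    rw [hφdef δ ⟨hδ.le, le_rfl⟩]
    have h1 := hIntΨ_le δ hδ.le le_rfl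
    simp only [hΨdef] at h1 ⊢
    nlinarith
  refine ⟨⟨hφcont, hφanti, hφ0, hφδ⟩, ?_⟩
  -- the main positivity statement
  intro y hy t ht
  obtain ⟨hycont, hyφ, hyder⟩ := hy
  set g : ℝ → ℝ := fun t => y t * Real.exp (t / δ) with hgdef
  have hg0 : g 0 = 1 := by
    simp only [hgdef, zero_div, Real.exp_zero, mul_one]
    rw [hyφ 0 ⟨le_rfl, hδ.le⟩, hφ0]
  have hgcont : ContinuousOn g (Ici 0) :=
    hycont.mul ((Real.continuous_exp.comp (continuous_id.div_const δ)).continuousOn)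
  have hEderiv : ∀ u : ℝ, HasDerivAt (fun s : ℝ => Real.exp (s / δ)) (Real.exp (u / δ) / δ) u := by
    intro u
    have h1 : HasDerivAt (fun s : ℝ => s / δ) (1 / δ) u := (hasDerivAt_id u).div_const δ
    have := (Real.hasDerivAt_exp (u / δ)).comp u h1
    have := h1.exp; rw [mul_one_div] at this; exact this
  have hE'deriv : ∀ u : ℝ,
      HasDerivAt (fun s : ℝ => Real.exp (-(s / δ))) (-(Real.exp (-(u / δ)) / δ)) u := by
    intro u
    have h1 : HasDerivAt (fun s : ℝ => -(s / δ)) (-(1 / δ)) u := ((hasDerivAt_id u).div_const δ).neg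
    have := (Real.hasDerivAt_exp (-(u / δ))).comp u h1
    have := h1.exp; rw [mul_neg, mul_one_div] at this; exact this
  have hexpshift : ∀ u : ℝ, Real.exp (u / δ) = Real.exp ((u - δ) / δ) * Real.exp 1 := by
    intro u
    rw [← Real.exp_add]
    congr 1
    field_simp
    ring
  -- base case: g is monotone on [0, δ]
  have base : MonotoneOn g (Icc 0 δ) := by
    have hder : ∀ u ∈ Ioo (0:ℝ) δ,
        HasDerivAt g (-(c * Ψ u) * Real.exp (u / δ) +
          (1 - c * ∫ s in (0:ℝ)..u, Ψ s) * (Real.exp (u / δ) / δ)) u := by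
      intro u hu
      have hmeas : StronglyMeasurableAtFilter Ψ (nhds u) volume :=
        (hΨcont.mono Ioo_subset_Icc_self).stronglyMeasurableAtFilter isOpen_Ioo u hu
      have hcontat : ContinuousAt Ψ u := hΨcont.continuousAt (Icc_mem_nhds hu.1 hu.2)
      have hFint : HasDerivAt (fun s : ℝ => ∫ x in (0:ℝ)..s, Ψ x) (Ψ u) u :=
        intervalIntegral.integral_hasDerivAt_right
          (hΨsub 0 u le_rfl hδ.le hu.1.le hu.2.le) hmeas hcontat
      have hFd : HasDerivAt (fun s : ℝ => 1 - c * ∫ x in (0:ℝ)..s, Ψ x) (-(c * Ψ u)) u := by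
        simpa using ((hFint.const_mul c).const_sub 1)
      have hprod := hFd.mul (hEderiv u)
      apply hprod.congr_of_eventuallyEq
      filter_upwards [Icc_mem_nhds hu.1 hu.2] with s hs
      simp only [hgdef]
      rw [hyφ s hs, hφdef s hs]
      rfl
    apply monotoneOn_of_deriv_nonneg (convex_Icc 0 δ)
      (hgcont.mono (Icc_subset_Ici_self))
    · intro u hu
      rw [interior_Icc] at hu
      exact (hder u hu).differentiableAt.differentiableWithinAt
    · intro u hu
      rw [interior_Icc] at hu
      rw [(hder u hu).deriv]
      have h1 : Ψ u ≤ 1 := hΨle1 u ⟨hu.1.le, hu.2.le⟩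
      have h2 : 0 ≤ Ψ u := hΨnonneg u ⟨hu.1.le, hu.2.le⟩
      have h3 : (∫ s in (0:ℝ)..u, Ψ s) ≤ u := hIntΨ_le u hu.1.le hu.2.le
      have h4 : 0 ≤ ∫ s in (0:ℝ)..u, Ψ s := hIntΨ_nonneg u hu.1.le hu.2.le
      have h5 : (0:ℝ) < Real.exp (u / δ) := Real.exp_pos _
      have h6 : u ≤ δ := hu.2.le
      have h7 : 0 ≤ 1 - c * (∫ s in (0:ℝ)..u, Ψ s) - c * δ * Ψ u := by nlinarith
      have hred : -(c * Ψ u) * Real.exp (u / δ) +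
          (1 - c * ∫ s in (0:ℝ)..u, Ψ s) * (Real.exp (u / δ) / δ) =
          (1 - c * (∫ s in (0:ℝ)..u, Ψ s) - c * δ * Ψ u) * Real.exp (u / δ) / δ := by
        field_simp
        ring
      rw [hred]
      positivity
  -- inductive step
  have key : ∀ D : ℝ, δ ≤ D → MonotoneOn g (Icc 0 D) → MonotoneOn g (Icc 0 (D + δ)) := by
    intro D hD hmono
    have hD0 : (0:ℝ) ≤ D := hδ.le.trans hD
    have hyd : ∀ u : ℝ, δ < u → HasDerivAt y (-(c * y (u - δ))) u := fun u hu =>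
      (hyder u hu.le).hasDerivAt (Ici_mem_nhds hu)
    have hgd : ∀ u : ℝ, δ < u → HasDerivAt g
        (-(c * y (u - δ)) * Real.exp (u / δ) + y u * (Real.exp (u / δ) / δ)) u := by
      intro u hu
      exact (hyd u hu).mul (hEderiv u)
    have hg1 : ∀ s ∈ Icc (0:ℝ) D, 1 ≤ g s := by
      intro s hs
      have := hmono ⟨le_rfl, hD0⟩ hs hs.1
      rwa [hg0] at this
    have hgval : ∀ u : ℝ, y (u - δ) * Real.exp (u / δ) = Real.exp 1 * g (u - δ) := by
      intro u
      simp only [hgdef]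
      rw [hexpshift u]
      ring
    -- substep 1: g ≥ g D on [D, D + δ]
    have hge : ∀ u ∈ Icc D (D + δ), g D ≤ g u := by
      set h : ℝ → ℝ := fun s => (g s - g D) * Real.exp (-(s / δ)) with hhdef
      have hhder : ∀ u ∈ Ioo D (D + δ), HasDerivAt h
          ((-(c * y (u - δ)) * Real.exp (u / δ) + y u * (Real.exp (u / δ) / δ)) *
            Real.exp (-(u / δ)) + (g u - g D) * (-(Real.exp (-(u / δ)) / δ))) u := by
        intro u hu
        have hδu : δ < u := lt_of_le_of_lt hD hu.1
        exact ((hgd u hδu).sub_const (g D)).mul (hE'deriv u)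
      have hmonoh : MonotoneOn h (Icc D (D + δ)) := by
        apply monotoneOn_of_deriv_nonneg (convex_Icc D (D + δ))
        · apply ContinuousOn.mul
          · exact ((hgcont.mono (fun x hx => hD0.trans hx.1)).sub continuousOn_const)
          · exact (Real.continuous_exp.comp ((continuous_id.div_const δ).neg)).continuousOn
        · intro u hu
          rw [interior_Icc] at hu
          exact (hhder u hu).differentiableAt.differentiableWithinAt
        · intro u hu
          rw [interior_Icc] at hu
          rw [(hhder u hu).deriv]
          have hδu : δ < u := lt_of_le_of_lt hD hu.1
          have huδmem : u - δ ∈ Icc (0:ℝ) D := ⟨by linarith, by linarith [hu.2]⟩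
          have h1 : 1 ≤ g (u - δ) := hg1 _ huδmem
          have h2 : g (u - δ) ≤ g D := hmono huδmem ⟨hD0, le_rfl⟩ huδmem.2
          have hE1 : Real.exp (u / δ) * Real.exp (-(u / δ)) = 1 := by
            rw [← Real.exp_add]; simp
          have hEpos : (0:ℝ) < Real.exp (u / δ) := Real.exp_pos _
          have hE'pos : (0:ℝ) < Real.exp (-(u / δ)) := Real.exp_pos _
          have hyg : y (u - δ) * Real.exp (u / δ) = Real.exp 1 * g (u - δ) := hgval u
          have hgu : g u = y u * Real.exp (u / δ) := rfl
          -- the inequality: c * e * g(u-δ) ≤ g D / δ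
          have hkey : c * Real.exp 1 * g (u - δ) ≤ g D / δ := by
            have s1 : c * Real.exp 1 * g (u - δ) ≤ (1 / δ) * g (u - δ) := by
              apply mul_le_mul_of_nonneg_right hce (by linarith)
            have s2 : (1 / δ) * g (u - δ) ≤ (1 / δ) * g D := by
              apply mul_le_mul_of_nonneg_left h2 (by positivity)
            calc c * Real.exp 1 * g (u - δ) ≤ (1 / δ) * g D := s1.trans s2
            _ = g D / δ := by ring
          -- reduce the derivative to  (g D / δ - c e g(u-δ)) * exp(-(u/δ))
          have hred : (-(c * y (u - δ)) * Real.exp (u / δ) + y u * (Real.exp (u / δ) / δ)) *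
              Real.exp (-(u / δ)) + (g u - g D) * (-(Real.exp (-(u / δ)) / δ)) =
              (g D / δ - c * Real.exp 1 * g (u - δ)) * Real.exp (-(u / δ)) := by
            rw [hgu]
            have : y (u - δ) = Real.exp 1 * g (u - δ) / Real.exp (u / δ) := by
              field_simp [hyg]
              exact hyg
            rw [this]
            field_simp
            ring
          rw [hred]
          have : 0 ≤ g D / δ - c * Real.exp 1 * g (u - δ) := by linarith
          positivity
      intro u hu
      have := hmonoh ⟨le_rfl, by linarith [hδ.le]⟩ hu hu.1
      have hhD : h D = 0 := by simp [hhdef]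
      rw [hhD] at this
      simp only [hhdef] at this
      have hE'pos : (0:ℝ) < Real.exp (-(u / δ)) := Real.exp_pos _
      nlinarith
    -- substep 2: g monotone on [D, D + δ]
    have hmono2 : MonotoneOn g (Icc D (D + δ)) := by
      apply monotoneOn_of_deriv_nonneg (convex_Icc D (D + δ))
        (hgcont.mono (fun x hx => hD0.trans hx.1))
      · intro u hu
        rw [interior_Icc] at hu
        exact (hgd u (lt_of_le_of_lt hD hu.1)).differentiableAt.differentiableWithinAt
      · intro u hu
        rw [interior_Icc] at hu
        have hδu : δ < u := lt_of_le_of_lt hD hu.1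
        rw [(hgd u hδu).deriv]
        have huδmem : u - δ ∈ Icc (0:ℝ) D := ⟨by linarith, by linarith [hu.2]⟩
        have h1 : 1 ≤ g (u - δ) := hg1 _ huδmem
        have h2 : g (u - δ) ≤ g D := hmono huδmem ⟨hD0, le_rfl⟩ huδmem.2
        have h3 : g D ≤ g u := hge u ⟨hu.1.le, hu.2.le⟩
        have hyg : y (u - δ) * Real.exp (u / δ) = Real.exp 1 * g (u - δ) := hgval u
        have hgu : g u = y u * Real.exp (u / δ) := rfl
        have hkey : c * Real.exp 1 * g (u - δ) ≤ g u / δ := by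
          have s1 : c * Real.exp 1 * g (u - δ) ≤ (1 / δ) * g (u - δ) :=
            mul_le_mul_of_nonneg_right hce (by linarith)
          have s2 : (1 / δ) * g (u - δ) ≤ (1 / δ) * g u := by
            apply mul_le_mul_of_nonneg_left (by linarith) (by positivity)
          calc c * Real.exp 1 * g (u - δ) ≤ (1 / δ) * g u := s1.trans s2
          _ = g u / δ := by ring
        have hred : -(c * y (u - δ)) * Real.exp (u / δ) + y u * (Real.exp (u / δ) / δ) =
            g u / δ - c * (y (u - δ) * Real.exp (u / δ)) := by
          rw [hgu]; ring
        rw [hred, hyg]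
        nlinarith [hkey]
    -- glue
    intro a ha b hb hab
    rcases le_total b D with hbD | hbD
    · exact hmono ⟨ha.1, hab.trans hbD⟩ ⟨hb.1, hbD⟩ hab
    rcases le_total a D with haD | haD
    · calc g a ≤ g D := hmono ⟨ha.1, haD⟩ ⟨hD0, le_rfl⟩ haD
      _ ≤ g b := hmono2 ⟨le_rfl, by linarith [hδ.le]⟩ ⟨hbD, hb.2⟩ hbD
    · exact hmono2 ⟨haD, ha.2⟩ ⟨hbD, hb.2⟩ hab
  -- iterate
  have main : ∀ n : ℕ, MonotoneOn g (Icc 0 (δ + n * δ)) := by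
    intro n
    induction n with
    | zero => simpa using base
    | succ n ih =>
      have h1 : δ ≤ δ + n * δ := by
        have : (0:ℝ) ≤ n * δ := by positivity
        linarith
      have := key (δ + n * δ) h1 ih
      have h2 : δ + ((n:ℝ) + 1) * δ = δ + n * δ + δ := by ring
      rw [Nat.cast_succ, h2]
      exact this
  -- conclude
  obtain ⟨n, hn⟩ := exists_nat_ge (t / δ)
  have htn : t ≤ δ + n * δ := by
    rw [div_le_iff₀ hδ] at hn
    nlinarith
  have hδn : (0:ℝ) ≤ δ + n * δ := by positivity
  have hgt : 1 ≤ g t := by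
    have := main n ⟨le_rfl, hδn⟩ ⟨ht, htn⟩ ht
    rwa [hg0] at this
  have hEpos : (0:ℝ) < Real.exp (t / δ) := Real.exp_pos _
  have : (1:ℝ) ≤ y t * Real.exp (t / δ) := hgt
  nlinarith
end

section
/- Fix c > 0 and δ > 0 with cδ ≤ 1/e, set a = cδ/2 and suppose a < 3 − 2√2, and let D = (1−a)² − 4a, λ₂ = (1 − a − √D)/2. Let F be a continuous cdf with supp(F) = [0,∞) solving P_{c,δ}, G = 1 − F, and let φ be the restriction of G to [0,δ]; assume φ(δ) > 2a((1−λ₂)I₁ − 2a·I₂)/(1 − λ₂ − 2a). Define a₀ = G(2δ) = φ(δ) − 2a·I₁ > 0, a₁ = G(3δ) = (1−2a)φ(δ) − 2a(I₁ − 2a·I₂), and a_n = (1−a)a_{n−1} − a·a_{n−2} for n ≥ 2. Then a_n ≤ G((n+2)δ) ≤ a₁·(1−2a)^{n−1} for all n ≥ 2. -/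
open MeasureTheory Set

set_option maxHeartbeats 1000000 in
/-- Bounds on a solution `F ∈ P_{c,δ}`: with `a₀ = G(2δ) = φ(δ) - 2a I₁ > 0`,
`a₁ = G(3δ) = (1-2a)φ(δ) - 2a(I₁ - 2a I₂)` and `a_n = (1-a)a_{n-1} - a a_{n-2}`,
one has `a_n ≤ G((n+2)δ) ≤ a₁ (1-2a)^{n-1}` for all `n ≥ 2`. -/
theorem stmt15 (c δ : ℝ) (hc : 0 < c) (hδ : 0 < δ) (hcδ : c * δ ≤ 1 / Real.exp 1)
    (a : ℝ) (ha : a = c * δ / 2) (ha2 : a < 3 - 2 * Real.sqrt 2)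
    (D lam2 : ℝ) (hD : D = (1 - a) ^ 2 - 4 * a) (hlam2 : lam2 = (1 - a - Real.sqrt D) / 2)
    (μ : Measure ℝ) (hμ : IsProbabilityMeasure μ)
    (hint : Integrable (fun x : ℝ => x) μ)
    (hcont : ∀ x : ℝ, μ {x} = 0) (hsupp : suppF μ = Set.Ici 0)
    (hsol : ∀ x : ℝ, 0 ≤ x → survG μ (x + δ) = c * ∫ t in Set.Ioi x, survG μ t)
    (I₁ I₂ : ℝ)
    (hI₁ : I₁ = (1 / δ) * ∫ t in (0:ℝ)..δ, survG μ t)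
    (hI₂ : I₂ = (1 / δ ^ 2) * ∫ t in (0:ℝ)..δ, (∫ s in (0:ℝ)..t, survG μ s))
    (hcond : 2 * a * ((1 - lam2) * I₁ - 2 * a * I₂) / (1 - lam2 - 2 * a) < survG μ δ)
    (seq : ℕ → ℝ) (hseq0 : seq 0 = survG μ (2 * δ)) (hseq1 : seq 1 = survG μ (3 * δ))
    (hrec : ∀ n : ℕ, seq (n + 2) = (1 - a) * seq (n + 1) - a * seq n) :
    (seq 0 = survG μ δ - 2 * a * I₁ ∧ 0 < seq 0) ∧
    seq 1 = (1 - 2 * a) * survG μ δ - 2 * a * (I₁ - 2 * a * I₂) ∧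
    ∀ n : ℕ, 2 ≤ n →
      seq n ≤ survG μ (((n : ℝ) + 2) * δ) ∧
      survG μ (((n : ℝ) + 2) * δ) ≤ seq 1 * (1 - 2 * a) ^ (n - 1) := by
  have hμIoi : ∀ x : ℝ, μ (Set.Ioi x) ≠ ⊤ := fun x => measure_ne_top μ _
  have hGanti : Antitone (survG μ) := fun x y hxy =>
    (ENNReal.toReal_le_toReal (hμIoi y) (hμIoi x)).mpr (measure_mono (Ioi_subset_Ioi hxy))
  have hGpos : ∀ y : ℝ, 0 < survG μ y := by
    intro y
    have hz : (max y 0 + 2) ∈ suppF μ := by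
      rw [hsupp]
      exact mem_Ici.2 (by have := le_max_right y 0; linarith)
    have h1 : 0 < μ (Set.Ioo (max y 0 + 2 - 1) (max y 0 + 2 + 1)) := hz 1 one_pos
    have h2 : μ (Set.Ioo (max y 0 + 2 - 1) (max y 0 + 2 + 1)) ≤ μ (Set.Ioi y) := by
      apply measure_mono
      intro t ht
      have h := ht.1
      have hy := le_max_left y 0
      exact mem_Ioi.2 (by linarith)
    exact ENNReal.toReal_pos (lt_of_lt_of_le h1 h2).ne' (hμIoi y)
  have hIntIoi : ∀ x : ℝ, 0 ≤ x → IntegrableOn (survG μ) (Set.Ioi x) := by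
    intro x hx
    by_contra h
    have h1 := hsol x hx
    rw [MeasureTheory.integral_undef h] at h1
    have h2 := hGpos (x + δ)
    rw [h1] at h2
    simp at h2
  have key : ∀ x y : ℝ, 0 ≤ x → x ≤ y →
      survG μ (x + δ) - survG μ (y + δ) = c * ∫ t in Set.Ioc x y, survG μ t := by
    intro x y hx hxy
    have h1 := hsol x hx
    have h2 := hsol y (hx.trans hxy)
    have hsplit : ∫ t in Set.Ioi x, survG μ t
        = (∫ t in Set.Ioc x y, survG μ t) + ∫ t in Set.Ioi y, survG μ t := by
      rw [← Set.Ioc_union_Ioi_eq_Ioi hxy]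
      exact MeasureTheory.setIntegral_union (Set.Ioc_disjoint_Ioi le_rfl) measurableSet_Ioi
        ((hIntIoi x hx).mono_set Set.Ioc_subset_Ioi_self) (hIntIoi y (hx.trans hxy))
    rw [h1, h2, hsplit]; ring
  have hIntIoc : ∀ x y : ℝ, 0 ≤ x → IntegrableOn (survG μ) (Set.Ioc x y) :=
    fun x y hx => (hIntIoi x hx).mono_set Set.Ioc_subset_Ioi_self
  have intUb : ∀ x y : ℝ, 0 ≤ x → x ≤ y →
      ∫ t in Set.Ioc x y, survG μ t ≤ (y - x) * survG μ x := by
    intro x y hx hxy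
    have h : ∫ t in Set.Ioc x y, survG μ t ≤ ∫ _t in Set.Ioc x y, survG μ x :=
      setIntegral_mono_on (hIntIoc x y hx)
        (integrableOn_const (by rw [Real.volume_Ioc]; exact ENNReal.ofReal_ne_top))
        measurableSet_Ioc (fun t ht => hGanti ht.1.le)
    rwa [MeasureTheory.setIntegral_const, Real.volume_real_Ioc_of_le hxy,
      smul_eq_mul] at h
  have intLb : ∀ x y : ℝ, 0 ≤ x → x ≤ y →
      (y - x) * survG μ y ≤ ∫ t in Set.Ioc x y, survG μ t := by
    intro x y hx hxy
    have h : ∫ _t in Set.Ioc x y, survG μ y ≤ ∫ t in Set.Ioc x y, survG μ t :=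
      setIntegral_mono_on
        (integrableOn_const (by rw [Real.volume_Ioc]; exact ENNReal.ofReal_ne_top))
        (hIntIoc x y hx) measurableSet_Ioc (fun t ht => hGanti ht.2)
    rwa [MeasureTheory.setIntegral_const, Real.volume_real_Ioc_of_le hxy,
      smul_eq_mul] at h
  have hconv : ConvexOn ℝ (Set.Ici δ) (survG μ) := by
    apply convexOn_of_slope_mono_adjacent (convex_Ici δ)
    intro x y z hx hz hxy hyz
    have hxδ : (0:ℝ) ≤ x - δ := by have := mem_Ici.1 hx; linarith
    have e1 : survG μ x - survG μ y = c * ∫ t in Set.Ioc (x - δ) (y - δ), survG μ t := by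
      have h := key (x - δ) (y - δ) hxδ (by linarith)
      rwa [sub_add_cancel, sub_add_cancel] at h
    have e2 : survG μ y - survG μ z = c * ∫ t in Set.Ioc (y - δ) (z - δ), survG μ t := by
      have h := key (y - δ) (z - δ) (by linarith) (by linarith)
      rwa [sub_add_cancel, sub_add_cancel] at h
    have b1 := intLb (x - δ) (y - δ) hxδ (by linarith)
    have b2 := intUb (y - δ) (z - δ) (by linarith) (by linarith)
    rw [div_le_div_iff₀ (by linarith) (by linarith)]
    have h1 : c * ((y - δ - (x - δ)) * survG μ (y - δ)) ≤
        c * ∫ t in Set.Ioc (x - δ) (y - δ), survG μ t := mul_le_mul_of_nonneg_left b1 hc.le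
    have h2 : c * ∫ t in Set.Ioc (y - δ) (z - δ), survG μ t ≤
        c * ((z - δ - (y - δ)) * survG μ (y - δ)) := mul_le_mul_of_nonneg_left b2 hc.le
    have h1' := mul_le_mul_of_nonneg_right h1 (by linarith : (0:ℝ) ≤ z - y)
    have h2' := mul_le_mul_of_nonneg_right h2 (by linarith : (0:ℝ) ≤ y - x)
    nlinarith [h1', h2', e1, e2]
  have trap : ∀ u : ℝ, δ ≤ u →
      ∫ t in Set.Ioc u (u + δ), survG μ t ≤ δ * (survG μ u + survG μ (u + δ)) / 2 := by
    intro u hu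
    have hu0 : (0:ℝ) ≤ u := le_trans hδ.le hu
    set Gu := survG μ u with hGu
    set Gv := survG μ (u + δ) with hGv
    have hptw : ∀ t ∈ Set.Ioc u (u + δ),
        survG μ t ≤ ((u + δ) * Gu - u * Gv) / δ + t * ((Gv - Gu) / δ) := by
      intro t ht
      have hta : (0:ℝ) ≤ (u + δ - t) / δ := div_nonneg (by linarith [ht.2]) hδ.le
      have htb : (0:ℝ) ≤ (t - u) / δ := div_nonneg (by linarith [ht.1.le]) hδ.le
      have htab : (u + δ - t) / δ + (t - u) / δ = 1 := by field_simp; ring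
      have hcomb := hconv.2 (mem_Ici.2 hu) (mem_Ici.2 (by linarith : δ ≤ u + δ)) hta htb htab
      have harg : ((u + δ - t) / δ) • u + ((t - u) / δ) • (u + δ) = t := by
        simp only [smul_eq_mul]
        field_simp
        ring
      rw [harg] at hcomb
      simp only [smul_eq_mul] at hcomb
      have hδ' : δ ≠ 0 := hδ.ne'
      calc survG μ t ≤ (u + δ - t) / δ * Gu + (t - u) / δ * Gv := hcomb
        _ = ((u + δ) * Gu - u * Gv) / δ + t * ((Gv - Gu) / δ) := by field_simp; ring
    have hmono : ∫ t in Set.Ioc u (u + δ), survG μ t ≤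
        ∫ t in Set.Ioc u (u + δ), (((u + δ) * Gu - u * Gv) / δ + t * ((Gv - Gu) / δ)) := by
      apply setIntegral_mono_on (hIntIoc u (u + δ) hu0) ?_ measurableSet_Ioc hptw
      exact Continuous.integrableOn_Ioc
        (continuous_const.add (continuous_id.mul continuous_const))
    have hcalc : ∫ t in Set.Ioc u (u + δ), (((u + δ) * Gu - u * Gv) / δ + t * ((Gv - Gu) / δ))
        = δ * (Gu + Gv) / 2 := by
      rw [← intervalIntegral.integral_of_le (by linarith : u ≤ u + δ)]
      have hii2 : IntervalIntegrable (fun t : ℝ => t * ((Gv - Gu) / δ)) volume u (u + δ) :=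
        Continuous.intervalIntegrable (by fun_prop) _ _
      rw [intervalIntegral.integral_add intervalIntegrable_const hii2]
      rw [intervalIntegral.integral_const]
      have : ∫ t in u..(u + δ), t * ((Gv - Gu) / δ) = ((u+δ)^2 - u^2)/2 * ((Gv - Gu) / δ) := by
        rw [intervalIntegral.integral_mul_const, integral_id]
      rw [this]
      simp only [smul_eq_mul]
      field_simp
      ring
    linarith [hmono, hcalc.le, hcalc.ge]
  have recUp : ∀ x : ℝ, δ ≤ x → survG μ (x + δ) ≤ (1 - 2 * a) * survG μ x := by
    intro x hx
    have h := key (x - δ) x (by linarith) (by linarith)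
    rw [sub_add_cancel] at h
    have hb := intLb (x - δ) x (by linarith) (by linarith)
    have h2 := mul_le_mul_of_nonneg_left hb hc.le
    have ha' : 2 * a * survG μ x = c * ((x - (x - δ)) * survG μ x) := by rw [ha]; ring
    linarith [h, h2, ha']
  have recLow : ∀ x : ℝ, 2 * δ ≤ x →
      (1 - a) * survG μ x - a * survG μ (x - δ) ≤ survG μ (x + δ) := by
    intro x hx
    have h := key (x - δ) x (by linarith) (by linarith)
    rw [sub_add_cancel] at h
    have ht := trap (x - δ) (by linarith)
    rw [sub_add_cancel] at ht
    have h2 := mul_le_mul_of_nonneg_left ht hc.le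
    have ha' : a * (survG μ (x - δ) + survG μ x) =
        c * (δ * (survG μ (x - δ) + survG μ x) / 2) := by rw [ha]; ring
    linarith [h, h2, ha']
  -- arithmetic facts
  have ha0 : 0 < a := by rw [ha]; positivity
  have s2 : Real.sqrt 2 ^ 2 = 2 := Real.sq_sqrt (by norm_num)
  have s2lb : (5/4 : ℝ) < Real.sqrt 2 := by nlinarith [Real.sqrt_nonneg 2, s2]
  have ha1 : a < 1/2 := by nlinarith [ha2, s2lb]
  have h2a : (0:ℝ) < 1 - 2 * a := by linarith
  have hDpos : 0 < D := by
    have f1 : (0:ℝ) < 3 - a - 2 * Real.sqrt 2 := by linarith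
    have f2 : (0:ℝ) < 3 - a + 2 * Real.sqrt 2 := by nlinarith [s2lb]
    rw [hD]; nlinarith [mul_pos f1 f2, s2]
  have hsqD : Real.sqrt D ^ 2 = D := Real.sq_sqrt hDpos.le
  have hsDlt : Real.sqrt D < 1 - a := by
    have hlt : D < (1 - a) ^ 2 := by rw [hD]; linarith
    have h := Real.sqrt_lt_sqrt hDpos.le hlt
    rwa [Real.sqrt_sq (by linarith : (0:ℝ) ≤ 1 - a)] at h
  have hlam2pos : 0 < lam2 := by rw [hlam2]; linarith
  have hlamsq : lam2 ^ 2 = (1 - a) * lam2 - a := by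
    rw [hlam2]
    linear_combination hsqD / 4 + hD / 4
  -- part 1
  have hIoc1 : (∫ t in Set.Ioc 0 δ, survG μ t) = δ * I₁ := by
    rw [hI₁, ← intervalIntegral.integral_of_le hδ.le]
    field_simp
  have ha' : c * δ = 2 * a := by rw [ha]; ring
  have e0 : survG μ (2 * δ) = survG μ δ - 2 * a * I₁ := by
    have h := key 0 δ le_rfl hδ.le
    rw [zero_add] at h
    rw [show (2:ℝ) * δ = δ + δ by ring]
    linear_combination -h - c * hIoc1 - I₁ * ha'
  -- part 2
  have prim_eq : ∀ t ∈ Set.Icc (0:ℝ) δ,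
      survG μ (t + δ) = survG μ δ - c * ∫ s in (0:ℝ)..t, survG μ s := by
    intro t ht
    have h := key 0 t le_rfl ht.1
    rw [zero_add] at h
    rw [← intervalIntegral.integral_of_le ht.1] at h
    linarith [h]
  have prim_cont : ContinuousOn (fun t : ℝ => ∫ s in (0:ℝ)..t, survG μ s) (Set.Icc 0 δ) := by
    have h := intervalIntegral.continuousOn_primitive (f := survG μ) (a := (0:ℝ)) (b := δ)
      ((integrableOn_Icc_iff_integrableOn_Ioc).2 (hIntIoc 0 δ le_rfl))
    apply h.congr
    intro t ht
    simp only [intervalIntegral.integral_of_le ht.1]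
  have e_mid : (∫ t in Set.Ioc δ (2*δ), survG μ t) = δ * survG μ δ - c * δ^2 * I₂ := by
    have h1 : (∫ t in Set.Ioc δ (2*δ), survG μ t) = ∫ t in (0:ℝ)..δ, survG μ (t + δ) := by
      rw [intervalIntegral.integral_comp_add_right (fun t => survG μ t) δ]
      rw [zero_add, show δ + δ = 2 * δ by ring, intervalIntegral.integral_of_le (by linarith)]
    have h2 : (∫ t in (0:ℝ)..δ, survG μ (t + δ))
        = ∫ t in (0:ℝ)..δ, (survG μ δ - c * ∫ s in (0:ℝ)..t, survG μ s) := by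
      apply intervalIntegral.integral_congr
      intro t ht
      rw [Set.uIcc_of_le hδ.le] at ht
      exact prim_eq t ht
    have hii : IntervalIntegrable (fun t : ℝ => c * ∫ s in (0:ℝ)..t, survG μ s) volume 0 δ := by
      apply ContinuousOn.intervalIntegrable
      rw [Set.uIcc_of_le hδ.le]
      exact (prim_cont.const_smul c)
    have h3 : (∫ t in (0:ℝ)..δ, (survG μ δ - c * ∫ s in (0:ℝ)..t, survG μ s))
        = δ * survG μ δ - c * ∫ t in (0:ℝ)..δ, (∫ s in (0:ℝ)..t, survG μ s) := by
      rw [intervalIntegral.integral_sub intervalIntegrable_const hii]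
      rw [intervalIntegral.integral_const, intervalIntegral.integral_const_mul]
      simp [smul_eq_mul]
    have hI₂' : (∫ t in (0:ℝ)..δ, (∫ s in (0:ℝ)..t, survG μ s)) = δ^2 * I₂ := by
      rw [hI₂]; field_simp
    rw [h1, h2, h3, hI₂']
    ring
  have e1 : survG μ (3 * δ) = (1 - 2*a) * survG μ δ - 2 * a * (I₁ - 2 * a * I₂) := by
    have h := key δ (2*δ) hδ.le (by linarith)
    rw [show δ + δ = 2 * δ by ring, show 2 * δ + δ = 3 * δ by ring] at h
    -- h : G(2δ) - G(3δ) = c * ∫ Ioc δ 2δ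
    rw [e0] at h
    linear_combination -h - c * e_mid + (I₂ * c * δ - 2 * a * I₂ - survG μ δ + 4 * a * I₂) * ha'
  refine ⟨⟨by rw [hseq0, e0], by rw [hseq0]; exact hGpos _⟩, by rw [hseq1, e1], ?_⟩
  -- part 3
  have hglow : ∀ n : ℕ, (1 - a) * survG μ (((n:ℝ) + 3) * δ) - a * survG μ (((n:ℝ) + 2) * δ)
      ≤ survG μ (((n:ℝ) + 4) * δ) := by
    intro n
    have hx : 2 * δ ≤ ((n:ℝ) + 3) * δ := by
      nlinarith [mul_nonneg (by positivity : (0:ℝ) ≤ (n:ℝ) + 1) hδ.le]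
    have h := recLow (((n:ℝ) + 3) * δ) hx
    rw [show ((n:ℝ) + 3) * δ - δ = ((n:ℝ) + 2) * δ by ring,
      show ((n:ℝ) + 3) * δ + δ = ((n:ℝ) + 4) * δ by ring] at h
    exact h
  have hgup : ∀ n : ℕ, survG μ (((n:ℝ) + 4) * δ) ≤ (1 - 2 * a) * survG μ (((n:ℝ) + 3) * δ) := by
    intro n
    have hx : δ ≤ ((n:ℝ) + 3) * δ := by
      nlinarith [mul_nonneg (by positivity : (0:ℝ) ≤ (n:ℝ) + 2) hδ.le]
    have h := recUp (((n:ℝ) + 3) * δ) hx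
    rwa [show ((n:ℝ) + 3) * δ + δ = ((n:ℝ) + 4) * δ by ring] at h
  have chain : ∀ n : ℕ, 0 ≤ survG μ (((n:ℝ) + 2) * δ) - seq n ∧
      lam2 * (survG μ (((n:ℝ) + 2) * δ) - seq n) ≤ survG μ (((n:ℝ) + 3) * δ) - seq (n + 1) := by
    intro n
    induction n with
    | zero =>
      constructor
      · rw [hseq0]; norm_num
      · rw [hseq0, hseq1]; norm_num
    | succ n ih =>
      obtain ⟨h0, h1⟩ := ih
      have hE1 : 0 ≤ survG μ (((n:ℝ) + 3) * δ) - seq (n + 1) :=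
        le_trans (mul_nonneg hlam2pos.le h0) h1
      have hcast1 : ((n + 1 : ℕ) : ℝ) + 2 = (n:ℝ) + 3 := by push_cast; ring
      have hcast2 : ((n + 1 : ℕ) : ℝ) + 3 = (n:ℝ) + 4 := by push_cast; ring
      rw [hcast1, hcast2]
      refine ⟨hE1, ?_⟩
      have step : (1 - a) * (survG μ (((n:ℝ) + 3) * δ) - seq (n + 1))
          - a * (survG μ (((n:ℝ) + 2) * δ) - seq n)
          ≤ survG μ (((n:ℝ) + 4) * δ) - seq (n + 2) := by
        have := hglow n
        have := hrec n
        linarith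
      have hau : a * (survG μ (((n:ℝ) + 2) * δ) - seq n)
          ≤ (a / lam2) * (survG μ (((n:ℝ) + 3) * δ) - seq (n + 1)) := by
        have h := mul_le_mul_of_nonneg_left h1 (by positivity : (0:ℝ) ≤ a / lam2)
        have heq : a / lam2 * (lam2 * (survG μ (((n:ℝ) + 2) * δ) - seq n))
            = a * (survG μ (((n:ℝ) + 2) * δ) - seq n) := by
          field_simp
        linarith [h, heq.ge, heq.le]
      have hlamid : lam2 = (1 - a) - a / lam2 := by
        field_simp
        linear_combination hlamsq
      calc lam2 * (survG μ (((n:ℝ) + 3) * δ) - seq (n + 1))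
          = (1 - a) * (survG μ (((n:ℝ) + 3) * δ) - seq (n + 1))
            - (a / lam2) * (survG μ (((n:ℝ) + 3) * δ) - seq (n + 1)) := by
            field_simp
            linear_combination (survG μ (((n:ℝ) + 3) * δ) - seq (n + 1)) * hlamsq
        _ ≤ (1 - a) * (survG μ (((n:ℝ) + 3) * δ) - seq (n + 1))
            - a * (survG μ (((n:ℝ) + 2) * δ) - seq n) := by linarith [hau]
        _ ≤ survG μ (((n:ℝ) + 4) * δ) - seq (n + 2) := step
  have up : ∀ m : ℕ, survG μ (((m:ℝ) + 3) * δ) ≤ seq 1 * (1 - 2 * a) ^ m := by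
    intro m
    induction m with
    | zero => rw [hseq1]; norm_num
    | succ m ih =>
      have hcast : ((m + 1 : ℕ) : ℝ) + 3 = (m:ℝ) + 4 := by push_cast; ring
      rw [hcast]
      calc survG μ (((m:ℝ) + 4) * δ) ≤ (1 - 2 * a) * survG μ (((m:ℝ) + 3) * δ) := hgup m
        _ ≤ (1 - 2 * a) * (seq 1 * (1 - 2 * a) ^ m) := mul_le_mul_of_nonneg_left ih h2a.le
        _ = seq 1 * (1 - 2 * a) ^ (m + 1) := by ring
  intro n hn
  obtain ⟨m, rfl⟩ : ∃ m, n = m + 1 := ⟨n - 1, by omega⟩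
  constructor
  · linarith [(chain (m + 1)).1]
  · have h := up m
    have hcast : ((m + 1 : ℕ) : ℝ) + 2 = (m:ℝ) + 3 := by push_cast; ring
    rw [hcast, Nat.add_sub_cancel]
    exact h
end

section
/- Fix c > 0 and δ > 0, let F be a continuous cdf with supp(F) = [0,∞) solving P_{c,δ}, and let X be a random variable with distribution F. Then: (a) μ_n := E(X^n) < ∞ for all n ≥ 1, and μ_{n+1} = ((n+1)/c)·((1 − cδ)μ_n − ∫₀^δ t^n dF(t)) − Σ_{k=1}^{n−1} C(n+1,k)·μ_k·δ^{n+1−k} for all n ≥ 1; and (b) E(e^{−uX}) = (∫₀^δ e^{−ut} dF(t) + c·e^{−uδ}/u) / (1 + c·e^{−uδ}/u) for all u > 0. -/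
open MeasureTheory Set
open scoped ENNReal

lemma swapL (ν : Measure ℝ) [SFinite ν] (a : ℝ) (φ : ℝ → ℝ≥0∞) (hφ : Measurable φ) :
    ∫⁻ t in Set.Ioi a, φ t * ν (Set.Ioi t) = ∫⁻ x, ∫⁻ t in Set.Ioo a x, φ t ∂volume ∂ν := by
  have hmeas : Measurable (Function.uncurry fun t x : ℝ => φ t * (Set.Ioi t).indicator (1 : ℝ → ℝ≥0∞) x) := by
    have : (Function.uncurry fun t x : ℝ => φ t * (Set.Ioi t).indicator (1 : ℝ → ℝ≥0∞) x)
        = fun p : ℝ × ℝ => φ p.1 * ({q : ℝ × ℝ | q.1 < q.2}.indicator (1 : ℝ × ℝ → ℝ≥0∞) p) := by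
      ext p
      by_cases h : p.1 < p.2 <;>
        simp [Function.uncurry, Set.indicator, h]
    rw [this]
    exact (hφ.comp measurable_fst).mul
      (measurable_const.indicator (measurableSet_lt measurable_fst measurable_snd))
  calc ∫⁻ t in Set.Ioi a, φ t * ν (Set.Ioi t)
      = ∫⁻ t in Set.Ioi a, ∫⁻ x, φ t * (Set.Ioi t).indicator (1 : ℝ → ℝ≥0∞) x ∂ν := by
        refine setLIntegral_congr_fun measurableSet_Ioi (fun t ht => ?_)
        have : (fun x => φ t * (Set.Ioi t).indicator (1 : ℝ → ℝ≥0∞) x)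
            = (Set.Ioi t).indicator (fun _ => φ t) := by
          ext x
          by_cases h : t < x <;> simp [Set.indicator, h]
        rw [this, lintegral_indicator measurableSet_Ioi, setLIntegral_const]
    _ = ∫⁻ x, ∫⁻ t in Set.Ioi a, φ t * (Set.Ioi t).indicator (1 : ℝ → ℝ≥0∞) x ∂volume ∂ν :=
        lintegral_lintegral_swap hmeas.aemeasurable
    _ = ∫⁻ x, ∫⁻ t in Set.Ioo a x, φ t ∂volume ∂ν := by
        refine lintegral_congr fun x => ?_
        have : (fun t => φ t * (Set.Ioi t).indicator (1 : ℝ → ℝ≥0∞) x)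
            = (Set.Iio x).indicator φ := by
          ext t
          by_cases h : t < x <;> simp [Set.indicator, h]
        rw [this, lintegral_indicator measurableSet_Iio, Measure.restrict_restrict measurableSet_Iio,
          Set.Iio_inter_Ioi]

lemma lint_shift (g : ℝ → ℝ≥0∞) (hg : Measurable g) (d : ℝ) :
    ∫⁻ t in Set.Ioi d, g t = ∫⁻ s in Set.Ioi (0:ℝ), g (s + d) := by
  have h1 : Measure.map (· + d) (volume.restrict (Set.Ioi (0:ℝ))) = volume.restrict (Set.Ioi d) := by
    rw [show Set.Ioi (0:ℝ) = (· + d) ⁻¹' (Set.Ioi d) by ext s; simp,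
      ← Measure.restrict_map (measurable_add_const d) measurableSet_Ioi, map_add_right_eq_self]
  rw [← h1, lintegral_map hg (measurable_add_const d)]

lemma lint_vanish {μ : Measure ℝ} (a : ℝ) (F : ℝ → ℝ≥0∞) (hF : ∀ x ≤ a, F x = 0) :
    ∫⁻ x, F x ∂μ = ∫⁻ x in Set.Ioi a, F x ∂μ := by
  rw [← lintegral_add_compl F (measurableSet_Ioi (a := a))]
  have : ∫⁻ x in (Set.Ioi a)ᶜ, F x ∂μ = 0 := by
    rw [← lintegral_zero (μ := μ.restrict (Set.Ioi a)ᶜ)]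
    refine setLIntegral_congr_fun (measurableSet_Ioi.compl) (fun x hx => ?_)
    exact hF x (by simpa using hx)
  rw [this, add_zero]

lemma lint_Ioo {a b : ℝ} (g : ℝ → ℝ) (hab : a ≤ b) (hg : IntervalIntegrable g volume a b)
    (hg0 : ∀ t ∈ Set.Ioo a b, 0 ≤ g t) :
    ∫⁻ t in Set.Ioo a b, ENNReal.ofReal (g t) = ENNReal.ofReal (∫ t in a..b, g t) := by
  rw [intervalIntegral.integral_of_le hab, integral_Ioc_eq_integral_Ioo,
    ofReal_integral_eq_lintegral_ofReal
      (((intervalIntegrable_iff_integrableOn_Ioc_of_le hab).mp hg).mono_set Set.Ioo_subset_Ioc_self)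
      ((ae_restrict_iff' measurableSet_Ioo).2 (ae_of_all _ hg0))]

lemma inner_pow (p : ℕ) (β a x : ℝ) (hβ : 0 ≤ β) (ha : 0 ≤ a) (hax : a ≤ x) :
    ∫⁻ t in Set.Ioo a x, ENNReal.ofReal (((p:ℝ)+1) * (t+β)^p)
      = ENNReal.ofReal ((x+β)^(p+1) - (a+β)^(p+1)) := by
  rw [lint_Ioo _ hax ((by fun_prop : Continuous fun t : ℝ => ((p:ℝ)+1) * (t+β)^p).intervalIntegrable a x)
      (fun t ht => mul_nonneg (by positivity) (pow_nonneg (by cases ht with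
        | intro h1 h2 => linarith) p))]
  congr 1
  rw [intervalIntegral.integral_const_mul, intervalIntegral.integral_comp_add_right (fun y => y ^ p) β,
    integral_pow]
  have hp : ((p:ℝ)+1) ≠ 0 := by positivity
  field_simp

lemma inner_exp (u β a x : ℝ) (hu : 0 < u) (hβ : 0 ≤ β) (ha : 0 ≤ a) (hax : a ≤ x) :
    ∫⁻ t in Set.Ioo a x, ENNReal.ofReal (u * Real.exp (-u * (t+β)))
      = ENNReal.ofReal (Real.exp (-u * (a+β)) - Real.exp (-u * (x+β))) := by
  rw [lint_Ioo _ hax ((by fun_prop : Continuous fun t : ℝ => u * Real.exp (-u * (t+β))).intervalIntegrable a x)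
      (fun t _ => mul_nonneg hu.le (Real.exp_pos _).le)]
  congr 1
  rw [intervalIntegral.integral_const_mul,
    intervalIntegral.integral_comp_add_right (fun y => Real.exp (-u * y)) β]
  have h2 : ∀ y : ℝ, Real.exp (-u * y) = Real.exp (-u * y) := fun _ => rfl
  rw [show (fun y : ℝ => Real.exp (-u * y)) = fun y : ℝ => Real.exp ((-u) * y) from rfl,
    intervalIntegral.integral_comp_mul_left (fun z => Real.exp z) (show (-u) ≠ 0 by linarith),
    integral_exp]
  have hu' : u ≠ 0 := hu.ne'
  have hE : ∀ E : ℝ, u * E * u⁻¹ = E := fun E => by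
    rw [mul_comm u E, mul_assoc, mul_inv_cancel₀ hu', mul_one]
  field_simp
  ring_nf
  rw [hE, hE]

lemma swap2 (μ : Measure ℝ) [IsFiniteMeasure μ] (a : ℝ) (ψ : ℝ → ℝ≥0∞) (hψ : Measurable ψ) :
    ∫⁻ s in Set.Ioi a, ψ s * (∫⁻ t in Set.Ioi s, μ (Set.Ioi t) ∂volume) ∂volume
      = ∫⁻ x, (∫⁻ s in Set.Ioo a x, ψ s ∂volume) * μ (Set.Ioi x) ∂volume := by
  have hGm : Measurable fun t : ℝ => μ (Set.Ioi t) :=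
    Antitone.measurable fun s t hst => measure_mono (Set.Ioi_subset_Ioi hst)
  have h1 : ∫⁻ s in Set.Ioi a, ψ s * (∫⁻ t in Set.Ioi s, μ (Set.Ioi t) ∂volume) ∂volume
      = ∫⁻ s in Set.Ioi a, ψ s * ((volume.withDensity fun t : ℝ => μ (Set.Ioi t)) (Set.Ioi s)) ∂volume := by
    refine setLIntegral_congr_fun measurableSet_Ioi (fun s _ => ?_)
    rw [withDensity_apply _ measurableSet_Ioi]
  rw [h1, swapL _ a ψ hψ,
    lintegral_withDensity_eq_lintegral_mul volume hGm
      (Monotone.measurable (f := fun x : ℝ => ∫⁻ s in Set.Ioo a x, ψ s ∂volume)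
        (fun x y hxy => lintegral_mono_set (Set.Ioo_subset_Ioo_right hxy)))]
  exact lintegral_congr fun x => (Pi.mul_apply _ _ x).trans (mul_comm _ _)


/-- Moments and Laplace transform of a solution `F ∈ P_{c,δ}`: all moments are finite and
satisfy the stated recurrence, and the Laplace transform has the stated closed form. -/
theorem stmt16 (c δ : ℝ) (hc : 0 < c) (hδ : 0 < δ)
    (μ : Measure ℝ) (hμ : IsProbabilityMeasure μ)
    (hint : Integrable (fun x : ℝ => x) μ)
    (hcont : ∀ x : ℝ, μ {x} = 0) (hsupp : suppF μ = Set.Ici 0)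
    (hsol : ∀ x : ℝ, 0 ≤ x → survG μ (x + δ) = c * ∫ t in Set.Ioi x, survG μ t) :
    (∀ n : ℕ, 1 ≤ n → Integrable (fun x : ℝ => x ^ n) μ) ∧
    (∀ n : ℕ, 1 ≤ n →
      (∫ x, x ^ (n + 1) ∂μ) =
        (((n : ℝ) + 1) / c) *
          ((1 - c * δ) * (∫ x, x ^ n ∂μ) - ∫ t in Set.Icc (0:ℝ) δ, t ^ n ∂μ) -
        ∑ k ∈ Finset.Icc 1 (n - 1),
          ((n + 1).choose k : ℝ) * (∫ x, x ^ k ∂μ) * δ ^ (n + 1 - k)) ∧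
    (∀ u : ℝ, 0 < u →
      (∫ x, Real.exp (-u * x) ∂μ) =
        ((∫ t in Set.Icc (0:ℝ) δ, Real.exp (-u * t) ∂μ) + c * Real.exp (-u * δ) / u) /
          (1 + c * Real.exp (-u * δ) / u)) := by
  have hGm_meas : Measurable (fun t : ℝ => μ (Set.Ioi t)) :=
    Antitone.measurable fun s t hst => measure_mono (Set.Ioi_subset_Ioi hst)
  have hGm_ne_top : ∀ t : ℝ, μ (Set.Ioi t) ≠ ∞ := fun t => measure_ne_top μ _
  -- the measure is concentrated on [0, ∞)
  have μ0 : μ (Set.Iio (0:ℝ)) = 0 := by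
    have hnot : ∀ x : ℝ, x < 0 → ∃ ε > (0:ℝ), μ (Set.Ioo (x - ε) (x + ε)) = 0 := by
      intro x hx
      have hxs : x ∉ suppF μ := by
        rw [hsupp]
        simpa using not_le.mpr hx
      simp only [suppF, Set.mem_setOf_eq, not_forall] at hxs
      obtain ⟨ε, hε, h0⟩ := hxs
      exact ⟨ε, hε, by simpa using (le_of_not_gt h0).antisymm zero_le⟩
    choose! ε hε hε0 using hnot
    set s : ℝ → Set ℝ := fun x => if x < 0 then Set.Ioo (x - ε x) (x + ε x) else ∅ with hs
    have hsopen : ∀ x, IsOpen (s x) := by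
      intro x
      by_cases h : x < 0 <;> simp [hs, h, isOpen_Ioo]
    obtain ⟨T, hTcount, hTeq⟩ := TopologicalSpace.isOpen_iUnion_countable s hsopen
    have hsub : Set.Iio (0:ℝ) ⊆ ⋃ i ∈ T, s i := by
      rw [hTeq]
      intro x hx
      have hx' : x < 0 := hx
      refine Set.mem_iUnion.2 ⟨x, ?_⟩
      simp only [hs, if_pos hx']
      constructor <;> [linarith [hε x hx']; linarith [hε x hx']]
    refine le_antisymm (le_trans (measure_mono hsub) ?_) zero_le
    refine le_of_eq ((measure_biUnion_null_iff hTcount).2 fun x _ => ?_)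
    by_cases h : x < 0
    · simp only [hs, if_pos h]
      exact hε0 x h
    · simp [hs, h]
  have hae : ∀ᵐ x ∂μ, (0:ℝ) ≤ x := by
    rw [ae_iff]
    have : {x : ℝ | ¬ (0:ℝ) ≤ x} = Set.Iio 0 := by ext x; simp
    rw [this, μ0]
  -- the tail mass integral
  have hL_meas : Measurable (fun x : ℝ => ∫⁻ t in Set.Ioi x, μ (Set.Ioi t) ∂volume) :=
    Antitone.measurable fun s t hst => lintegral_mono_set (Set.Ioi_subset_Ioi hst)
  have hL0_fin : (∫⁻ t in Set.Ioi (0:ℝ), μ (Set.Ioi t) ∂volume) ≠ ∞ := by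
    have h1 : ∫⁻ t in Set.Ioi (0:ℝ), μ (Set.Ioi t) ∂volume = ∫⁻ x, ENNReal.ofReal x ∂μ := by
      have := swapL μ 0 (fun _ => 1) measurable_const
      simp only [one_mul] at this
      rw [this]
      refine lintegral_congr fun x => ?_
      rw [setLIntegral_one, Real.volume_Ioo]
      simp
    rw [h1]
    refine ne_top_of_le_ne_top hint.2.ne ?_
    exact lintegral_mono fun x => Real.ofReal_le_enorm x
  have hL_fin : ∀ x : ℝ, 0 ≤ x → (∫⁻ t in Set.Ioi x, μ (Set.Ioi t) ∂volume) ≠ ∞ := fun x hx =>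
    ne_top_of_le_ne_top hL0_fin (lintegral_mono_set (Set.Ioi_subset_Ioi hx))
  -- the functional equation, in ENNReal form
  have hsol' : ∀ x : ℝ, 0 ≤ x → μ (Set.Ioi (x + δ))
      = ENNReal.ofReal c * ∫⁻ t in Set.Ioi x, μ (Set.Ioi t) ∂volume := by
    intro x hx
    have h2 : ∫ t in Set.Ioi x, (μ (Set.Ioi t)).toReal = (∫⁻ t in Set.Ioi x, μ (Set.Ioi t) ∂volume).toReal :=
      integral_toReal hGm_meas.aemeasurable (ae_of_all _ fun t => measure_lt_top μ _)
    have h1 : (μ (Set.Ioi (x + δ))).toReal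
        = c * (∫⁻ t in Set.Ioi x, μ (Set.Ioi t) ∂volume).toReal := by
      have := hsol x hx
      simp only [survG] at this
      rw [this, h2]
    calc μ (Set.Ioi (x + δ)) = ENNReal.ofReal ((μ (Set.Ioi (x + δ))).toReal) :=
          (ENNReal.ofReal_toReal (hGm_ne_top _)).symm
      _ = ENNReal.ofReal (c * (∫⁻ t in Set.Ioi x, μ (Set.Ioi t) ∂volume).toReal) := by rw [h1]
      _ = ENNReal.ofReal c * ENNReal.ofReal ((∫⁻ t in Set.Ioi x, μ (Set.Ioi t) ∂volume).toReal) :=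
          ENNReal.ofReal_mul hc.le
      _ = ENNReal.ofReal c * ∫⁻ t in Set.Ioi x, μ (Set.Ioi t) ∂volume := by
          rw [ENNReal.ofReal_toReal (hL_fin x hx)]
  have hφp : ∀ (q : ℕ) (β : ℝ), Measurable fun t : ℝ => ENNReal.ofReal (((q:ℝ)+1) * (t+β)^q) :=
    fun q β => (((measurable_id.add_const β).pow_const q).const_mul _).ennreal_ofReal
  have hψp : ∀ (q : ℕ) (β : ℝ), Measurable fun t : ℝ => ENNReal.ofReal ((t+β)^q) :=
    fun q β => ((measurable_id.add_const β).pow_const q).ennreal_ofReal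
  -- identity B
  have hB : ∀ p : ℕ, ∫⁻ x, ENNReal.ofReal ((x + δ) ^ (p+1) - δ ^ (p+1)) ∂μ
      = ENNReal.ofReal ((p:ℝ)+1) * ∫⁻ t in Set.Ioi (0:ℝ), ENNReal.ofReal ((t + δ) ^ p) * μ (Set.Ioi t) ∂volume := by
    intro p
    calc ∫⁻ x, ENNReal.ofReal ((x + δ) ^ (p+1) - δ ^ (p+1)) ∂μ
        = ∫⁻ x, ∫⁻ t in Set.Ioo 0 x, ENNReal.ofReal (((p:ℝ)+1) * (t+δ)^p) ∂volume ∂μ := by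
          refine lintegral_congr_ae (hae.mono fun x hx => ?_)
          have := inner_pow p δ 0 x hδ.le le_rfl hx
          rw [zero_add] at this
          exact this.symm
      _ = ∫⁻ t in Set.Ioi (0:ℝ), ENNReal.ofReal (((p:ℝ)+1) * (t+δ)^p) * μ (Set.Ioi t) ∂volume :=
          (swapL μ 0 _ (hφp p δ)).symm
      _ = ∫⁻ t in Set.Ioi (0:ℝ), ENNReal.ofReal ((p:ℝ)+1) * (ENNReal.ofReal ((t + δ) ^ p) * μ (Set.Ioi t)) ∂volume := by
          refine setLIntegral_congr_fun measurableSet_Ioi (fun t ht => ?_)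
          rw [ENNReal.ofReal_mul (by positivity), mul_assoc]
      _ = ENNReal.ofReal ((p:ℝ)+1) * ∫⁻ t in Set.Ioi (0:ℝ), ENNReal.ofReal ((t + δ) ^ p) * μ (Set.Ioi t) ∂volume :=
          lintegral_const_mul _ ((hψp p δ).mul hGm_meas)
  -- identity A
  have hA : ∀ p : ℕ, ∫⁻ y in Set.Ioi δ, ENNReal.ofReal (y ^ (p+1)) ∂μ
      = ENNReal.ofReal c * ∫⁻ t in Set.Ioi (0:ℝ), ENNReal.ofReal ((t + δ) ^ (p+1)) * μ (Set.Ioi t) ∂volume := by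
    intro p
    have hφ : Measurable fun t : ℝ => ENNReal.ofReal (((p:ℝ)+1) * t^p) := by
      have := hφp p 0
      simpa using this
    have step1 : ∫⁻ t in Set.Ioi δ, ENNReal.ofReal (((p:ℝ)+1) * t^p) * μ (Set.Ioi t) ∂volume
        = ∫⁻ y in Set.Ioi δ, ENNReal.ofReal (y ^ (p+1) - δ ^ (p+1)) ∂μ := by
      rw [swapL μ δ _ hφ]
      rw [lint_vanish δ _ (fun x hxa => by
        rw [Set.Ioo_eq_empty (not_lt.2 hxa)]; simp)]
      refine setLIntegral_congr_fun measurableSet_Ioi (fun y hy => ?_)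
      have := inner_pow p 0 δ y le_rfl hδ.le (le_of_lt hy)
      simp only [add_zero] at this
      exact this
    have step2 : ∫⁻ y in Set.Ioi δ, ENNReal.ofReal (y ^ (p+1)) ∂μ
        = ENNReal.ofReal (δ ^ (p+1)) * μ (Set.Ioi δ)
          + ∫⁻ t in Set.Ioi δ, ENNReal.ofReal (((p:ℝ)+1) * t^p) * μ (Set.Ioi t) ∂volume := by
      rw [step1, ← setLIntegral_const (Set.Ioi δ) (ENNReal.ofReal (δ ^ (p+1))),
        ← lintegral_add_left measurable_const]
      refine setLIntegral_congr_fun measurableSet_Ioi (fun y hy => ?_)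
      rw [← ENNReal.ofReal_add (by positivity)
        (sub_nonneg.2 (pow_le_pow_left₀ hδ.le (le_of_lt hy) _))]
      congr 1
      ring
    have step3 : ∫⁻ t in Set.Ioi δ, ENNReal.ofReal (((p:ℝ)+1) * t^p) * μ (Set.Ioi t) ∂volume
        = ENNReal.ofReal c * ∫⁻ x in Set.Ioi (0:ℝ),
            ENNReal.ofReal ((x + δ) ^ (p+1) - δ ^ (p+1)) * μ (Set.Ioi x) ∂volume := by
      have e1 : ∫⁻ t in Set.Ioi δ, ENNReal.ofReal (((p:ℝ)+1) * t^p) * μ (Set.Ioi t) ∂volume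
          = ∫⁻ t in Set.Ioi δ, ENNReal.ofReal c * (ENNReal.ofReal (((p:ℝ)+1) * t^p)
              * ∫⁻ s in Set.Ioi (t - δ), μ (Set.Ioi s) ∂volume) ∂volume := by
        refine setLIntegral_congr_fun measurableSet_Ioi (fun t ht => ?_)
        have h := hsol' (t - δ) (by simp only [Set.mem_Ioi] at ht; linarith)
        rw [sub_add_cancel] at h
        rw [h, mul_left_comm]
      have e2 : ∫⁻ t in Set.Ioi δ, ENNReal.ofReal c * (ENNReal.ofReal (((p:ℝ)+1) * t^p)
              * ∫⁻ s in Set.Ioi (t - δ), μ (Set.Ioi s) ∂volume) ∂volume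
          = ∫⁻ s in Set.Ioi (0:ℝ), ENNReal.ofReal c * (ENNReal.ofReal (((p:ℝ)+1) * (s+δ)^p)
              * ∫⁻ t in Set.Ioi s, μ (Set.Ioi t) ∂volume) ∂volume := by
        rw [lint_shift (fun t => ENNReal.ofReal c * (ENNReal.ofReal (((p:ℝ)+1) * t^p)
            * ∫⁻ s in Set.Ioi (t - δ), μ (Set.Ioi s) ∂volume))
          (measurable_const.mul (hφ.mul (hL_meas.comp (measurable_id.sub_const δ)))) δ]
        refine setLIntegral_congr_fun measurableSet_Ioi (fun s hs => ?_)
        rw [add_sub_cancel_right]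
      have e3 : ∫⁻ s in Set.Ioi (0:ℝ), ENNReal.ofReal (((p:ℝ)+1) * (s+δ)^p)
            * (∫⁻ t in Set.Ioi s, μ (Set.Ioi t) ∂volume) ∂volume
          = ∫⁻ x in Set.Ioi (0:ℝ), ENNReal.ofReal ((x + δ) ^ (p+1) - δ ^ (p+1)) * μ (Set.Ioi x) ∂volume := by
        rw [swap2 μ 0 _ (hφp p δ)]
        rw [lint_vanish 0 _ (fun x hxa => by
          rw [Set.Ioo_eq_empty (not_lt.2 hxa)]; simp)]
        refine setLIntegral_congr_fun measurableSet_Ioi (fun x hx => ?_)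
        have := inner_pow p δ 0 x hδ.le le_rfl (le_of_lt hx)
        rw [zero_add] at this
        rw [this]
      rw [e1, e2, lintegral_const_mul _ ((hφp p δ).fun_mul hL_meas), e3]
    have step4 : ENNReal.ofReal (δ ^ (p+1)) * μ (Set.Ioi δ)
        = ENNReal.ofReal c * ∫⁻ x in Set.Ioi (0:ℝ),
            ENNReal.ofReal (δ ^ (p+1)) * μ (Set.Ioi x) ∂volume := by
      have h := hsol' 0 le_rfl
      rw [zero_add] at h
      rw [h, lintegral_const_mul _ hGm_meas, mul_left_comm]
    rw [step2, step3, step4, ← mul_add, ← lintegral_add_left (measurable_const.fun_mul hGm_meas)]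
    congr 1
    refine setLIntegral_congr_fun measurableSet_Ioi (fun x hx => ?_)
    rw [← add_mul, ← ENNReal.ofReal_add (by positivity)
      (sub_nonneg.2 (pow_le_pow_left₀ hδ.le (by simp only [Set.mem_Ioi] at hx; linarith) _))]
    congr 2
    ring
  -- finiteness of all moments
  have mfin : ∀ p : ℕ, (∫⁻ x, ENNReal.ofReal (x ^ p) ∂μ) ≠ ∞ := by
    intro p
    induction p with
    | zero =>
      simp only [pow_zero, ENNReal.ofReal_one, lintegral_one, measure_univ]
      exact ENNReal.one_ne_top
    | succ p ih =>
      rcases Nat.eq_zero_or_pos p with hp | hp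
      · subst hp
        simp only [zero_add, pow_one]
        refine ne_top_of_le_ne_top hint.2.ne ?_
        exact lintegral_mono fun x => Real.ofReal_le_enorm x
      · obtain ⟨q, rfl⟩ : ∃ q, p = q + 1 := ⟨p - 1, (Nat.succ_pred_eq_of_pos hp).symm⟩
        have hKfin : (∫⁻ t in Set.Ioi (0:ℝ), ENNReal.ofReal ((t + δ) ^ (q+1)) * μ (Set.Ioi t) ∂volume) ≠ ∞ := by
          intro hK
          have h1 := hA q
          rw [hK, ENNReal.mul_top (by simpa using ((ENNReal.ofReal_pos).2 hc).ne')] at h1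
          have h2 : (∫⁻ y in Set.Ioi δ, ENNReal.ofReal (y ^ (q+1)) ∂μ) ≤ ∫⁻ x, ENNReal.ofReal (x ^ (q+1)) ∂μ :=
            setLIntegral_le_lintegral _ _
          rw [h1] at h2
          exact ih (top_le_iff.1 h2)
        have h3 : (∫⁻ x, ENNReal.ofReal ((x + δ) ^ (q+2) - δ ^ (q+2)) ∂μ) ≠ ∞ := by
          rw [hB (q+1)]
          exact ENNReal.mul_ne_top ENNReal.ofReal_ne_top hKfin
        have h4 : (∫⁻ x, ENNReal.ofReal (x ^ (q+2)) ∂μ)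
            ≤ (∫⁻ x, ENNReal.ofReal ((x + δ) ^ (q+2) - δ ^ (q+2)) ∂μ) + ENNReal.ofReal (δ ^ (q+2)) * μ Set.univ := by
          rw [← lintegral_const]
          rw [← lintegral_add_right _ measurable_const]
          refine lintegral_mono_ae (hae.mono fun x hx => ?_)
          rw [← ENNReal.ofReal_add (sub_nonneg.2 (pow_le_pow_left₀ hδ.le (by linarith : δ ≤ x + δ) _)) (by positivity)]
          refine ENNReal.ofReal_le_ofReal ?_
          have : x ^ (q+2) ≤ (x + δ) ^ (q+2) := pow_le_pow_left₀ hx (by linarith) _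
          linarith
        exact ne_top_of_le_ne_top (by
          refine ENNReal.add_ne_top.2 ⟨h3, ENNReal.mul_ne_top ENNReal.ofReal_ne_top (measure_ne_top μ _)⟩) h4
  have hIntPow : ∀ p : ℕ, Integrable (fun x : ℝ => x ^ p) μ := by
    intro p
    refine ⟨(continuous_pow p).aestronglyMeasurable, ?_⟩
    rw [hasFiniteIntegral_def]
    refine lt_of_le_of_lt (le_of_eq (lintegral_congr_ae (hae.mono fun x hx => ?_))) (mfin p).lt_top
    exact Real.enorm_eq_ofReal (by positivity)
  -- real versions
  have conv1 : ∀ p : ℕ, ∫ y in Set.Ioi δ, y ^ (p+1) ∂μ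
      = c * (∫⁻ t in Set.Ioi (0:ℝ), ENNReal.ofReal ((t + δ) ^ (p+1)) * μ (Set.Ioi t) ∂volume).toReal := by
    intro p
    rw [integral_eq_lintegral_of_nonneg_ae
      ((ae_restrict_iff' measurableSet_Ioi).2 (ae_of_all _ fun y hy => le_of_lt (pow_pos (hδ.trans hy) _)))
      (continuous_pow (p+1)).aestronglyMeasurable.restrict, hA p, ENNReal.toReal_mul,
      ENNReal.toReal_ofReal hc.le]
  have conv2 : ∀ p : ℕ, ∫ x, ((x + δ) ^ (p+1) - δ ^ (p+1)) ∂μ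
      = ((p:ℝ)+1) * (∫⁻ t in Set.Ioi (0:ℝ), ENNReal.ofReal ((t + δ) ^ p) * μ (Set.Ioi t) ∂volume).toReal := by
    intro p
    rw [integral_eq_lintegral_of_nonneg_ae
      (hae.mono fun x hx => sub_nonneg.2 (pow_le_pow_left₀ hδ.le (by linarith : δ ≤ x + δ) _))
      (by fun_prop : Continuous fun x : ℝ => (x + δ) ^ (p+1) - δ ^ (p+1)).aestronglyMeasurable,
      hB p, ENNReal.toReal_mul, ENNReal.toReal_ofReal (by positivity)]
  have hsplit : ∀ f : ℝ → ℝ, Integrable f μ →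
      ∫ x, f x ∂μ = (∫ t in Set.Icc (0:ℝ) δ, f t ∂μ) + ∫ t in Set.Ioi δ, f t ∂μ := by
    intro f hf
    have hres : μ.restrict (Set.Ici (0:ℝ)) = μ :=
      Measure.restrict_eq_self_of_ae_mem (hae.mono fun x hx => hx)
    have hun : Set.Icc (0:ℝ) δ ∪ Set.Ioi δ = Set.Ici 0 := by
      ext x
      simp only [Set.mem_union, Set.mem_Icc, Set.mem_Ioi, Set.mem_Ici]
      constructor
      · rintro (⟨h1, _⟩ | h2) <;> [exact h1; linarith]
      · intro h
        rcases le_or_gt x δ with h' | h'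
        · exact Or.inl ⟨h, h'⟩
        · exact Or.inr h'
    conv_lhs => rw [← hres]
    rw [show μ.restrict (Set.Ici (0:ℝ)) = μ.restrict (Set.Icc 0 δ ∪ Set.Ioi δ) by rw [hun]]
    exact setIntegral_union (Set.disjoint_left.2 fun x hx hx' => not_lt.2 hx.2 hx')
      measurableSet_Ioi hf.integrableOn hf.integrableOn
  have hM0 : ∫ x, (x:ℝ) ^ 0 ∂μ = 1 := by simp
  have hbinfun : ∀ p : ℕ, (fun x : ℝ => (x + δ) ^ p)
      = fun x : ℝ => ∑ k ∈ Finset.range (p+1), x ^ k * δ ^ (p - k) * (p.choose k : ℝ) := by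
    intro p
    ext x
    exact add_pow x δ p
  have hIntAdd : ∀ p : ℕ, Integrable (fun x : ℝ => (x + δ) ^ p) μ := by
    intro p
    rw [hbinfun p]
    exact integrable_finset_sum _ fun k _ => ((hIntPow k).mul_const _).mul_const _
  have hbin : ∀ p : ℕ, ∫ x, (x + δ) ^ p ∂μ
      = ∑ k ∈ Finset.range (p+1), (∫ x, x ^ k ∂μ) * δ ^ (p - k) * (p.choose k : ℝ) := by
    intro p
    rw [hbinfun p, integral_finset_sum _ fun k _ => ((hIntPow k).mul_const _).mul_const _]
    exact Finset.sum_congr rfl fun k _ => by rw [integral_mul_const, integral_mul_const]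
  refine ⟨fun n _ => hIntPow n, fun n hn => ?_, fun u hu => ?_⟩
  · -- part (a)
    obtain ⟨m, rfl⟩ : ∃ m, n = m + 1 := ⟨n - 1, (Nat.succ_pred_eq_of_pos hn).symm⟩
    simp only [show m + 1 + 1 = m + 2 from rfl, Nat.add_sub_cancel]
    have E1 : ∫ x, x ^ (m+1) ∂μ = (∫ t in Set.Icc (0:ℝ) δ, t ^ (m+1) ∂μ)
        + c * (∫⁻ t in Set.Ioi (0:ℝ), ENNReal.ofReal ((t + δ) ^ (m+1)) * μ (Set.Ioi t) ∂volume).toReal := by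
      rw [hsplit _ (hIntPow (m+1)), conv1 m]
    have E2 : ∑ k ∈ Finset.range (m+3), (∫ x, x ^ k ∂μ) * δ ^ (m + 2 - k) * ((m+2).choose k : ℝ)
          - δ ^ (m+2)
        = ((m:ℝ)+2) * (∫⁻ t in Set.Ioi (0:ℝ), ENNReal.ofReal ((t + δ) ^ (m+1)) * μ (Set.Ioi t) ∂volume).toReal := by
      have h := conv2 (m+1)
      rw [integral_sub (hIntAdd (m+2)) (integrable_const _), integral_const, probReal_univ,
        one_smul, hbin (m+2)] at h
      rw [h]
      push_cast
      ring
    have hsum : ∀ g : ℕ → ℝ, ∑ k ∈ Finset.range (m+3), g k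
        = g 0 + ((∑ k ∈ Finset.Icc 1 m, g k) + (g (m+1) + g (m+2))) := by
      intro g
      rw [Finset.range_eq_Ico, show m + 3 = (m+2)+1 from rfl, Finset.Ico_add_one_right_eq_Icc,
        show Finset.Icc 0 (m+2) = insert 0 (Finset.Icc 1 (m+2)) from by ext k; simp; omega,
        Finset.sum_insert (by simp),
        Finset.sum_Icc_succ_top (by omega : 1 ≤ m+2),
        Finset.sum_Icc_succ_top (by omega : 1 ≤ m+1)]
      ring
    rw [hsum] at E2
    have hc1 : ((m+2).choose 0 : ℝ) = 1 := by simp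
    have hc2 : ((m+2).choose (m+1) : ℝ) = (m:ℝ) + 2 := by
      rw [show m + 2 = (m+1) + 1 from rfl, Nat.choose_succ_self_right]
      push_cast
      ring
    have hc3 : ((m+2).choose (m+2) : ℝ) = 1 := by simp
    have he1 : m + 2 - 0 = m + 2 := by omega
    have he2 : m + 2 - (m+1) = 1 := by omega
    have he3 : m + 2 - (m+2) = 0 := by omega
    rw [hc1, hc2, hc3, he1, he2, he3, hM0, pow_zero, pow_one, one_mul, mul_one, mul_one] at E2
    rw [show (∑ k ∈ Finset.Icc 1 m, ((m+2).choose k : ℝ) * (∫ x, x ^ k ∂μ) * δ ^ (m + 2 - k))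
        = ∑ k ∈ Finset.Icc 1 m, (∫ x, x ^ k ∂μ) * δ ^ (m + 2 - k) * ((m+2).choose k : ℝ) from
      Finset.sum_congr rfl fun k _ => by ring]
    push_cast
    push_cast at E1 E2
    have hcr : c ≠ 0 := hc.ne'
    field_simp
    linear_combination c * E2 - ((m:ℝ)+2) * E1
  · -- part (b)
    have hexpCont : Continuous fun x : ℝ => Real.exp (-u * x) := by fun_prop
    have hIntExp : Integrable (fun x : ℝ => Real.exp (-u * x)) μ := by
      refine Integrable.mono' (integrable_const 1) hexpCont.aestronglyMeasurable
        (hae.mono fun x hx => ?_)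
      rw [Real.norm_eq_abs, abs_of_pos (Real.exp_pos _)]
      exact Real.exp_le_one_iff.2 (by nlinarith)
    have hφe : Measurable fun t : ℝ => ENNReal.ofReal (u * Real.exp (-u * t)) :=
      (by fun_prop : Continuous fun t : ℝ => u * Real.exp (-u * t)).measurable.ennreal_ofReal
    have hφe' : Measurable fun t : ℝ => ENNReal.ofReal (Real.exp (-u * t)) :=
      (by fun_prop : Continuous fun t : ℝ => Real.exp (-u * t)).measurable.ennreal_ofReal
    have hφeδ : Measurable fun t : ℝ => ENNReal.ofReal (u * Real.exp (-u * (t + δ))) :=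
      (by fun_prop : Continuous fun t : ℝ => u * Real.exp (-u * (t + δ))).measurable.ennreal_ofReal
    -- b2 : the Laplace-type transform of the survival function
    have hb2' : ∫⁻ x, ENNReal.ofReal (1 - Real.exp (-u * x)) ∂μ
        = ENNReal.ofReal u * ∫⁻ t in Set.Ioi (0:ℝ), ENNReal.ofReal (Real.exp (-u * t)) * μ (Set.Ioi t) ∂volume := by
      calc ∫⁻ x, ENNReal.ofReal (1 - Real.exp (-u * x)) ∂μ
          = ∫⁻ x, ∫⁻ t in Set.Ioo 0 x, ENNReal.ofReal (u * Real.exp (-u * t)) ∂volume ∂μ := by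
            refine lintegral_congr_ae (hae.mono fun x hx => ?_)
            have := inner_exp u 0 0 x hu le_rfl le_rfl hx
            simp only [add_zero, mul_zero, Real.exp_zero] at this
            exact this.symm
        _ = ∫⁻ t in Set.Ioi (0:ℝ), ENNReal.ofReal (u * Real.exp (-u * t)) * μ (Set.Ioi t) ∂volume :=
            (swapL μ 0 _ hφe).symm
        _ = ENNReal.ofReal u * ∫⁻ t in Set.Ioi (0:ℝ), ENNReal.ofReal (Real.exp (-u * t)) * μ (Set.Ioi t) ∂volume := by
            rw [← lintegral_const_mul _ (hφe'.fun_mul hGm_meas)]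
            refine setLIntegral_congr_fun measurableSet_Ioi (fun t ht => ?_)
            rw [ENNReal.ofReal_mul hu.le, mul_assoc]
    have hStil_fin : (∫⁻ t in Set.Ioi (0:ℝ), ENNReal.ofReal (Real.exp (-u * t)) * μ (Set.Ioi t) ∂volume) ≠ ∞ := by
      refine ne_top_of_le_ne_top hL0_fin (lintegral_mono_ae
        ((ae_restrict_mem measurableSet_Ioi).mono fun t ht => ?_))
      exact mul_le_of_le_one_left zero_le (ENNReal.ofReal_le_one.2
        (Real.exp_le_one_iff.2 (by simp only [Set.mem_Ioi] at ht; nlinarith)))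
    have hb2 : 1 - ∫ x, Real.exp (-u * x) ∂μ
        = u * (∫⁻ t in Set.Ioi (0:ℝ), ENNReal.ofReal (Real.exp (-u * t)) * μ (Set.Ioi t) ∂volume).toReal := by
      have h1 : ∫ x, (1 - Real.exp (-u * x)) ∂μ
          = (∫⁻ x, ENNReal.ofReal (1 - Real.exp (-u * x)) ∂μ).toReal :=
        integral_eq_lintegral_of_nonneg_ae
          (hae.mono fun x hx => sub_nonneg.2 (Real.exp_le_one_iff.2 (by nlinarith)))
          (continuous_const.sub hexpCont).aestronglyMeasurable
      have h2 : ∫ x, (1 - Real.exp (-u * x)) ∂μ = 1 - ∫ x, Real.exp (-u * x) ∂μ := by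
        rw [integral_sub (integrable_const 1) hIntExp, integral_const, probReal_univ,
          one_smul]
      rw [← h2, h1, hb2', ENNReal.toReal_mul, ENNReal.toReal_ofReal hu.le]
    -- the tail identity
    have hS2fin : (∫⁻ t in Set.Ioi δ, ENNReal.ofReal (u * Real.exp (-u * t)) * μ (Set.Ioi t) ∂volume) ≠ ∞ := by
      have hle : (∫⁻ t in Set.Ioi δ, ENNReal.ofReal (u * Real.exp (-u * t)) * μ (Set.Ioi t) ∂volume)
          ≤ ENNReal.ofReal u * ∫⁻ t in Set.Ioi δ, μ (Set.Ioi t) ∂volume := by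
        rw [← lintegral_const_mul _ hGm_meas]
        refine lintegral_mono_ae ((ae_restrict_mem measurableSet_Ioi).mono fun t ht => ?_)
        refine mul_le_mul_left (ENNReal.ofReal_le_ofReal ?_) _
        refine mul_le_of_le_one_right hu.le (Real.exp_le_one_iff.2 ?_)
        simp only [Set.mem_Ioi] at ht
        nlinarith
      exact ne_top_of_le_ne_top (ENNReal.mul_ne_top ENNReal.ofReal_ne_top
        (ne_top_of_le_ne_top hL0_fin (lintegral_mono_set (Set.Ioi_subset_Ioi hδ.le)))) hle
    have hS2a : ∫⁻ t in Set.Ioi δ, ENNReal.ofReal (u * Real.exp (-u * t)) * μ (Set.Ioi t) ∂volume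
        = ∫⁻ y in Set.Ioi δ, ENNReal.ofReal (Real.exp (-u * δ) - Real.exp (-u * y)) ∂μ := by
      rw [swapL μ δ _ hφe, lint_vanish δ _ (fun x hxa => by
        rw [Set.Ioo_eq_empty (not_lt.2 hxa)]; simp)]
      refine setLIntegral_congr_fun measurableSet_Ioi (fun y hy => ?_)
      have := inner_exp u 0 δ y hu le_rfl hδ.le (le_of_lt hy)
      simp only [add_zero] at this
      exact this
    have h1 : (∫⁻ y in Set.Ioi δ, ENNReal.ofReal (Real.exp (-u * y)) ∂μ)
          + (∫⁻ t in Set.Ioi δ, ENNReal.ofReal (u * Real.exp (-u * t)) * μ (Set.Ioi t) ∂volume)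
        = ENNReal.ofReal (Real.exp (-u * δ)) * μ (Set.Ioi δ) := by
      rw [hS2a, ← lintegral_add_left hφe', ← setLIntegral_const (Set.Ioi δ) (ENNReal.ofReal (Real.exp (-u * δ)))]
      refine setLIntegral_congr_fun measurableSet_Ioi (fun y hy => ?_)
      rw [← ENNReal.ofReal_add (Real.exp_pos _).le
        (sub_nonneg.2 (Real.exp_le_exp.2 (by simp only [Set.mem_Ioi] at hy; nlinarith)))]
      congr 1
      ring
    have h2 : ∫⁻ t in Set.Ioi δ, ENNReal.ofReal (u * Real.exp (-u * t)) * μ (Set.Ioi t) ∂volume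
        = ENNReal.ofReal c * ∫⁻ x in Set.Ioi (0:ℝ),
            ENNReal.ofReal (Real.exp (-u * δ) - Real.exp (-u * (x + δ))) * μ (Set.Ioi x) ∂volume := by
      have e1 : ∫⁻ t in Set.Ioi δ, ENNReal.ofReal (u * Real.exp (-u * t)) * μ (Set.Ioi t) ∂volume
          = ∫⁻ t in Set.Ioi δ, ENNReal.ofReal c * (ENNReal.ofReal (u * Real.exp (-u * t))
              * ∫⁻ s in Set.Ioi (t - δ), μ (Set.Ioi s) ∂volume) ∂volume := by
        refine setLIntegral_congr_fun measurableSet_Ioi (fun t ht => ?_)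
        have h := hsol' (t - δ) (by simp only [Set.mem_Ioi] at ht; linarith)
        rw [sub_add_cancel] at h
        rw [h, mul_left_comm]
      have e2 : ∫⁻ t in Set.Ioi δ, ENNReal.ofReal c * (ENNReal.ofReal (u * Real.exp (-u * t))
              * ∫⁻ s in Set.Ioi (t - δ), μ (Set.Ioi s) ∂volume) ∂volume
          = ∫⁻ s in Set.Ioi (0:ℝ), ENNReal.ofReal c * (ENNReal.ofReal (u * Real.exp (-u * (s + δ)))
              * ∫⁻ t in Set.Ioi s, μ (Set.Ioi t) ∂volume) ∂volume := by
        rw [lint_shift (fun t => ENNReal.ofReal c * (ENNReal.ofReal (u * Real.exp (-u * t))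
            * ∫⁻ s in Set.Ioi (t - δ), μ (Set.Ioi s) ∂volume))
          (measurable_const.mul (hφe.mul (hL_meas.comp (measurable_id.sub_const δ)))) δ]
        refine setLIntegral_congr_fun measurableSet_Ioi (fun s hs => ?_)
        rw [add_sub_cancel_right]
      have e3 : ∫⁻ s in Set.Ioi (0:ℝ), ENNReal.ofReal (u * Real.exp (-u * (s + δ)))
            * (∫⁻ t in Set.Ioi s, μ (Set.Ioi t) ∂volume) ∂volume
          = ∫⁻ x in Set.Ioi (0:ℝ),
              ENNReal.ofReal (Real.exp (-u * δ) - Real.exp (-u * (x + δ))) * μ (Set.Ioi x) ∂volume := by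
        rw [swap2 μ 0 _ hφeδ]
        rw [lint_vanish 0 _ (fun x hxa => by
          rw [Set.Ioo_eq_empty (not_lt.2 hxa)]; simp)]
        refine setLIntegral_congr_fun measurableSet_Ioi (fun x hx => ?_)
        have := inner_exp u δ 0 x hu hδ.le le_rfl (le_of_lt hx)
        rw [zero_add] at this
        rw [this]
      rw [e1, e2, lintegral_const_mul _ (hφeδ.fun_mul hL_meas), e3]
    have h3 : ENNReal.ofReal (Real.exp (-u * δ)) * μ (Set.Ioi δ)
        = ENNReal.ofReal c * ∫⁻ x in Set.Ioi (0:ℝ),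
            ENNReal.ofReal (Real.exp (-u * δ)) * μ (Set.Ioi x) ∂volume := by
      have h := hsol' 0 le_rfl
      rw [zero_add] at h
      rw [h, lintegral_const_mul _ hGm_meas, mul_left_comm]
    have h5 : ∫⁻ x in Set.Ioi (0:ℝ), ENNReal.ofReal (Real.exp (-u * (x + δ))) * μ (Set.Ioi x) ∂volume
        = ENNReal.ofReal (Real.exp (-u * δ))
            * ∫⁻ t in Set.Ioi (0:ℝ), ENNReal.ofReal (Real.exp (-u * t)) * μ (Set.Ioi t) ∂volume := by
      rw [← lintegral_const_mul _ (hφe'.fun_mul hGm_meas)]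
      refine setLIntegral_congr_fun measurableSet_Ioi (fun x hx => ?_)
      rw [show Real.exp (-u * (x + δ)) = Real.exp (-u * δ) * Real.exp (-u * x) by
        rw [← Real.exp_add]; congr 1; ring]
      rw [ENNReal.ofReal_mul (Real.exp_pos _).le, mul_assoc]
    have h4 : ∫⁻ x in Set.Ioi (0:ℝ), ENNReal.ofReal (Real.exp (-u * δ)) * μ (Set.Ioi x) ∂volume
        = (∫⁻ x in Set.Ioi (0:ℝ),
              ENNReal.ofReal (Real.exp (-u * δ) - Real.exp (-u * (x + δ))) * μ (Set.Ioi x) ∂volume)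
          + ∫⁻ x in Set.Ioi (0:ℝ), ENNReal.ofReal (Real.exp (-u * (x + δ))) * μ (Set.Ioi x) ∂volume := by
      rw [← lintegral_add_left (((by fun_prop : Continuous fun x : ℝ =>
        Real.exp (-u * δ) - Real.exp (-u * (x + δ))).measurable.ennreal_ofReal).fun_mul hGm_meas)]
      refine setLIntegral_congr_fun measurableSet_Ioi (fun x hx => ?_)
      rw [← add_mul, ← ENNReal.ofReal_add
        (sub_nonneg.2 (Real.exp_le_exp.2 (by simp only [Set.mem_Ioi] at hx; nlinarith)))
        (Real.exp_pos _).le]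
      congr 2
      ring
    have hfinal : ∫⁻ y in Set.Ioi δ, ENNReal.ofReal (Real.exp (-u * y)) ∂μ
        = ENNReal.ofReal c * (ENNReal.ofReal (Real.exp (-u * δ))
            * ∫⁻ t in Set.Ioi (0:ℝ), ENNReal.ofReal (Real.exp (-u * t)) * μ (Set.Ioi t) ∂volume) := by
      have heq : (∫⁻ t in Set.Ioi δ, ENNReal.ofReal (u * Real.exp (-u * t)) * μ (Set.Ioi t) ∂volume)
            + (∫⁻ y in Set.Ioi δ, ENNReal.ofReal (Real.exp (-u * y)) ∂μ)
          = (∫⁻ t in Set.Ioi δ, ENNReal.ofReal (u * Real.exp (-u * t)) * μ (Set.Ioi t) ∂volume)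
            + ENNReal.ofReal c * (ENNReal.ofReal (Real.exp (-u * δ))
              * ∫⁻ t in Set.Ioi (0:ℝ), ENNReal.ofReal (Real.exp (-u * t)) * μ (Set.Ioi t) ∂volume) := by
        rw [add_comm (∫⁻ t in Set.Ioi δ, ENNReal.ofReal (u * Real.exp (-u * t)) * μ (Set.Ioi t) ∂volume)
          (∫⁻ y in Set.Ioi δ, ENNReal.ofReal (Real.exp (-u * y)) ∂μ), h1, h3, h4, h5, mul_add, h2]
      exact (ENNReal.add_right_inj hS2fin).1 heq
    have e1 : ∫ y in Set.Ioi δ, Real.exp (-u * y) ∂μ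
        = c * (Real.exp (-u * δ)
            * (∫⁻ t in Set.Ioi (0:ℝ), ENNReal.ofReal (Real.exp (-u * t)) * μ (Set.Ioi t) ∂volume).toReal) := by
      rw [integral_eq_lintegral_of_nonneg_ae
        ((ae_restrict_iff' measurableSet_Ioi).2 (ae_of_all _ fun y _ => (Real.exp_pos _).le))
        hexpCont.aestronglyMeasurable.restrict, hfinal, ENNReal.toReal_mul, ENNReal.toReal_mul,
        ENNReal.toReal_ofReal hc.le, ENNReal.toReal_ofReal (Real.exp_pos _).le]
    have hLJ : ∫ x, Real.exp (-u * x) ∂μ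
        = (∫ t in Set.Icc (0:ℝ) δ, Real.exp (-u * t) ∂μ)
          + c * (Real.exp (-u * δ)
            * (∫⁻ t in Set.Ioi (0:ℝ), ENNReal.ofReal (Real.exp (-u * t)) * μ (Set.Ioi t) ∂volume).toReal) := by
      rw [hsplit _ hIntExp, e1]
    simp only [neg_mul] at hLJ hb2 ⊢
    have hden : 1 + c * Real.exp (-(u * δ)) / u ≠ 0 := by positivity
    rw [eq_div_iff hden]
    field_simp
    linear_combination u * hLJ - (c * Real.exp (-(u * δ))) * hb2
end
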